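/- arXiv:2208.05137 — 4 statements merged into one kernel-verified Lean document; each statement's English description precedes it below -/
import Mathlib

section
/- For every ν ≥ 1 and n ≥ 0, Σ_{τ=0}^∞ (-1)^τ p(n − (ν+τ)(ν+τ−1)/2) = N_ν(n), where the sum is finite since p vanishes at negative arguments. -/
/-- The height of the `ν`-Durfee rectangle of the partition with parts `s`:
the largest `h` such that the diagram contains an `h × (h + ν)` rectangle,
i.e. at least `h` parts are `≥ h + ν`. -/
def durfee (ν : ℕ) (s : Multiset ℕ) : ℕ :=
  Nat.findGreatest (fun h => h ≤ (s.filter (fun i => h + ν ≤ i)).card) (Multiset.card s)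

/-- `Nnu ν n` counts the partitions of `n` such that every positive integer
less than `ν` occurs as a part, and all parts lying below the `ν`-Durfee rectangle
of the Young diagram are strictly less than the width `durfee ν + ν` of that
rectangle (equivalently, at most `durfee ν` parts are `≥ durfee ν + ν`). -/
noncomputable def Nnu (ν n : ℕ) : ℕ :=
  Nat.card {π : Nat.Partition n //
    (∀ j, 1 ≤ j → j < ν → j ∈ π.parts) ∧
    (π.parts.filter (fun i => durfee ν π.parts + ν ≤ i)).card ≤ durfee ν π.parts}

/-- The partition function `p`, extended by `0` to negative integers. -/
noncomputable def p (x : ℤ) : ℤ :=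
  if 0 ≤ x then (Fintype.card (Nat.Partition x.toNat) : ℤ) else 0


namespace Stmt9

open Multiset

/-! ### durfee interface -/

lemma filter_card_anti {s : Multiset ℕ} {x y : ℕ} (h : x ≤ y) :
    (s.filter (fun i => y ≤ i)).card ≤ (s.filter (fun i => x ≤ i)).card := by
  refine Multiset.card_le_card (Multiset.monotone_filter_right s ?_)
  intro b hb; omega

lemma filter_card_le {p : ℕ → Prop} [DecidablePred p] (s : Multiset ℕ) :
    (s.filter p).card ≤ s.card :=
  Multiset.card_le_card (Multiset.filter_le _ _)

lemma durfee_spec {ν : ℕ} {s : Multiset ℕ} (hd : durfee ν s ≠ 0) :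
    durfee ν s ≤ (s.filter (fun i => durfee ν s + ν ≤ i)).card := by
  have h := (Nat.findGreatest_eq_iff (m := durfee ν s)
    (P := fun h => h ≤ (s.filter (fun i => h + ν ≤ i)).card)
    (k := Multiset.card s)).mp rfl
  exact h.2.1 hd

lemma durfee_succ_le {ν : ℕ} {s : Multiset ℕ} (h : durfee ν s + 1 ≤ Multiset.card s) :
    (s.filter (fun i => durfee ν s + ν + 1 ≤ i)).card ≤ durfee ν s := by
  have h2 := Nat.findGreatest_is_greatest (P := fun h => h ≤ (s.filter (fun i => h + ν ≤ i)).card)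
    (k := durfee ν s + 1) (n := Multiset.card s) (by exact Nat.lt_succ_self _) h
  simp only [not_le] at h2
  have : s.filter (fun i => durfee ν s + ν + 1 ≤ i) = s.filter (fun i => durfee ν s + 1 + ν ≤ i) := by
    apply Multiset.filter_congr; intro x _; omega
  rw [this]; omega

lemma durfee_eq_of {ν h : ℕ} {s : Multiset ℕ} (hcard : h ≤ Multiset.card s)
    (h1 : h ≤ (s.filter (fun i => h + ν ≤ i)).card)
    (h2 : (s.filter (fun i => h + ν + 1 ≤ i)).card ≤ h) :
    durfee ν s = h := by
  rw [durfee, Nat.findGreatest_eq_iff]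
  refine ⟨hcard, fun _ => h1, ?_⟩
  intro m hm hmc hP
  have : (s.filter (fun i => m + ν ≤ i)).card ≤ (s.filter (fun i => h + ν + 1 ≤ i)).card :=
    filter_card_anti (by omega)
  omega

/-! ### count lemmas for shifted maps -/

lemma count_map_add_one (s : Multiset ℕ) (a : ℕ) :
    Multiset.count a (s.map (· + 1)) = if a = 0 then 0 else Multiset.count (a - 1) s := by
  rcases a with _ | b
  · rw [if_pos rfl, Multiset.count_eq_zero]
    intro h
    obtain ⟨x, _, hx⟩ := Multiset.mem_map.mp h
    omega
  · rw [if_neg (by omega)]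
    have h2 : b + 1 - 1 = b := by omega
    rw [h2]
    exact Multiset.count_map_eq_count' (fun x => x + 1) s (fun x y h => by simpa using h) b

lemma count_map_sub_one {s : Multiset ℕ} (hs : ∀ b ∈ s, 1 ≤ b) (a : ℕ) :
    Multiset.count a (s.map (· - 1)) = Multiset.count (a + 1) s := by
  induction s using Multiset.induction_on with
  | empty => simp
  | cons b t ih =>
    have hb : 1 ≤ b := hs b (Multiset.mem_cons_self _ _)
    have ht : ∀ x ∈ t, 1 ≤ x := fun x hx => hs x (Multiset.mem_cons_of_mem hx)
    simp only [Multiset.map_cons, Multiset.count_cons, ih ht]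
    congr 1
    split_ifs <;> omega

lemma sum_map_sub_one {s : Multiset ℕ} (hs : ∀ b ∈ s, 1 ≤ b) :
    (s.map (· - 1)).sum + Multiset.card s = s.sum := by
  induction s using Multiset.induction_on with
  | empty => simp
  | cons b t ih =>
    have hb : 1 ≤ b := hs b (Multiset.mem_cons_self _ _)
    have ht : ∀ x ∈ t, 1 ≤ x := fun x hx => hs x (Multiset.mem_cons_of_mem hx)
    simp only [Multiset.map_cons, Multiset.sum_cons, Multiset.card_cons]
    have := ih ht
    omega

lemma sum_map_add_one (s : Multiset ℕ) :
    (s.map (· + 1)).sum = s.sum + Multiset.card s := by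
  induction s using Multiset.induction_on with
  | empty => simp
  | cons b t ih => simp only [Multiset.map_cons, Multiset.sum_cons, Multiset.card_cons, ih]; omega

end Stmt9

namespace Stmt9

/-! ### staircase -/

def stair (m : ℕ) : Multiset ℕ := (Multiset.range m).filter (fun j => 1 ≤ j)

lemma mem_stair {m j : ℕ} : j ∈ stair m ↔ 1 ≤ j ∧ j < m := by
  simp [stair, Multiset.mem_filter, Multiset.mem_range, and_comm]

lemma stair_nodup (m : ℕ) : (stair m).Nodup :=
  (Multiset.nodup_range m).filter _

lemma stair_sum (m : ℕ) : (stair m).sum = m * (m - 1) / 2 := by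
  have h1 : (Multiset.range m) = stair m + (Multiset.range m).filter (fun j => ¬ 1 ≤ j) :=
    (Multiset.filter_add_not _ _).symm
  have h2 : ((Multiset.range m).filter (fun j => ¬ 1 ≤ j)).sum = 0 := by
    apply Multiset.sum_eq_zero
    intro x hx
    have := Multiset.mem_filter.mp hx
    omega
  have h3 : (Multiset.range m).sum = (stair m).sum := by
    rw [h1, Multiset.sum_add, h2, add_zero]
  rw [← h3]
  have h4 : (Multiset.range m).sum = ∑ i ∈ Finset.range m, i := by
    show _ = ((Finset.range m).val.map (fun i => i)).sum
    rw [Multiset.map_id']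
    rfl
  rw [h4, Finset.sum_range_id]

lemma stair_le {m : ℕ} {t : Multiset ℕ} (h : ∀ j, 1 ≤ j → j < m → j ∈ t) :
    stair m ≤ t := by
  rw [Multiset.le_iff_subset (stair_nodup m)]
  intro j hj
  obtain ⟨h1, h2⟩ := mem_stair.mp hj
  exact h j h1 h2

/-! ### counting partitions containing the staircase -/

lemma cardA_of_le {m n : ℕ} (h : m * (m - 1) / 2 ≤ n) :
    Nat.card {π : Nat.Partition n // ∀ j, 1 ≤ j → j < m → j ∈ π.parts} =
      Fintype.card (Nat.Partition (n - m * (m - 1) / 2)) := by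
  rw [← Nat.card_eq_fintype_card]
  apply Nat.card_congr
  refine ⟨fun π => ⟨π.1.parts - stair m, ?_, ?_⟩, fun κ => ⟨⟨κ.parts + stair m, ?_, ?_⟩, ?_⟩, ?_, ?_⟩
  · intro i hi
    exact π.1.parts_pos (Multiset.mem_of_le tsub_le_self hi)
  · have hle : stair m ≤ π.1.parts := stair_le π.2
    have : (π.1.parts - stair m) + stair m = π.1.parts := tsub_add_cancel_of_le hle
    have hsum := congrArg Multiset.sum this
    rw [Multiset.sum_add, stair_sum, π.1.parts_sum] at hsum
    omega
  · intro i hi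
    rcases Multiset.mem_add.mp hi with h' | h'
    · exact κ.parts_pos h'
    · exact (mem_stair.mp h').1
  · rw [Multiset.sum_add, stair_sum, κ.parts_sum]
    omega
  · intro j h1 h2
    exact Multiset.mem_add.mpr (Or.inr (mem_stair.mpr ⟨h1, h2⟩))
  · intro π
    apply Subtype.ext
    apply Nat.Partition.ext
    simp only
    exact tsub_add_cancel_of_le (stair_le π.2)
  · intro κ
    apply Nat.Partition.ext
    simp only
    exact add_tsub_cancel_right ..

lemma cardA_of_gt {m n : ℕ} (h : n < m * (m - 1) / 2) :
    Nat.card {π : Nat.Partition n // ∀ j, 1 ≤ j → j < m → j ∈ π.parts} = 0 := by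
  rw [Nat.card_eq_zero]
  left
  rw [isEmpty_subtype]
  intro π hπ
  have hle : stair m ≤ π.parts := stair_le hπ
  obtain ⟨u, hu⟩ := Multiset.le_iff_exists_add.mp hle
  have := congrArg Multiset.sum hu
  rw [Multiset.sum_add, stair_sum, π.parts_sum] at this
  omega

end Stmt9

namespace Stmt9

open Multiset

/-! ### the two multiset operations -/

def phiC (ν d : ℕ) (s : Multiset ℕ) : Multiset ℕ :=
  (s.filter (fun i => d + ν + 1 ≤ i)).map (· + 1)
  + Multiset.replicate (d - (s.filter (fun i => d + ν + 1 ≤ i)).card) (d + ν + 1)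
  + Multiset.replicate (s.count (d + ν) - 1 - (d - (s.filter (fun i => d + ν + 1 ≤ i)).card)) (d + ν)
  + s.filter (fun i => i < d + ν)
  + {ν}

def psiC (ν d : ℕ) (s : Multiset ℕ) : Multiset ℕ :=
  (s.filter (fun i => d + ν + 1 + 1 ≤ i)).map (· - 1)
  + Multiset.replicate (s.count (d + ν + 1)) (d + ν)
  + {d + ν}
  + (s.filter (fun i => i < d + ν + 1)).erase ν

/-! ### counting lemmas -/

lemma countPhiC (ν d : ℕ) (s : Multiset ℕ) (a : ℕ) :
    Multiset.count a (phiC ν d s) =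
      (if d + ν + 2 ≤ a then Multiset.count (a - 1) s else 0)
      + (if a = d + ν + 1 then d - (s.filter (fun i => d + ν + 1 ≤ i)).card else 0)
      + (if a = d + ν then s.count (d + ν) - 1 - (d - (s.filter (fun i => d + ν + 1 ≤ i)).card) else 0)
      + (if a < d + ν then Multiset.count a s else 0)
      + (if a = ν then 1 else 0) := by
  rw [phiC]
  simp only [Multiset.count_add, count_map_add_one, Multiset.count_replicate,
    Multiset.count_filter, Multiset.count_singleton]
  split_ifs <;> omega

lemma countPhiC_high {ν d a : ℕ} (s : Multiset ℕ) (h : d + ν + 2 ≤ a) :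
    Multiset.count a (phiC ν d s) = Multiset.count (a - 1) s := by
  rw [countPhiC]
  rw [if_pos h, if_neg (by omega), if_neg (by omega), if_neg (by omega), if_neg (by omega)]
  omega

lemma countPhiC_top {ν d : ℕ} (s : Multiset ℕ) :
    Multiset.count (d + ν + 1) (phiC ν d s) =
      d - (s.filter (fun i => d + ν + 1 ≤ i)).card := by
  rw [countPhiC]
  rw [if_neg (by omega), if_pos rfl, if_neg (by omega), if_neg (by omega), if_neg (by omega)]
  omega

lemma countPhiC_mid {ν d : ℕ} (s : Multiset ℕ) (hν : 1 ≤ ν) :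
    Multiset.count (d + ν) (phiC ν d s) =
      (s.count (d + ν) - 1 - (d - (s.filter (fun i => d + ν + 1 ≤ i)).card))
      + (if d = 0 then 1 else 0) := by
  rw [countPhiC]
  rw [if_neg (by omega), if_neg (by omega), if_pos rfl, if_neg (by omega)]
  by_cases hd : d = 0
  · rw [if_pos (by omega), if_pos hd]; omega
  · rw [if_neg (by omega), if_neg hd]; omega

lemma countPhiC_low {ν d a : ℕ} (s : Multiset ℕ) (h : a < d + ν) :
    Multiset.count a (phiC ν d s) = Multiset.count a s + (if a = ν then 1 else 0) := by
  rw [countPhiC]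
  rw [if_neg (by omega), if_neg (by omega), if_neg (by omega), if_pos h]
  omega

lemma countPsiC (ν d : ℕ) (s : Multiset ℕ) (hν : 1 ≤ ν) (hmem : ν ∈ s) (a : ℕ) :
    Multiset.count a (psiC ν d s) + (if a = ν then 1 else 0) =
      (if d + ν + 1 ≤ a then Multiset.count (a + 1) s else 0)
      + (if a = d + ν then s.count (d + ν + 1) + 1 else 0)
      + (if a < d + ν + 1 then Multiset.count a s else 0) := by
  have hsub : ∀ b ∈ s.filter (fun i => d + ν + 1 + 1 ≤ i), 1 ≤ b := fun b hb => by
    have := (Multiset.mem_filter.mp hb).2; omega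
  have hνL : ν ∈ s.filter (fun i => i < d + ν + 1) :=
    Multiset.mem_filter.mpr ⟨hmem, by omega⟩
  have herase : Multiset.count a ((s.filter (fun i => i < d + ν + 1)).erase ν)
      + (if a = ν then 1 else 0) = if a < d + ν + 1 then Multiset.count a s else 0 := by
    rcases eq_or_ne a ν with ha | hne
    · rw [ha]
      have hc2 : Multiset.count ν (s.filter (fun i => i < d + ν + 1)) = Multiset.count ν s := by
        rw [Multiset.count_filter, if_pos (by omega : ν < d + ν + 1)]
      have hc1 : 1 ≤ Multiset.count ν (s.filter (fun i => i < d + ν + 1)) :=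
        Multiset.count_pos.mpr hνL
      rw [Multiset.count_erase_self, if_pos rfl, if_pos (by omega : ν < d + ν + 1), ← hc2]
      omega
    · rw [Multiset.count_erase_of_ne hne, if_neg hne, add_zero, Multiset.count_filter]
  rw [psiC]
  simp only [Multiset.count_add, Multiset.count_replicate, Multiset.count_singleton]
  rw [count_map_sub_one hsub, Multiset.count_filter]
  rw [add_assoc _ _ (if a = ν then 1 else 0), herase]
  split_ifs <;> omega

lemma psiC_mem_erase (ν d : ℕ) (s : Multiset ℕ) (hmem : ν ∈ s) :
    ν ∈ s.filter (fun i => i < d + ν + 1) :=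
  Multiset.mem_filter.mpr ⟨hmem, by omega⟩

lemma countPsiC_high {ν d a : ℕ} (s : Multiset ℕ) (hν : 1 ≤ ν) (hmem : ν ∈ s)
    (h : d + ν + 1 ≤ a) :
    Multiset.count a (psiC ν d s) = Multiset.count (a + 1) s := by
  have := countPsiC ν d s hν hmem a
  split_ifs at this <;> omega

lemma countPsiC_mid {ν d : ℕ} (s : Multiset ℕ) (hν : 1 ≤ ν) (hmem : ν ∈ s) :
    Multiset.count (d + ν) (psiC ν d s) + (if d = 0 then 1 else 0) =
      s.count (d + ν + 1) + 1 + Multiset.count (d + ν) s := by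
  have := countPsiC ν d s hν hmem (d + ν)
  split_ifs at this ⊢ <;> omega

lemma countPsiC_low {ν d a : ℕ} (s : Multiset ℕ) (hν : 1 ≤ ν) (hmem : ν ∈ s)
    (h : a < d + ν) :
    Multiset.count a (psiC ν d s) + (if a = ν then 1 else 0) = Multiset.count a s := by
  have := countPsiC ν d s hν hmem a
  split_ifs at this ⊢ <;> omega

end Stmt9

namespace Stmt9

open Multiset

/-! ### decomposition of a multiset at a threshold -/

lemma decomp_at (s : Multiset ℕ) (x : ℕ) :
    s = s.filter (fun i => x + 1 ≤ i) + Multiset.replicate (s.count x) x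
        + s.filter (fun i => i < x) := by
  refine Multiset.ext.mpr fun a => ?_
  rcases eq_or_ne a x with ha | hne
  · rw [ha]
    simp only [Multiset.count_add, Multiset.count_filter, Multiset.count_replicate]
    split_ifs <;> omega
  · simp only [Multiset.count_add, Multiset.count_filter, Multiset.count_replicate]
    split_ifs <;> omega

lemma card_decomp (s : Multiset ℕ) (x : ℕ) :
    Multiset.card s = (s.filter (fun i => x + 1 ≤ i)).card + s.count x
      + (s.filter (fun i => i < x)).card := by
  conv_lhs => rw [decomp_at s x]
  simp [Multiset.card_add]

lemma sum_decomp (s : Multiset ℕ) (x : ℕ) :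
    s.sum = (s.filter (fun i => x + 1 ≤ i)).sum + s.count x * x
      + (s.filter (fun i => i < x)).sum := by
  conv_lhs => rw [decomp_at s x]
  simp [Multiset.sum_add, Multiset.sum_replicate, smul_eq_mul]

/-! ### helpers for filters over explicit sums -/

lemma fself {p : ℕ → Prop} [DecidablePred p] {s : Multiset ℕ} (h : ∀ x ∈ s, p x) :
    Multiset.filter p s = s := Multiset.filter_eq_self.mpr h

lemma fnil {p : ℕ → Prop} [DecidablePred p] {s : Multiset ℕ} (h : ∀ x ∈ s, ¬ p x) :
    Multiset.filter p s = 0 := Multiset.filter_eq_nil.mpr h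

/-! ### phi-side structural lemmas -/

section Phi

variable {ν d : ℕ} {s : Multiset ℕ}

lemma phiC_card (hc : (s.filter (fun i => d + ν + 1 ≤ i)).card ≤ d)
    (hmc : d + 1 ≤ s.count (d + ν) + (s.filter (fun i => d + ν + 1 ≤ i)).card) :
    Multiset.card (phiC ν d s) = Multiset.card s := by
  rw [phiC]
  simp only [Multiset.card_add, Multiset.card_map, Multiset.card_replicate,
    Multiset.card_singleton]
  rw [card_decomp s (d + ν)]
  omega

lemma phiC_pos (hν : 1 ≤ ν) (hpos : ∀ x ∈ s, 0 < x) : ∀ x ∈ phiC ν d s, 0 < x := by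
  intro x hx
  rw [phiC] at hx
  simp only [Multiset.mem_add, Multiset.mem_map, Multiset.mem_filter,
    Multiset.mem_replicate, Multiset.mem_singleton] at hx
  rcases hx with ((((⟨b, _, rfl⟩ | ⟨_, rfl⟩) | ⟨_, rfl⟩) | ⟨h1, _⟩) | rfl) <;>
    first
      | omega
      | exact hpos _ h1

lemma phiC_mem (hν : 1 ≤ ν) : ν ∈ phiC ν d s := by
  rw [phiC]
  simp [Multiset.mem_add]

lemma phiC_mem_low {j : ℕ} (hj : j < ν) (hjs : j ∈ s) : j ∈ phiC ν d s := by
  rw [phiC]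
  simp only [Multiset.mem_add]
  left; right
  exact Multiset.mem_filter.mpr ⟨hjs, by omega⟩

lemma phiC_filter_ge :
    (phiC ν d s).filter (fun i => d + ν + 1 ≤ i) =
      (s.filter (fun i => d + ν + 1 ≤ i)).map (· + 1)
      + Multiset.replicate (d - (s.filter (fun i => d + ν + 1 ≤ i)).card) (d + ν + 1) := by
  rw [phiC]
  simp only [Multiset.filter_add]
  rw [fself (p := fun i => d + ν + 1 ≤ i)
      (s := (s.filter (fun i => d + ν + 1 ≤ i)).map (· + 1)) ?h1,
    fself (s := Multiset.replicate _ (d + ν + 1)) ?h2,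
    fnil (s := Multiset.replicate _ (d + ν)) ?h3,
    fnil (s := s.filter (fun i => i < d + ν)) ?h4,
    fnil (s := ({ν} : Multiset ℕ)) ?h5]
  · simp
  case h1 =>
    intro x hx
    obtain ⟨b, hb, rfl⟩ := Multiset.mem_map.mp hx
    have := (Multiset.mem_filter.mp hb).2
    omega
  case h2 =>
    intro x hx
    rw [Multiset.eq_of_mem_replicate hx]
  case h3 =>
    intro x hx
    rw [Multiset.eq_of_mem_replicate hx]
    omega
  case h4 =>
    intro x hx
    have := (Multiset.mem_filter.mp hx).2
    omega
  case h5 =>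
    intro x hx
    rw [Multiset.mem_singleton.mp hx]
    omega

lemma phiC_filter_gt :
    (phiC ν d s).filter (fun i => d + ν + 1 + 1 ≤ i) =
      (s.filter (fun i => d + ν + 1 ≤ i)).map (· + 1) := by
  rw [phiC]
  simp only [Multiset.filter_add]
  rw [fself (p := fun i => d + ν + 1 + 1 ≤ i)
      (s := (s.filter (fun i => d + ν + 1 ≤ i)).map (· + 1)) ?g1,
    fnil (s := Multiset.replicate _ (d + ν + 1)) ?g2,
    fnil (s := Multiset.replicate _ (d + ν)) ?g3,
    fnil (s := s.filter (fun i => i < d + ν)) ?g4,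
    fnil (s := ({ν} : Multiset ℕ)) ?g5]
  · simp
  case g1 =>
    intro x hx
    obtain ⟨b, hb, rfl⟩ := Multiset.mem_map.mp hx
    have := (Multiset.mem_filter.mp hb).2
    omega
  case g2 =>
    intro x hx
    rw [Multiset.eq_of_mem_replicate hx]
    omega
  case g3 =>
    intro x hx
    rw [Multiset.eq_of_mem_replicate hx]
    omega
  case g4 =>
    intro x hx
    have := (Multiset.mem_filter.mp hx).2
    omega
  case g5 =>
    intro x hx
    rw [Multiset.mem_singleton.mp hx]
    omega

lemma phiC_durfee (hν : 1 ≤ ν)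
    (hc : (s.filter (fun i => d + ν + 1 ≤ i)).card ≤ d)
    (hmc : d + 1 ≤ s.count (d + ν) + (s.filter (fun i => d + ν + 1 ≤ i)).card) :
    durfee (ν + 1) (phiC ν d s) = d := by
  have e1 : (phiC ν d s).filter (fun i => d + (ν + 1) ≤ i)
      = (phiC ν d s).filter (fun i => d + ν + 1 ≤ i) := rfl
  have e2 : (phiC ν d s).filter (fun i => d + (ν + 1) + 1 ≤ i)
      = (phiC ν d s).filter (fun i => d + ν + 1 + 1 ≤ i) := rfl
  have hcard1 : ((phiC ν d s).filter (fun i => d + (ν + 1) ≤ i)).card = d := by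
    rw [e1, phiC_filter_ge]
    simp only [Multiset.card_add, Multiset.card_map, Multiset.card_replicate]
    omega
  have hcard2 : ((phiC ν d s).filter (fun i => d + (ν + 1) + 1 ≤ i)).card
      = (s.filter (fun i => d + ν + 1 ≤ i)).card := by
    rw [e2, phiC_filter_gt, Multiset.card_map]
  apply durfee_eq_of
  · rw [phiC_card hc hmc]
    have := card_decomp s (d + ν)
    omega
  · rw [hcard1]
  · rw [hcard2]; omega

lemma phiC_good (hν : 1 ≤ ν)
    (hc : (s.filter (fun i => d + ν + 1 ≤ i)).card ≤ d)
    (hmc : d + 1 ≤ s.count (d + ν) + (s.filter (fun i => d + ν + 1 ≤ i)).card) :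
    ((phiC ν d s).filter
        (fun i => durfee (ν + 1) (phiC ν d s) + (ν + 1) ≤ i)).card
      ≤ durfee (ν + 1) (phiC ν d s) := by
  rw [phiC_durfee hν hc hmc]
  have e1 : (phiC ν d s).filter (fun i => d + (ν + 1) ≤ i)
      = (phiC ν d s).filter (fun i => d + ν + 1 ≤ i) := rfl
  rw [e1, phiC_filter_ge]
  simp only [Multiset.card_add, Multiset.card_map, Multiset.card_replicate]
  omega

lemma phiC_sum (hν : 1 ≤ ν)
    (hc : (s.filter (fun i => d + ν + 1 ≤ i)).card ≤ d)
    (hmc : d + 1 ≤ s.count (d + ν) + (s.filter (fun i => d + ν + 1 ≤ i)).card) :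
    (phiC ν d s).sum = s.sum := by
  rw [phiC]
  simp only [Multiset.sum_add, sum_map_add_one, Multiset.sum_replicate, smul_eq_mul,
    Multiset.sum_singleton]
  rw [sum_decomp s (d + ν)]
  obtain ⟨k, hk⟩ : ∃ k, d = (s.filter (fun i => d + ν + 1 ≤ i)).card + k :=
    ⟨d - (s.filter (fun i => d + ν + 1 ≤ i)).card, by omega⟩
  obtain ⟨l, hl⟩ : ∃ l, s.count (d + ν) = k + 1 + l := ⟨s.count (d + ν) - (k + 1), by omega⟩
  rw [hl]
  rw [show d - (s.filter (fun i => d + ν + 1 ≤ i)).card = k from by omega]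
  rw [show k + 1 + l - 1 - k = l from by omega]
  set SA := (s.filter (fun i => d + ν + 1 ≤ i)).sum
  set SL := (s.filter (fun i => i < d + ν)).sum
  set c := (s.filter (fun i => d + ν + 1 ≤ i)).card
  rw [show d = c + k from hk]
  ring

end Phi

end Stmt9

namespace Stmt9

open Multiset

section Psi

variable {ν d : ℕ} {s : Multiset ℕ}

lemma psiC_card (hmem : ν ∈ s) :
    Multiset.card (psiC ν d s) = Multiset.card s := by
  have hL : ν ∈ s.filter (fun i => i < d + ν + 1) := psiC_mem_erase ν d s hmem
  have h1 : 1 ≤ (s.filter (fun i => i < d + ν + 1)).card :=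
    Multiset.card_pos_iff_exists_mem.mpr ⟨ν, hL⟩
  rw [psiC]
  simp only [Multiset.card_add, Multiset.card_map, Multiset.card_replicate,
    Multiset.card_singleton, Multiset.card_erase_of_mem hL, Nat.pred_eq_sub_one]
  rw [card_decomp s (d + ν + 1)]
  omega

lemma psiC_pos (hν : 1 ≤ ν) (hpos : ∀ x ∈ s, 0 < x) : ∀ x ∈ psiC ν d s, 0 < x := by
  intro x hx
  rw [psiC] at hx
  simp only [Multiset.mem_add, Multiset.mem_map, Multiset.mem_filter,
    Multiset.mem_replicate, Multiset.mem_singleton] at hx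
  rcases hx with (((⟨b, ⟨_, hb⟩, rfl⟩ | ⟨_, rfl⟩) | rfl) | h) <;>
    first
      | omega
      | exact hpos _ ((Multiset.mem_filter.mp (Multiset.mem_of_mem_erase h)).1)

lemma psiC_mem_low {j : ℕ} (hj : j < ν) (hjs : j ∈ s) : j ∈ psiC ν d s := by
  rw [psiC]
  simp only [Multiset.mem_add]
  right
  exact (Multiset.mem_erase_of_ne (by omega)).mpr
    (Multiset.mem_filter.mpr ⟨hjs, by omega⟩)

lemma psiC_filter_ge :
    (psiC ν d s).filter (fun i => d + ν + 1 ≤ i) =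
      (s.filter (fun i => d + ν + 1 + 1 ≤ i)).map (· - 1) := by
  rw [psiC]
  simp only [Multiset.filter_add]
  rw [fself (p := fun i => d + ν + 1 ≤ i)
      (s := (s.filter (fun i => d + ν + 1 + 1 ≤ i)).map (· - 1)) ?p1,
    fnil (s := Multiset.replicate _ (d + ν)) ?p2,
    fnil (s := ({d + ν} : Multiset ℕ)) ?p3,
    fnil (s := (s.filter (fun i => i < d + ν + 1)).erase ν) ?p4]
  · simp
  case p1 =>
    intro x hx
    obtain ⟨b, hb, rfl⟩ := Multiset.mem_map.mp hx
    have := (Multiset.mem_filter.mp hb).2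
    omega
  case p2 =>
    intro x hx
    rw [Multiset.eq_of_mem_replicate hx]
    omega
  case p3 =>
    intro x hx
    rw [Multiset.mem_singleton.mp hx]
    omega
  case p4 =>
    intro x hx
    have := (Multiset.mem_filter.mp (Multiset.mem_of_mem_erase hx)).2
    omega

lemma psiC_filter_low_card (hν : 1 ≤ ν)
    (hdc : s.count (d + ν + 1) + (s.filter (fun i => d + ν + 1 + 1 ≤ i)).card = d) :
    d + 1 ≤ ((psiC ν d s).filter (fun i => d + ν ≤ i)).card := by
  rw [psiC]
  simp only [Multiset.filter_add]
  rw [fself (p := fun i => d + ν ≤ i)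
      (s := (s.filter (fun i => d + ν + 1 + 1 ≤ i)).map (· - 1)) ?q1,
    fself (s := Multiset.replicate _ (d + ν)) ?q2,
    fself (s := ({d + ν} : Multiset ℕ)) ?q3]
  · simp only [Multiset.card_add, Multiset.card_map, Multiset.card_replicate,
      Multiset.card_singleton]
    omega
  case q1 =>
    intro x hx
    obtain ⟨b, hb, rfl⟩ := Multiset.mem_map.mp hx
    have := (Multiset.mem_filter.mp hb).2
    omega
  case q2 =>
    intro x hx
    rw [Multiset.eq_of_mem_replicate hx]
  case q3 =>
    intro x hx
    rw [Multiset.mem_singleton.mp hx]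

lemma psiC_durfee (hν : 1 ≤ ν) (hmem : ν ∈ s)
    (hdc : s.count (d + ν + 1) + (s.filter (fun i => d + ν + 1 + 1 ≤ i)).card = d) :
    durfee ν (psiC ν d s) = d := by
  apply durfee_eq_of
  · rw [psiC_card hmem]
    have := card_decomp s (d + ν + 1)
    have h1 : 1 ≤ (s.filter (fun i => i < d + ν + 1)).card :=
      Multiset.card_pos_iff_exists_mem.mpr ⟨ν, psiC_mem_erase ν d s hmem⟩
    omega
  · have := psiC_filter_low_card hν hdc
    omega
  · rw [psiC_filter_ge, Multiset.card_map]
    omega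

lemma psiC_bad (hν : 1 ≤ ν) (hmem : ν ∈ s)
    (hdc : s.count (d + ν + 1) + (s.filter (fun i => d + ν + 1 + 1 ≤ i)).card = d) :
    durfee ν (psiC ν d s) + 1 ≤
      ((psiC ν d s).filter (fun i => durfee ν (psiC ν d s) + ν ≤ i)).card := by
  rw [psiC_durfee hν hmem hdc]
  exact psiC_filter_low_card hν hdc

lemma psiC_sum (hν : 1 ≤ ν) (hmem : ν ∈ s)
    (hdc : s.count (d + ν + 1) + (s.filter (fun i => d + ν + 1 + 1 ≤ i)).card = d) :
    (psiC ν d s).sum = s.sum := by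
  have hL : ν ∈ s.filter (fun i => i < d + ν + 1) := psiC_mem_erase ν d s hmem
  have hsum1 : (s.filter (fun i => i < d + ν + 1)).sum =
      ν + ((s.filter (fun i => i < d + ν + 1)).erase ν).sum := by
    conv_lhs => rw [← Multiset.cons_erase hL]
    rw [Multiset.sum_cons]
  have hsub : ∀ b ∈ s.filter (fun i => d + ν + 1 + 1 ≤ i), 1 ≤ b := fun b hb => by
    have := (Multiset.mem_filter.mp hb).2; omega
  have hsum2 := sum_map_sub_one hsub
  rw [psiC]
  simp only [Multiset.sum_add, Multiset.sum_replicate, smul_eq_mul, Multiset.sum_singleton]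
  rw [sum_decomp s (d + ν + 1)]
  have hmul : s.count (d + ν + 1) * (d + ν + 1) = s.count (d + ν + 1) * (d + ν)
      + s.count (d + ν + 1) := by ring
  omega

end Psi

end Stmt9

namespace Stmt9

open Multiset

lemma psiC_phiC {ν d : ℕ} {s : Multiset ℕ} (hν : 1 ≤ ν)
    (hc : (s.filter (fun i => d + ν + 1 ≤ i)).card ≤ d)
    (hmc : d + 1 ≤ s.count (d + ν) + (s.filter (fun i => d + ν + 1 ≤ i)).card) :
    psiC ν d (phiC ν d s) = s := by
  have hmemt : ν ∈ phiC ν d s := phiC_mem hν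
  refine Multiset.ext.mpr fun a => ?_
  rcases lt_trichotomy a (d + ν) with hlt | heq | hgt
  · have h1 := countPsiC_low (phiC ν d s) hν hmemt hlt
    have h2 := countPhiC_low s hlt
    split_ifs at h1 h2 <;> omega
  · subst heq
    have h1 := countPsiC_mid (d := d) (phiC ν d s) hν hmemt
    have h2 := countPhiC_top (ν := ν) (d := d) s
    have h3 := countPhiC_mid (ν := ν) (d := d) s hν
    split_ifs at h1 h3 <;> omega
  · have h1 := countPsiC_high (phiC ν d s) hν hmemt (by omega : d + ν + 1 ≤ a)
    have h2 := countPhiC_high s (by omega : d + ν + 2 ≤ a + 1)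
    simp only [Nat.add_sub_cancel] at h2
    omega

lemma phiC_psiC {ν d : ℕ} {s : Multiset ℕ} (hν : 1 ≤ ν) (hmem : ν ∈ s)
    (hdc : s.count (d + ν + 1) + (s.filter (fun i => d + ν + 1 + 1 ≤ i)).card = d) :
    phiC ν d (psiC ν d s) = s := by
  have hcu : ((psiC ν d s).filter (fun i => d + ν + 1 ≤ i)).card
      = (s.filter (fun i => d + ν + 1 + 1 ≤ i)).card := by
    rw [psiC_filter_ge, Multiset.card_map]
  refine Multiset.ext.mpr fun a => ?_
  rcases lt_trichotomy a (d + ν) with hlt | heq | hgt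
  · have h1 := countPhiC_low (psiC ν d s) hlt
    have h2 := countPsiC_low s hν hmem hlt
    split_ifs at h1 h2 <;> omega
  · subst heq
    have h1 := countPhiC_mid (d := d) (psiC ν d s) hν
    rw [hcu] at h1
    have h2 := countPsiC_mid (d := d) s hν hmem
    split_ifs at h1 h2 with hd0
    · subst hd0
      simp only [Nat.zero_add] at h1 h2 hdc ⊢
      have hc1 : 0 < Multiset.count ν s := Multiset.count_pos.mpr hmem
      omega
    · omega
  · rcases eq_or_ne a (d + ν + 1) with heq1 | hne1
    · subst heq1
      have h1 := countPhiC_top (ν := ν) (d := d) (psiC ν d s)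
      rw [hcu] at h1
      omega
    · obtain ⟨b, rfl⟩ : ∃ b, a = b + 1 := ⟨a - 1, by omega⟩
      have h1 := countPhiC_high (psiC ν d s) (by omega : d + ν + 2 ≤ b + 1)
      simp only [Nat.add_sub_cancel] at h1
      have h2 := countPsiC_high s hν hmem (by omega : d + ν + 1 ≤ b)
      omega

end Stmt9

namespace Stmt9

open Multiset

lemma filter_card_split (s : Multiset ℕ) (x : ℕ) :
    (s.filter (fun i => x ≤ i)).card = (s.filter (fun i => x + 1 ≤ i)).card + s.count x := by
  have hdec : s.filter (fun i => x ≤ i)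
      = s.filter (fun i => x + 1 ≤ i) + Multiset.replicate (s.count x) x := by
    refine Multiset.ext.mpr fun a => ?_
    rcases eq_or_ne a x with ha | hne
    · subst ha
      simp only [Multiset.count_add, Multiset.count_filter, Multiset.count_replicate]
      split_ifs <;> omega
    · simp only [Multiset.count_add, Multiset.count_filter, Multiset.count_replicate]
      split_ifs <;> omega
  rw [hdec]
  simp

lemma bad_hc {ν : ℕ} {s : Multiset ℕ}
    (hbad : ¬ (s.filter (fun i => durfee ν s + ν ≤ i)).card ≤ durfee ν s) :
    (s.filter (fun i => durfee ν s + ν + 1 ≤ i)).card ≤ durfee ν s ∧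
      durfee ν s + 1 ≤ s.count (durfee ν s + ν)
        + (s.filter (fun i => durfee ν s + ν + 1 ≤ i)).card := by
  have hF := filter_card_split s (durfee ν s + ν)
  have hcardle := filter_card_le (s := s) (p := fun i => durfee ν s + ν ≤ i)
  have hc := durfee_succ_le (s := s) (ν := ν) (by omega)
  exact ⟨hc, by omega⟩

lemma good_hdc {ν : ℕ} {s : Multiset ℕ} (hν : 1 ≤ ν)
    (hgood : (s.filter (fun i => durfee (ν + 1) s + (ν + 1) ≤ i)).card ≤ durfee (ν + 1) s) :
    s.count (durfee (ν + 1) s + ν + 1)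
      + (s.filter (fun i => durfee (ν + 1) s + ν + 1 + 1 ≤ i)).card = durfee (ν + 1) s := by
  have e1 : s.filter (fun i => durfee (ν + 1) s + (ν + 1) ≤ i)
      = s.filter (fun i => durfee (ν + 1) s + ν + 1 ≤ i) := rfl
  rw [e1] at hgood
  have hsplit := filter_card_split s (durfee (ν + 1) s + ν + 1)
  rcases Nat.eq_zero_or_pos (durfee (ν + 1) s) with hd | hd
  · omega
  · have h2 := durfee_spec (s := s) (ν := ν + 1) (by omega)
    rw [e1] at h2
    omega

def phiPart (ν n : ℕ) (hν : 1 ≤ ν)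
    (x : {π : Nat.Partition n // (∀ j, 1 ≤ j → j < ν → j ∈ π.parts) ∧
      ¬ ((π.parts.filter (fun i => durfee ν π.parts + ν ≤ i)).card ≤ durfee ν π.parts)}) :
    {π : Nat.Partition n // (∀ j, 1 ≤ j → j < ν + 1 → j ∈ π.parts) ∧
      ((π.parts.filter (fun i => durfee (ν + 1) π.parts + (ν + 1) ≤ i)).card
        ≤ durfee (ν + 1) π.parts)} := by
  obtain ⟨π, hP, hbad⟩ := x
  have hbp := bad_hc hbad
  refine ⟨⟨phiC ν (durfee ν π.parts) π.parts, ?_, ?_⟩, ?_, ?_⟩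
  · exact fun {i} hi => phiC_pos hν (fun x hx => π.parts_pos hx) i hi
  · rw [phiC_sum hν hbp.1 hbp.2]; exact π.parts_sum
  · intro j hj1 hj2
    rcases eq_or_ne j ν with rfl | hne
    · exact phiC_mem hν
    · exact phiC_mem_low (by omega) (hP j hj1 (by omega))
  · exact phiC_good hν hbp.1 hbp.2

def psiPart (ν n : ℕ) (hν : 1 ≤ ν)
    (y : {π : Nat.Partition n // (∀ j, 1 ≤ j → j < ν + 1 → j ∈ π.parts) ∧
      ((π.parts.filter (fun i => durfee (ν + 1) π.parts + (ν + 1) ≤ i)).card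
        ≤ durfee (ν + 1) π.parts)}) :
    {π : Nat.Partition n // (∀ j, 1 ≤ j → j < ν → j ∈ π.parts) ∧
      ¬ ((π.parts.filter (fun i => durfee ν π.parts + ν ≤ i)).card ≤ durfee ν π.parts)} := by
  obtain ⟨π, hP, hgood⟩ := y
  have hmem : ν ∈ π.parts := hP ν hν (by omega)
  have hdc := good_hdc hν hgood
  refine ⟨⟨psiC ν (durfee (ν + 1) π.parts) π.parts, ?_, ?_⟩, ?_, ?_⟩
  · exact fun {i} hi => psiC_pos hν (fun x hx => π.parts_pos hx) i hi
  · rw [psiC_sum hν hmem hdc]; exact π.parts_sum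
  · exact fun j hj1 hj2 => psiC_mem_low hj2 (hP j hj1 (by omega))
  · have := psiC_bad hν hmem hdc
    dsimp only
    omega

lemma phiPart_parts (ν n : ℕ) (hν : 1 ≤ ν) (x) :
    (phiPart ν n hν x).1.parts = phiC ν (durfee ν x.1.parts) x.1.parts := by
  obtain ⟨π, hP, hbad⟩ := x
  rfl

lemma psiPart_parts (ν n : ℕ) (hν : 1 ≤ ν) (y) :
    (psiPart ν n hν y).1.parts = psiC ν (durfee (ν + 1) y.1.parts) y.1.parts := by
  obtain ⟨π, hP, hgood⟩ := y
  rfl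

end Stmt9



namespace Stmt9

open Multiset

lemma split_card (ν n : ℕ) (hν : 1 ≤ ν) :
    Nat.card {π : Nat.Partition n // ∀ j, 1 ≤ j → j < ν → j ∈ π.parts}
      = Nnu ν n + Nnu (ν + 1) n := by
  classical
  have h1 : Nat.card {π : Nat.Partition n // ∀ j, 1 ≤ j → j < ν → j ∈ π.parts}
      = Nat.card {π : Nat.Partition n // (∀ j, 1 ≤ j → j < ν → j ∈ π.parts) ∧
          (π.parts.filter (fun i => durfee ν π.parts + ν ≤ i)).card ≤ durfee ν π.parts}
        + Nat.card {π : Nat.Partition n // (∀ j, 1 ≤ j → j < ν → j ∈ π.parts) ∧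
          ¬ ((π.parts.filter (fun i => durfee ν π.parts + ν ≤ i)).card ≤ durfee ν π.parts)} := by
    rw [← Nat.card_sum]
    apply Nat.card_congr
    exact ((Equiv.sumCompl (fun y : {π : Nat.Partition n // ∀ j, 1 ≤ j → j < ν → j ∈ π.parts} =>
        (y.1.parts.filter (fun i => durfee ν y.1.parts + ν ≤ i)).card ≤ durfee ν y.1.parts)).symm.trans
      (Equiv.sumCongr
        (Equiv.subtypeSubtypeEquivSubtypeInter
          (fun π : Nat.Partition n => ∀ j, 1 ≤ j → j < ν → j ∈ π.parts)
          (fun π => (π.parts.filter (fun i => durfee ν π.parts + ν ≤ i)).card ≤ durfee ν π.parts))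
        (Equiv.subtypeSubtypeEquivSubtypeInter
          (fun π : Nat.Partition n => ∀ j, 1 ≤ j → j < ν → j ∈ π.parts)
          (fun π => ¬ ((π.parts.filter (fun i => durfee ν π.parts + ν ≤ i)).card ≤ durfee ν π.parts)))))
  have h3 : Nat.card {π : Nat.Partition n // (∀ j, 1 ≤ j → j < ν → j ∈ π.parts) ∧
      ¬ ((π.parts.filter (fun i => durfee ν π.parts + ν ≤ i)).card ≤ durfee ν π.parts)}
      = Nnu (ν + 1) n := by
    apply Nat.card_congr
    refine ⟨phiPart ν n hν, psiPart ν n hν, ?_, ?_⟩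
    · intro x
      have hbp := bad_hc x.2.2
      apply Subtype.ext
      apply Nat.Partition.ext
      rw [psiPart_parts, phiPart_parts, phiC_durfee hν hbp.1 hbp.2]
      exact psiC_phiC hν hbp.1 hbp.2
    · intro y
      have hmem : ν ∈ y.1.parts := y.2.1 ν hν (by omega)
      have hdc := good_hdc hν y.2.2
      apply Subtype.ext
      apply Nat.Partition.ext
      rw [phiPart_parts, psiPart_parts, psiC_durfee hν hmem hdc]
      exact phiC_psiC hν hmem hdc
  rw [h1, h3]
  rfl

lemma A_eq (m n : ℕ) :
    (Nat.card {π : Nat.Partition n // ∀ j, 1 ≤ j → j < m → j ∈ π.parts} : ℤ)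
      = p ((n : ℤ) - (m * (m - 1) / 2 : ℕ)) := by
  rcases le_or_gt (m * (m - 1) / 2) n with h | h
  · have harg : ((n : ℤ) - (m * (m - 1) / 2 : ℕ)).toNat = n - m * (m - 1) / 2 := by
      generalize m * (m - 1) / 2 = K at h ⊢
      omega
    rw [cardA_of_le h]
    simp only [p]
    rw [if_pos (by generalize m * (m - 1) / 2 = K at h ⊢; omega :
      (0 : ℤ) ≤ (n : ℤ) - (m * (m - 1) / 2 : ℕ))]
    rw [harg]
  · rw [cardA_of_gt h]
    simp only [p]
    rw [if_neg (by generalize m * (m - 1) / 2 = K at h ⊢; omega :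
      ¬ (0 : ℤ) ≤ (n : ℤ) - (m * (m - 1) / 2 : ℕ))]
    simp

end Stmt9


/-- For `ν ≥ 1` and `n ≥ 0`:
`Σ_{τ≥0} (-1)^τ p(n − (ν+τ)(ν+τ−1)/2) = N_ν(n)` (the sum has finitely many
nonzero terms since `p` vanishes at negative arguments). -/
theorem stmt9 (ν : ℕ) (hν : 1 ≤ ν) (n : ℕ) :
    ∑' τ : ℕ, (-1 : ℤ) ^ τ * p ((n : ℤ) - ((ν : ℤ) + τ) * ((ν : ℤ) + τ - 1) / 2) =
      (Nnu ν n : ℤ) := by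
  have hzero : ∀ m, 1 ≤ m → n < m * (m - 1) / 2 → Nnu m n = 0 := by
    intro m hm hn
    have hs := Stmt9.split_card m n hm
    rw [Stmt9.cardA_of_gt hn] at hs
    omega
  have hkey : ∀ m : ℕ, 1 ≤ m →
      p ((n : ℤ) - (m * (m - 1) / 2 : ℕ)) = (Nnu m n : ℤ) + (Nnu (m + 1) n : ℤ) := by
    intro m hm
    rw [← Stmt9.A_eq m n, Stmt9.split_card m n hm]
    push_cast
    ring
  have hcast : ∀ τ : ℕ, (n : ℤ) - ((ν : ℤ) + τ) * ((ν : ℤ) + τ - 1) / 2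
      = (n : ℤ) - ((ν + τ) * ((ν + τ) - 1) / 2 : ℕ) := by
    intro τ
    obtain ⟨ν', rfl⟩ : ∃ ν', ν = ν' + 1 := ⟨ν - 1, by omega⟩
    congr 1
    rw [Int.natCast_div, show ν' + 1 + τ - 1 = ν' + τ from by omega]
    push_cast
    congr 1
    ring
  have hterm : ∀ τ : ℕ, (-1 : ℤ) ^ τ * p ((n : ℤ) - ((ν : ℤ) + τ) * ((ν : ℤ) + τ - 1) / 2)
      = (-1 : ℤ) ^ τ * ((Nnu (ν + τ) n : ℤ) + (Nnu (ν + τ + 1) n : ℤ)) := by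
    intro τ
    rw [hcast τ, hkey (ν + τ) (by omega)]
  have hvanish : ∀ m, n + 3 ≤ m → Nnu m n = 0 := by
    intro m hm
    refine hzero m (by omega) ?_
    have h2 : 2 * (m - 1) ≤ m * (m - 1) := Nat.mul_le_mul_right _ (by omega)
    generalize hG : m * (m - 1) = K at h2 ⊢
    omega
  have htel : ∀ N : ℕ, ∑ τ ∈ Finset.range N,
      (-1 : ℤ) ^ τ * ((Nnu (ν + τ) n : ℤ) + (Nnu (ν + τ + 1) n : ℤ))
      = (Nnu ν n : ℤ) - (-1 : ℤ) ^ N * (Nnu (ν + N) n : ℤ) := by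
    intro N
    induction N with
    | zero => simp
    | succ k ih =>
      rw [Finset.sum_range_succ, ih, pow_succ]
      simp only [← Nat.add_assoc]
      ring
  rw [tsum_eq_sum (s := Finset.range (n + 2)) ?hout]
  case hout =>
    intro τ hτ
    have hτ' : n + 2 ≤ τ := by
      by_contra hcon
      exact hτ (Finset.mem_range.mpr (by omega))
    rw [hterm τ, hvanish (ν + τ) (by omega), hvanish (ν + τ + 1) (by omega)]
    simp
  have hsum2 : (∑ τ ∈ Finset.range (n + 2),
      (-1 : ℤ) ^ τ * p ((n : ℤ) - ((ν : ℤ) + τ) * ((ν : ℤ) + τ - 1) / 2))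
      = ∑ τ ∈ Finset.range (n + 2),
        (-1 : ℤ) ^ τ * ((Nnu (ν + τ) n : ℤ) + (Nnu (ν + τ + 1) n : ℤ)) :=
    Finset.sum_congr rfl fun τ _ => hterm τ
  rw [hsum2, htel (n + 2), hvanish (ν + (n + 2)) (by omega)]
  simp
end

section
/- For every ν ≥ 1 and n ≥ 0, the alternating sum Σ_{τ=0}^∞ (-1)^τ p(n − (ν+τ)(ν+τ−1)/2) is nonnegative, where p(x) = 0 for negative x. -/
lemma p_nonneg (x : ℤ) : 0 ≤ p x := by
  unfold p; split <;> positivity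

lemma partition_card_mono {m n : ℕ} (h : m ≤ n) :
    Fintype.card (Nat.Partition m) ≤ Fintype.card (Nat.Partition n) := by
  apply Fintype.card_le_of_injective (fun π : Nat.Partition m =>
    (⟨π.parts + Multiset.replicate (n - m) 1, by
        intro i hi
        rcases Multiset.mem_add.mp hi with h' | h'
        · exact π.parts_pos h'
        · simp [Multiset.eq_of_mem_replicate h'], by
        simp [π.parts_sum, Nat.add_sub_cancel' h]⟩ : Nat.Partition n))
  intro a b hab
  have h2 : a.parts + Multiset.replicate (n - m) 1
      = b.parts + Multiset.replicate (n - m) 1 := congrArg Nat.Partition.parts hab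
  exact Nat.Partition.ext (add_right_cancel h2)

lemma p_mono {x y : ℤ} (h : x ≤ y) : p x ≤ p y := by
  by_cases hx : 0 ≤ x
  · have hy : 0 ≤ y := hx.trans h
    unfold p
    rw [if_pos hx, if_pos hy]
    exact_mod_cast partition_card_mono (Int.toNat_le_toNat h)
  · have : p x = 0 := by unfold p; rw [if_neg hx]
    rw [this]; exact p_nonneg y

/-- For `ν ≥ 1` and `n ≥ 0`, the alternating sum
`Σ_{τ≥0} (-1)^τ p(n − (ν+τ)(ν+τ−1)/2)` is nonnegative. -/
theorem stmt10 (ν : ℕ) (hν : 1 ≤ ν) (n : ℕ) :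
    0 ≤ ∑' τ : ℕ, (-1 : ℤ) ^ τ * p ((n : ℤ) - ((ν : ℤ) + τ) * ((ν : ℤ) + τ - 1) / 2) := by
  set g : ℕ → ℤ := fun τ => p ((n : ℤ) - ((ν : ℤ) + τ) * ((ν : ℤ) + τ - 1) / 2) with hg
  have hganti : ∀ τ : ℕ, g (τ + 1) ≤ g τ := by
    intro τ
    apply p_mono
    have h1 : ((ν : ℤ) + τ) * ((ν : ℤ) + τ - 1) ≤ ((ν : ℤ) + (τ + 1)) * ((ν : ℤ) + (τ + 1) - 1) := by
      have hn : (1 : ℤ) ≤ (ν : ℤ) + τ := by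
        have : (1 : ℤ) ≤ (ν : ℤ) := by exact_mod_cast hν
        have ht : (0 : ℤ) ≤ τ := Int.ofNat_nonneg τ
        linarith
      nlinarith
    have := Int.ediv_le_ediv (by norm_num : (0:ℤ) < 2) h1
    push_cast at this ⊢
    linarith
  -- support bound
  have hsupp : ∀ τ : ℕ, n + 1 ≤ τ → g τ = 0 := by
    intro τ hτ
    have h1 : (n : ℤ) + 1 ≤ τ := by exact_mod_cast hτ
    have hν' : (1 : ℤ) ≤ (ν : ℤ) := by exact_mod_cast hν
    have h2 : 2 * ((n : ℤ) + 1) ≤ ((ν : ℤ) + τ) * ((ν : ℤ) + τ - 1) := by nlinarith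
    have h3 : (n : ℤ) + 1 ≤ ((ν : ℤ) + τ) * ((ν : ℤ) + τ - 1) / 2 := by
      rw [Int.le_ediv_iff_mul_le (by norm_num : (0:ℤ) < 2)]; linarith
    have hneg : (n : ℤ) - ((ν : ℤ) + τ) * ((ν : ℤ) + τ - 1) / 2 < 0 := by linarith
    simp only [hg]
    unfold p
    rw [if_neg (by linarith)]
  have heq : ∑' τ : ℕ, (-1 : ℤ) ^ τ * g τ
      = ∑ τ ∈ Finset.range (2 * (n + 1)), (-1 : ℤ) ^ τ * g τ := by
    apply tsum_eq_sum
    intro τ hτ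
    have : n + 1 ≤ τ := by
      by_contra hc
      exact hτ (Finset.mem_range.mpr (by omega))
    rw [hsupp τ this, mul_zero]
  rw [heq]
  -- alternating sum over even range nonneg
  have key : ∀ M : ℕ, 0 ≤ ∑ τ ∈ Finset.range (2 * M), (-1 : ℤ) ^ τ * g τ := by
    intro M
    induction M with
    | zero => simp
    | succ M ih =>
      have : 2 * (M + 1) = (2 * M + 1) + 1 := by ring
      rw [this, Finset.sum_range_succ, Finset.sum_range_succ]
      have he : (-1 : ℤ) ^ (2 * M) = 1 := by
        rw [pow_mul]; norm_num
      have ho : (-1 : ℤ) ^ (2 * M + 1) = -1 := by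
        rw [pow_succ, he]; norm_num
      rw [he, ho]
      have := hganti (2 * M)
      linarith
  exact key (n + 1)
end

section
/- For n odd or ν even, with ν ≥ 1, the quantity (-1)^(ν-1) Σ_{τ=0}^{ν-1} (-1)^τ ( p(n − τ(2τ+1)) − p(n − (τ+1)(2τ+1)) ) is at most p(n − ν(2ν+1)), with strict inequality if n > ν(2ν+3). -/
namespace Stmt12

open Polynomial Finset

/-! ### The exponent function `Ee i = i(2i+1)` -/

def Ee (i : ℤ) : ℕ := (i * (2 * i + 1)).toNat

lemma Ee_nonneg (i : ℤ) : 0 ≤ i * (2 * i + 1) := by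
  rcases le_or_gt 0 i with h | h <;> nlinarith

lemma Ee_cast (i : ℤ) : (Ee i : ℤ) = i * (2 * i + 1) :=
  Int.toNat_of_nonneg (Ee_nonneg i)

/-! ### Basic facts about the partition counting function -/

noncomputable def pcard (t : ℕ) : ℕ := Fintype.card (Nat.Partition t)

lemma p_of_nonneg {x : ℤ} (h : 0 ≤ x) : p x = (pcard x.toNat : ℤ) := if_pos h

lemma p_of_neg {x : ℤ} (h : x < 0) : p x = 0 := if_neg (not_le.mpr h)

/-- the all-ones partition -/
def onesPart (t : ℕ) : Nat.Partition t where
  parts := Multiset.replicate t 1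
  parts_pos := fun hi => by
    rcases Multiset.mem_replicate.mp hi with ⟨-, rfl⟩; norm_num
  parts_sum := by simp [Multiset.sum_replicate]

/-- the singleton partition, for `0 < t` -/
def singlePart (t : ℕ) (ht : 0 < t) : Nat.Partition t where
  parts := {t}
  parts_pos := fun hi => by
    rw [Multiset.mem_singleton] at hi; omega
  parts_sum := by simp

/-- adding `r` extra `1`-parts -/
def addOnes {a : ℕ} (r : ℕ) (P : Nat.Partition a) : Nat.Partition (a + r) where
  parts := P.parts + Multiset.replicate r 1
  parts_pos := fun hi => by
    rcases Multiset.mem_add.mp hi with h | h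
    · exact P.parts_pos h
    · rcases Multiset.mem_replicate.mp h with ⟨-, rfl⟩; norm_num
  parts_sum := by simp [Multiset.sum_replicate, P.parts_sum]

lemma addOnes_injective {a r : ℕ} : Function.Injective (addOnes (a := a) r) := by
  intro P Q h
  apply Nat.Partition.ext
  have : P.parts + Multiset.replicate r 1 = Q.parts + Multiset.replicate r 1 :=
    congrArg Nat.Partition.parts h
  exact add_right_cancel this

lemma pcard_mono : Monotone pcard := by
  intro a b hab
  have : b = a + (b - a) := by omega
  rw [this]
  exact Fintype.card_le_of_injective _ (addOnes_injective (a := a) (r := b - a))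

lemma pcard_pos (t : ℕ) : 0 < pcard t := @Fintype.card_pos _ _ ⟨onesPart t⟩

lemma pcard_strict {a b : ℕ} (hab : a < b) (h2 : 2 ≤ b) : pcard a < pcard b := by
  have key : pcard a < pcard (a + (b - a)) := by
    apply Fintype.card_lt_of_injective_of_notMem _ (addOnes_injective (a := a) (r := b - a))
      (b := singlePart (a + (b - a)) (by omega))
    rintro ⟨P, hP⟩
    have hparts : (addOnes (b - a) P).parts = (singlePart (a + (b - a)) (by omega)).parts :=
      congrArg Nat.Partition.parts hP
    simp only [addOnes, singlePart] at hparts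
    have h1 : (1 : ℕ) ∈ ({a + (b - a)} : Multiset ℕ) := by
      rw [← hparts]
      exact Multiset.mem_add.mpr (Or.inr (Multiset.mem_replicate.mpr ⟨by omega, rfl⟩))
    rw [Multiset.mem_singleton] at h1
    omega
  have : a + (b - a) = b := by omega
  rwa [this] at key

lemma pcard_two {t : ℕ} (ht : 2 ≤ t) : 2 ≤ pcard t := by
  have : Nontrivial (Nat.Partition t) := by
    refine ⟨onesPart t, singlePart t (by omega), fun h => ?_⟩
    have hparts : (onesPart t).parts = (singlePart t (by omega : 0 < t)).parts :=
      congrArg Nat.Partition.parts h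
    simp only [onesPart, singlePart] at hparts
    have ht' : t ∈ (Multiset.replicate t 1 : Multiset ℕ) := by
      rw [hparts]; exact Multiset.mem_singleton_self t
    rcases Multiset.mem_replicate.mp ht' with ⟨-, h2⟩
    omega
  exact Fintype.one_lt_card_iff_nontrivial.mpr this

lemma p_nonneg (x : ℤ) : 0 ≤ p x := by
  unfold p; split
  · positivity
  · exact le_rfl

lemma p_mono {x y : ℤ} (h : x ≤ y) : p x ≤ p y := by
  rcases lt_or_ge x 0 with hx | hx
  · rw [p_of_neg hx]; exact p_nonneg y
  · rw [p_of_nonneg hx, p_of_nonneg (le_trans hx h)]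
    exact_mod_cast pcard_mono (Int.toNat_le_toNat h)

lemma p_pos {x : ℤ} (h : 0 ≤ x) : 1 ≤ p x := by
  rw [p_of_nonneg h]; exact_mod_cast pcard_pos x.toNat

lemma p_gap {a g : ℤ} (ha : 0 ≤ a) (hg : 5 ≤ g) : p (a - g) < p a := by
  rcases lt_or_ge (a - g) 0 with h | h
  · rw [p_of_neg h]; exact lt_of_lt_of_le zero_lt_one (p_pos ha)
  · have ha5 : 5 ≤ a := by omega
    rw [p_of_nonneg h, p_of_nonneg ha]
    have h1 : (a - g).toNat < a.toNat := by
      rw [Int.toNat_lt_toNat (by omega)]; omega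
    have h2 : 2 ≤ a.toNat := by omega
    exact_mod_cast pcard_strict h1 h2

/-! ### The sums from the theorem -/

noncomputable def Ff (n : ℤ) (ν : ℕ) : ℤ :=
  ∑ τ ∈ range ν, (-1:ℤ)^τ * (p (n - Ee (τ:ℤ)) - p (n - Ee (-((τ:ℤ)+1))))

noncomputable def Bb (n : ℤ) (j : ℕ) : ℤ := p (n - Ee (-(j:ℤ))) + p (n - Ee (j:ℤ))

noncomputable def Aa (n : ℤ) (ν : ℕ) : ℤ :=
  ∑ k ∈ range (2*ν+1), (-1:ℤ)^(k+ν) * p (n - Ee ((k:ℤ) - (ν:ℤ)))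

noncomputable def Cc (n : ℤ) (ν : ℕ) : ℤ := (-1:ℤ)^ν * Ff n ν + p (n - Ee (ν:ℤ))

lemma neg_one_mul_self (ν : ℕ) : (-1:ℤ)^ν * (-1:ℤ)^ν = 1 := by
  rw [← pow_add, show ν + ν = 2*ν by ring, pow_mul]; norm_num

lemma Aa_succ (n : ℤ) (ν : ℕ) : Aa n (ν+1) = Aa n ν + (-1:ℤ)^(ν+1) * Bb n (ν+1) := by
  unfold Aa Bb
  rw [show 2*(ν+1)+1 = (2*ν+1) + 1 + 1 by ring, sum_range_succ, sum_range_succ']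
  have hmid : ∀ k, (-1:ℤ)^((k+1)+(ν+1)) * p (n - Ee (((k+1:ℕ):ℤ) - ((ν+1:ℕ):ℤ))) =
      (-1:ℤ)^(k+ν) * p (n - Ee ((k:ℤ) - (ν:ℤ))) := by
    intro k
    have h1 : (((k+1):ℕ):ℤ) - ((ν+1:ℕ):ℤ) = (k:ℤ) - (ν:ℤ) := by push_cast; ring
    have h2 : (-1:ℤ)^((k+1)+(ν+1)) = (-1:ℤ)^(k+ν) := by
      rw [show (k+1)+(ν+1) = (k+ν)+2 by ring, pow_add]; norm_num
    rw [h1, h2]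
  simp only [hmid]
  rw [show ((2*ν+1:ℕ):ℤ) - ((ν:ℕ):ℤ) = ((ν+1:ℕ):ℤ) by push_cast; ring,
      show ((0:ℕ):ℤ) - ((ν+1:ℕ):ℤ) = -((ν+1:ℕ):ℤ) by push_cast; ring,
      show (0:ℕ)+(ν+1) = ν+1 by ring,
      show 2*ν+1+ν = (ν+1) + 2*ν by ring,
      show ((-1:ℤ))^((ν+1) + 2*ν) = (-1)^(ν+1) by rw [pow_add, pow_mul]; norm_num]
  ring

lemma Cc_succ (n : ℤ) (ν : ℕ) : Cc n (ν+1) = Bb n (ν+1) - Cc n ν := by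
  unfold Cc Ff Bb
  rw [sum_range_succ, pow_succ,
      show -((ν:ℤ)+1) = -((ν+1:ℕ):ℤ) by push_cast; ring]
  linear_combination (p (n - Ee (-((ν+1:ℕ):ℤ))) - p (n - Ee ((ν:ℕ):ℤ))) * neg_one_mul_self ν

lemma Cc_eq (n : ℤ) : ∀ ν, Cc n ν = (-1:ℤ)^ν * Aa n ν := by
  intro ν
  induction ν with
  | zero => simp [Cc, Ff, Aa]
  | succ ν ih =>
    rw [Cc_succ, Aa_succ, ih, pow_succ]
    linear_combination (-(Bb n (ν+1))) * neg_one_mul_self ν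

lemma Bb_mono (n : ℤ) (j : ℕ) : Bb n (j+2) ≤ Bb n (j+1) := by
  unfold Bb
  have c1 : (Ee (-((j+1:ℕ):ℤ)) : ℤ) ≤ (Ee (-((j+2:ℕ):ℤ)) : ℤ) := by
    rw [Ee_cast, Ee_cast]; push_cast; nlinarith [Int.natCast_nonneg j]
  have c2 : (Ee ((j+1:ℕ):ℤ) : ℤ) ≤ (Ee ((j+2:ℕ):ℤ) : ℤ) := by
    rw [Ee_cast, Ee_cast]; push_cast; nlinarith [Int.natCast_nonneg j]
  exact add_le_add (p_mono (by omega)) (p_mono (by omega))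

lemma Bb_strict (n : ℤ) (ν : ℕ) (hn : 0 ≤ n - Ee (-((ν+1:ℕ):ℤ))) :
    0 < Bb n (ν+1) - Bb n (ν+2) := by
  unfold Bb
  have hgap : (Ee (-((ν+2:ℕ):ℤ)) : ℤ) = (Ee (-((ν+1:ℕ):ℤ)) : ℤ) + (4*ν+5) := by
    rw [Ee_cast, Ee_cast]; push_cast; ring
  have h1 : p (n - Ee (-((ν+2:ℕ):ℤ))) < p (n - Ee (-((ν+1:ℕ):ℤ))) := by
    have := p_gap (a := n - Ee (-((ν+1:ℕ):ℤ))) (g := 4*ν+5) hn (by nlinarith [Int.natCast_nonneg ν])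
    have harg : n - Ee (-((ν+1:ℕ):ℤ)) - (4*(ν:ℤ)+5) = n - Ee (-((ν+2:ℕ):ℤ)) := by omega
    rwa [harg] at this
  have c2 : (Ee ((ν+1:ℕ):ℤ) : ℤ) ≤ (Ee ((ν+2:ℕ):ℤ) : ℤ) := by
    rw [Ee_cast, Ee_cast]; push_cast; nlinarith [Int.natCast_nonneg ν]
  have h2 : p (n - Ee ((ν+2:ℕ):ℤ)) ≤ p (n - Ee ((ν+1:ℕ):ℤ)) := p_mono (by omega)
  omega

lemma Cc_step (n : ℤ) (j : ℕ) : Cc n j = Cc n (j+2) + (Bb n (j+1) - Bb n (j+2)) := by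
  have h1 := Cc_succ n j
  have h2 := Cc_succ n (j+1)
  rw [show j+1+1 = j+2 by ring] at h2
  omega

lemma Cc_ge0 (n : ℤ) (ν : ℕ) : ∀ t, Cc n (ν + 2*t) ≤ Cc n ν := by
  intro t
  induction t with
  | zero => simp
  | succ t ih =>
    have := Cc_step n (ν + 2*t)
    have hB := Bb_mono n (ν + 2*t)
    have harg : ν + 2*t + 2 = ν + 2*(t+1) := by ring
    rw [harg] at this hB
    omega

/-! ### A DP count of partitions with restricted parts -/

def dp (s : ℕ → Bool) : ℕ → ℕ → ℕ
  | 0, 0 => 1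
  | 0, _+1 => 0
  | (M+1), n =>
    dp s M n + if s (M+1) ∧ M+1 ≤ n then dp s (M+1) (n - (M+1)) else 0
  termination_by M n => (M, n)
  decreasing_by
  · exact Prod.Lex.left _ _ (Nat.lt_succ_self M)
  · exact Prod.Lex.right _ (by omega)

lemma dp_succ (s : ℕ → Bool) (M n : ℕ) :
    dp s (M+1) n = dp s M n + if s (M+1) ∧ M+1 ≤ n then dp s (M+1) (n - (M+1)) else 0 := by
  rw [dp]

lemma dp_odd (s : ℕ → Bool) (hs : ∀ k, s k = true → k % 2 = 0) :
    ∀ M t, t % 2 = 1 → dp s M t = 0 := by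
  intro M
  induction M with
  | zero =>
    intro t ht
    match t with
    | 0 => omega
    | (u+1) => rw [dp]
  | succ M ih =>
    intro t
    induction t using Nat.strong_induction_on with
    | _ t iht =>
      intro ht
      rw [dp_succ, ih t ht]
      split
      · next hcond =>
        have h1 : (M+1) % 2 = 0 := hs _ hcond.1
        rw [iht _ (by omega) (by omega)]
      · rfl

/-! ### Partition counts with bounded parts -/

noncomputable def pc (K t : ℕ) : ℕ := Fintype.card {P : Nat.Partition t // ∀ i ∈ P.parts, i ≤ K}

lemma pc_big {K t : ℕ} (h : t ≤ K) : pc K t = pcard t := by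
  unfold pc pcard
  apply Fintype.card_congr
  apply Equiv.subtypeUnivEquiv
  intro P i hi
  have := Multiset.single_le_sum (s := P.parts) (fun x _ => Nat.zero_le x) i hi
  rw [P.parts_sum] at this
  omega

lemma partition_zero_parts (P : Nat.Partition 0) : P.parts = 0 := by
  rw [Multiset.eq_zero_iff_forall_notMem]
  intro a ha
  have h1 := P.parts_pos ha
  have h2 := Multiset.single_le_sum (s := P.parts) (fun x _ => Nat.zero_le x) a ha
  rw [P.parts_sum] at h2
  omega

lemma pc_zero_zero : pc 0 0 = 1 := by
  rw [pc_big (le_refl 0)]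
  unfold pcard
  rw [Fintype.card_eq_one_iff]
  refine ⟨⟨0, by simp, by simp⟩, fun P => ?_⟩
  apply Nat.Partition.ext
  simp [partition_zero_parts P]

lemma pc_zero_succ (t : ℕ) : pc 0 (t+1) = 0 := by
  unfold pc
  rw [Fintype.card_eq_zero_iff]
  constructor
  rintro ⟨P, hP⟩
  have : P.parts = 0 := by
    rw [Multiset.eq_zero_iff_forall_notMem]
    intro a ha
    have := P.parts_pos ha
    have := hP a ha
    omega
  have hsum := P.parts_sum
  rw [this] at hsum
  simp at hsum

/-- the key bijection: partitions of `t` with parts `≤ K+1` containing a part `K+1`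
    correspond to partitions of `t - (K+1)` with parts `≤ K+1`. -/
noncomputable def eraseEquiv (K t : ℕ) (hle : K+1 ≤ t) :
    {P : Nat.Partition t // (∀ i ∈ P.parts, i ≤ K+1) ∧ (K+1) ∈ P.parts} ≃
    {P : Nat.Partition (t - (K+1)) // ∀ i ∈ P.parts, i ≤ K+1} where
  toFun := fun ⟨P, hP⟩ =>
    ⟨⟨P.parts.erase (K+1),
      fun hi => P.parts_pos (Multiset.mem_of_mem_erase hi),
      by
        have h := Multiset.sum_erase hP.2
        have := P.parts_sum
        omega⟩,
      fun i hi => hP.1 i (Multiset.mem_of_mem_erase hi)⟩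
  invFun := fun ⟨P, hP⟩ =>
    ⟨⟨(K+1) ::ₘ P.parts,
      fun hi => by
        rcases Multiset.mem_cons.mp hi with h | h
        · omega
        · exact P.parts_pos h,
      by
        rw [Multiset.sum_cons, P.parts_sum]
        omega⟩,
      ⟨fun i hi => by
        rcases Multiset.mem_cons.mp hi with h | h
        · omega
        · exact hP i h,
      Multiset.mem_cons_self _ _⟩⟩
  left_inv := fun ⟨P, hP⟩ => by
    apply Subtype.ext
    apply Nat.Partition.ext
    exact Multiset.cons_erase hP.2
  right_inv := fun ⟨P, hP⟩ => by
    apply Subtype.ext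
    apply Nat.Partition.ext
    exact Multiset.erase_cons_head _ _

lemma pc_succ (K t : ℕ) :
    pc (K+1) t = pc K t + if K+1 ≤ t then pc (K+1) (t - (K+1)) else 0 := by
  classical
  have hsplit : pc (K+1) t =
      Fintype.card {P : Nat.Partition t // (∀ i ∈ P.parts, i ≤ K+1) ∧ (K+1) ∈ P.parts}
      + Fintype.card {P : Nat.Partition t // (∀ i ∈ P.parts, i ≤ K+1) ∧ ¬ (K+1) ∈ P.parts} := by
    unfold pc
    rw [← Fintype.card_congr (Equiv.sumCompl (p := fun P : {P : Nat.Partition t // ∀ i ∈ P.parts, i ≤ K+1} => (K+1) ∈ P.1.parts))]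
    rw [Fintype.card_sum]
    congr 1
    · exact Fintype.card_congr (Equiv.subtypeSubtypeEquivSubtypeInter
        (fun P : Nat.Partition t => ∀ i ∈ P.parts, i ≤ K+1) (fun P => (K+1) ∈ P.parts))
    · exact Fintype.card_congr (Equiv.subtypeSubtypeEquivSubtypeInter
        (fun P : Nat.Partition t => ∀ i ∈ P.parts, i ≤ K+1) (fun P => ¬ (K+1) ∈ P.parts))
  rw [hsplit]
  have hsecond : Fintype.card {P : Nat.Partition t // (∀ i ∈ P.parts, i ≤ K+1) ∧ ¬ (K+1) ∈ P.parts}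
      = pc K t := by
    unfold pc
    apply Fintype.card_congr
    apply Equiv.subtypeEquivRight
    intro P
    constructor
    · rintro ⟨h1, h2⟩ i hi
      have := h1 i hi
      have : i ≠ K+1 := fun he => h2 (he ▸ hi)
      omega
    · intro h1
      refine ⟨fun i hi => le_trans (h1 i hi) (by omega), fun hmem => ?_⟩
      have := h1 _ hmem
      omega
  rw [hsecond]
  rcases le_or_gt (K+1) t with hle | hlt
  · rw [if_pos hle, Fintype.card_congr (eraseEquiv K t hle)]
    unfold pc
    omega
  · rw [if_neg (by omega)]
    have : Fintype.card {P : Nat.Partition t // (∀ i ∈ P.parts, i ≤ K+1) ∧ (K+1) ∈ P.parts} = 0 := by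
      rw [Fintype.card_eq_zero_iff]
      constructor
      rintro ⟨P, -, hmem⟩
      have := Multiset.single_le_sum (s := P.parts) (fun x _ => Nat.zero_le x) _ hmem
      rw [P.parts_sum] at this
      omega
    omega

lemma dp_true_eq_pc : ∀ K t, dp (fun _ => true) K t = pc K t := by
  intro K
  induction K with
  | zero =>
    intro t
    match t with
    | 0 => rw [pc_zero_zero]; simp [dp]
    | (u+1) => rw [pc_zero_succ]; simp [dp]
  | succ K ih =>
    intro t
    induction t using Nat.strong_induction_on with
    | _ t iht =>
      rw [dp_succ, pc_succ, ih t]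
      congr 1
      split
      · next hcond =>
        rw [if_pos hcond.2, iht _ (by omega)]
      · next hcond =>
        rw [if_neg (by simpa using hcond)]

/-! ### Gaussian binomial coefficients in base `X^4` -/

noncomputable def qb : ℕ → ℕ → Polynomial ℤ
  | 0, 0 => 1
  | 0, (_+1) => 0
  | (m+1), 0 => qb m 0
  | (m+1), (k+1) => qb m (k+1) + X^(4*(m-k)) * qb m k

lemma qb_zero_right : ∀ m, qb m 0 = 1 := by
  intro m; induction m with
  | zero => rfl
  | succ m ih => rw [qb, ih]

lemma qb_eq_zero : ∀ m k, m < k → qb m k = 0 := by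
  intro m
  induction m with
  | zero => intro k hk; match k, hk with | (j+1), _ => rfl
  | succ m ih =>
    intro k hk
    match k, hk with
    | (j+1), hk =>
      rw [qb, ih _ (by omega), ih _ (by omega)]
      ring

lemma qb_diag : ∀ m, qb m m = 1 := by
  intro m; induction m with
  | zero => rfl
  | succ m ih => rw [qb, ih, qb_eq_zero m (m+1) (by omega), Nat.sub_self]; ring

/-! ### Pochhammer-style products -/

noncomputable def po (a l : ℕ) : Polynomial ℤ := ∏ i ∈ range l, (1 - X^(4*(a+i+1)))

lemma po_zero (a : ℕ) : po a 0 = 1 := by simp [po]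

lemma po_top (a l : ℕ) : po a (l+1) = po a l * (1 - X^(4*(a+l+1))) := by
  rw [po, prod_range_succ]; rfl

lemma po_bot (a l : ℕ) : po a (l+1) = (1 - X^(4*(a+1))) * po (a+1) l := by
  rw [po, prod_range_succ', po]
  rw [mul_comm]
  congr 1
  refine prod_congr rfl fun i _ => ?_
  congr 2
  omega

lemma po_split (a l₁ l₂ : ℕ) : po a (l₁ + l₂) = po a l₁ * po (a + l₁) l₂ := by
  rw [po, prod_range_add, po, po]
  congr 1
  refine prod_congr rfl fun i _ => ?_
  congr 2
  omega

lemma one_sub_X_pow_ne_zero (e : ℕ) (he : 1 ≤ e) : (1 - X^e : Polynomial ℤ) ≠ 0 := by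
  intro h
  have h2 : (1 - X^e : Polynomial ℤ).coeff e = 0 := by rw [h]; simp
  rw [Polynomial.coeff_sub, Polynomial.coeff_one, Polynomial.coeff_X_pow] at h2
  rw [if_pos rfl, if_neg (by omega : ¬ e = 0)] at h2
  omega

lemma po_ne_zero (a l : ℕ) : po a l ≠ 0 := by
  induction l with
  | zero => rw [po_zero]; exact one_ne_zero
  | succ l ih =>
    rw [po_top]
    exact mul_ne_zero ih (one_sub_X_pow_ne_zero _ (by omega))

lemma prodform : ∀ m k, k ≤ m → qb m k * po 0 k = po (m-k) k := by
  intro m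
  induction m with
  | zero =>
    intro k hk
    match k, hk with
    | 0, _ => simp [qb, po]
  | succ m ih =>
    intro k hk
    match k with
    | 0 => rw [qb_zero_right, po_zero]; simp [po_zero]
    | (j+1) =>
      rcases Nat.eq_or_lt_of_le hk with he | hlt
      · have hjm : j = m := by omega
        subst hjm
        rw [qb_diag, one_mul, show j+1-(j+1) = 0 by omega]
      · have hj1 : j + 1 ≤ m := by omega
        have hpot : po 0 (j+1) = po 0 j * (1 - X^(4*(j+1))) := by
          rw [po_top]; congr 3; ring
        rw [qb, add_mul, mul_assoc, ih (j+1) hj1, hpot,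
          show qb m j * (po 0 j * (1 - X^(4*(j+1)))) = (qb m j * po 0 j) * (1 - X^(4*(j+1)))
            from by ring,
          ih j (by omega)]
        have hsplit1 : po (m-(j+1)) (j+1) = (1 - X^(4*(m-j))) * po (m-j) j := by
          rw [po_bot, show m-(j+1)+1 = m-j by omega]
        have hsplit2 : po (m+1-(j+1)) (j+1) = po (m-j) j * (1 - X^(4*(m+1))) := by
          rw [show m+1-(j+1) = m-j by omega, po_top]
          congr 3
          omega
        rw [hsplit1, hsplit2]
        have hXe : (X:Polynomial ℤ)^(4*(m-j)) * X^(4*(j+1)) = X^(4*(m+1)) := by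
          rw [← pow_add]; congr 1; omega
        linear_combination (- po (m-j) j) * hXe

lemma qb_pascal1 (m k : ℕ) : qb (m+1) (k+1) = qb m (k+1) + X^(4*(m-k)) * qb m k := by
  rw [qb]

lemma qb_pascal2 (m k : ℕ) : qb (m+1) (k+1) = X^(4*(k+1)) * qb m (k+1) + qb m k := by
  rcases le_or_gt (k+1) (m+1) with hk | hk
  · apply mul_right_cancel₀ (po_ne_zero 0 (k+1))
    have hpot : po 0 (k+1) = po 0 k * (1 - X^(4*(k+1))) := by
      rw [po_top]; congr 3; ring
    rw [prodform (m+1) (k+1) hk]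
    rcases Nat.eq_or_lt_of_le hk with he | hlt
    · have hkm : k = m := by omega
      subst hkm
      rw [qb_eq_zero k (k+1) (by omega), qb_diag, show k+1-(k+1) = 0 by omega]
      ring
    · have hk2 : k + 1 ≤ m := by omega
      have h1 := prodform m (k+1) hk2
      have h2 := prodform m k (by omega)
      have hsplit1 : po (m-(k+1)) (k+1) = (1 - X^(4*(m-k))) * po (m-k) k := by
        rw [po_bot, show m-(k+1)+1 = m-k by omega]
      have hsplit2 : po (m+1-(k+1)) (k+1) = po (m-k) k * (1 - X^(4*(m+1))) := by
        rw [show m+1-(k+1) = m-k by omega, po_top]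
        congr 3
        omega
      rw [hsplit2,
        show (X^(4*(k+1)) * qb m (k+1) + qb m k) * po 0 (k+1) =
          X^(4*(k+1)) * (qb m (k+1) * po 0 (k+1)) + qb m k * po 0 (k+1) from by ring,
        h1, hsplit1, hpot,
        show qb m k * (po 0 k * (1 - X^(4*(k+1)))) = (qb m k * po 0 k) * (1 - X^(4*(k+1)))
          from by ring, h2]
      have hXe : (X:Polynomial ℤ)^(4*(k+1)) * X^(4*(m-k)) = X^(4*(m+1)) := by
        rw [← pow_add]; congr 1; omega
      linear_combination (po (m-k) k) * hXe
  · rw [qb_eq_zero (m+1) (k+1) (by omega), qb_eq_zero m (k+1) (by omega),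
      qb_eq_zero m k (by omega)]
    ring

/-! ### The theta sums -/

noncomputable def SS (h m : ℕ) : Polynomial ℤ :=
  ∑ k ∈ range (m+1), (-1:Polynomial ℤ)^(k + h) * X^(Ee ((k:ℤ) - (h:ℤ))) * qb m k

lemma step_even (n : ℕ) : SS (n+1) (2*n+1) = (1 - X^(4*n+1)) * SS n (2*n) := by
  unfold SS
  rw [show (2*n+1)+1 = (2*n+1)+1 from rfl, sum_range_succ']
  have hterm : ∀ k ∈ range (2*n+1),
      (-1:Polynomial ℤ)^((k+1) + (n+1)) * X^(Ee (((k+1:ℕ):ℤ) - ((n+1:ℕ):ℤ))) * qb (2*n+1) (k+1)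
      = (-1:Polynomial ℤ)^(k + n) * X^(Ee ((k:ℤ) - ((n:ℕ):ℤ))) * qb (2*n) k
        - X^(4*n+1) * ((-1:Polynomial ℤ)^((k+1) + n) * X^(Ee (((k+1:ℕ):ℤ) - ((n:ℕ):ℤ))) * qb (2*n) (k+1)) := by
    intro k hk
    rw [qb_pascal2]
    have hsgn : (-1:Polynomial ℤ)^((k+1)+(n+1)) = (-1:Polynomial ℤ)^(k+n) := by
      rw [show (k+1)+(n+1) = (k+n)+2 by ring, pow_add]; norm_num
    have harg : ((k+1:ℕ):ℤ) - ((n+1:ℕ):ℤ) = (k:ℤ) - ((n:ℕ):ℤ) := by push_cast; ring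
    have hexp : (4*n+1) + Ee (((k+1:ℕ):ℤ) - ((n:ℕ):ℤ)) = Ee ((k:ℤ) - ((n:ℕ):ℤ)) + 4*(k+1) := by
      have h1 := Ee_cast (((k+1:ℕ):ℤ) - ((n:ℕ):ℤ))
      have h2 := Ee_cast ((k:ℤ) - ((n:ℕ):ℤ))
      have h3 : (((4*n+1) + Ee (((k+1:ℕ):ℤ) - ((n:ℕ):ℤ)) : ℕ) : ℤ)
          = ((Ee ((k:ℤ) - ((n:ℕ):ℤ)) + 4*(k+1) : ℕ) : ℤ) := by
        push_cast [Ee_cast]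
        ring
      exact_mod_cast h3
    have hX : (X:Polynomial ℤ)^(Ee ((k:ℤ) - ((n:ℕ):ℤ))) * X^(4*(k+1))
        = X^(4*n+1) * X^(Ee (((k+1:ℕ):ℤ) - ((n:ℕ):ℤ))) := by
      rw [← pow_add, ← pow_add, ← hexp]
    have hsgn2 : (-1:Polynomial ℤ)^((k+1)+n) = -(-1:Polynomial ℤ)^(k+n) := by
      rw [show (k+1)+n = (k+n)+1 by ring, pow_succ]; ring
    rw [hsgn, harg, hsgn2]
    linear_combination ((-1:Polynomial ℤ)^(k+n) * qb (2*n) (k+1)) * hX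
  rw [sum_congr rfl hterm, sum_sub_distrib, ← mul_sum]
  set f : ℕ → Polynomial ℤ :=
    fun k => (-1:Polynomial ℤ)^(k + n) * X^(Ee ((k:ℤ) - ((n:ℕ):ℤ))) * qb (2*n) k with hf
  have hs1 := sum_range_succ' f (2*n+1)
  have hs2 := sum_range_succ f (2*n+1)
  have hshift : ∑ k ∈ range (2*n+1), f (k+1)
      = ∑ k ∈ range (2*n+1), f k + f (2*n+1) - f 0 := by
    have := hs1.symm.trans hs2
    linear_combination this
  rw [hshift]
  have hzero : f (2*n+1) = 0 := by
    rw [hf]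
    simp only []
    rw [qb_eq_zero (2*n) (2*n+1) (by omega)]
    ring
  rw [hzero]
  have hcancel : X^(4*n+1) * f 0
      + (-1:Polynomial ℤ)^(0 + (n+1)) * X^(Ee (((0:ℕ):ℤ) - ((n+1:ℕ):ℤ))) * qb (2*n+1) 0 = 0 := by
    rw [hf]
    simp only []
    rw [qb_zero_right, qb_zero_right]
    have hXfin : (X:Polynomial ℤ)^(4*n+1) * X^(Ee (((0:ℕ):ℤ) - ((n:ℕ):ℤ)))
        = X^(Ee (((0:ℕ):ℤ) - ((n+1:ℕ):ℤ))) := by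
      rw [← pow_add]
      congr 1
      have h1 := Ee_cast (((0:ℕ):ℤ) - ((n:ℕ):ℤ))
      have h2 := Ee_cast (((0:ℕ):ℤ) - ((n+1:ℕ):ℤ))
      have h3 : (((4*n+1) + Ee (((0:ℕ):ℤ) - ((n:ℕ):ℤ)) : ℕ) : ℤ)
          = ((Ee (((0:ℕ):ℤ) - ((n+1:ℕ):ℤ)) : ℕ) : ℤ) := by
        push_cast [Ee_cast]
        ring
      exact_mod_cast h3
    have hsgn3 : (-1:Polynomial ℤ)^(0+(n+1)) = -(-1:Polynomial ℤ)^(0+n) := by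
      rw [show 0+(n+1) = (0+n)+1 by ring, pow_succ]; ring
    rw [hsgn3]
    linear_combination ((-1:Polynomial ℤ)^(0+n)) * hXfin
  linear_combination hcancel

lemma step_odd (n : ℕ) : SS (n+1) (2*n+2) = (1 - X^(4*n+3)) * SS (n+1) (2*n+1) := by
  unfold SS
  rw [show (2*n+2)+1 = (2*n+2)+1 from rfl, sum_range_succ']
  have hterm : ∀ k ∈ range (2*n+2),
      (-1:Polynomial ℤ)^((k+1) + (n+1)) * X^(Ee (((k+1:ℕ):ℤ) - ((n+1:ℕ):ℤ))) * qb (2*n+2) (k+1)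
      = (-1:Polynomial ℤ)^((k+1) + (n+1)) * X^(Ee (((k+1:ℕ):ℤ) - ((n+1:ℕ):ℤ))) * qb (2*n+1) (k+1)
        - X^(4*n+3) * ((-1:Polynomial ℤ)^(k + (n+1)) * X^(Ee ((k:ℤ) - ((n+1:ℕ):ℤ))) * qb (2*n+1) k) := by
    intro k hk
    have hk' : k ≤ 2*n+1 := by
      have := mem_range.mp hk; omega
    rw [show (2*n+2) = (2*n+1)+1 from by ring, qb_pascal1 (2*n+1) k]
    have harg : ((k+1:ℕ):ℤ) - ((n+1:ℕ):ℤ) = (k:ℤ) - ((n:ℕ):ℤ) := by push_cast; ring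
    have hexp : Ee (((k+1:ℕ):ℤ) - ((n+1:ℕ):ℤ)) + 4*((2*n+1)-k)
        = (4*n+3) + Ee ((k:ℤ) - ((n+1:ℕ):ℤ)) := by
      have h1 := Ee_cast (((k+1:ℕ):ℤ) - ((n+1:ℕ):ℤ))
      have h2 := Ee_cast ((k:ℤ) - ((n+1:ℕ):ℤ))
      have h3 : ((Ee (((k+1:ℕ):ℤ) - ((n+1:ℕ):ℤ)) + 4*((2*n+1)-k) : ℕ) : ℤ)
          = (((4*n+3) + Ee ((k:ℤ) - ((n+1:ℕ):ℤ)) : ℕ) : ℤ) := by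
        push_cast [Nat.cast_sub hk', Ee_cast]
        ring
      exact_mod_cast h3
    have hX : (X:Polynomial ℤ)^(Ee (((k+1:ℕ):ℤ) - ((n+1:ℕ):ℤ))) * X^(4*((2*n+1)-k))
        = X^(4*n+3) * X^(Ee ((k:ℤ) - ((n+1:ℕ):ℤ))) := by
      rw [← pow_add, ← pow_add, hexp]
    have hsgn2 : (-1:Polynomial ℤ)^((k+1)+(n+1)) = -(-1:Polynomial ℤ)^(k+(n+1)) := by
      rw [show (k+1)+(n+1) = (k+(n+1))+1 by ring, pow_succ]; ring
    rw [hsgn2]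
    linear_combination (-(-1:Polynomial ℤ)^(k+(n+1)) * qb (2*n+1) k) * hX
  rw [sum_congr rfl hterm, sum_sub_distrib, ← mul_sum]
  set f : ℕ → Polynomial ℤ :=
    fun k => (-1:Polynomial ℤ)^(k + (n+1)) * X^(Ee ((k:ℤ) - ((n+1:ℕ):ℤ))) * qb (2*n+1) k with hf
  have hs1 := sum_range_succ' f (2*n+2)
  have hs2 := sum_range_succ f (2*n+2)
  have hshift : ∑ k ∈ range (2*n+2), f (k+1)
      = ∑ k ∈ range (2*n+2), f k + f (2*n+2) - f 0 := by
    have := hs1.symm.trans hs2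
    linear_combination this
  rw [hshift]
  have hzero : f (2*n+2) = 0 := by
    rw [hf]
    simp only []
    rw [qb_eq_zero (2*n+1) (2*n+2) (by omega)]
    ring
  rw [hzero]
  have hzz : f 0 = (-1:Polynomial ℤ)^(0 + (n+1)) * X^(Ee (((0:ℕ):ℤ) - ((n+1:ℕ):ℤ))) * qb (2*n+2) 0 := by
    rw [hf]
    simp only []
    rw [qb_zero_right, qb_zero_right]
  rw [hzz]
  linear_combination


/-! ### products -/

noncomputable def Gg (m : ℕ) : Polynomial ℤ := ∏ j ∈ range m, (1 - X^(2*j+1))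

lemma Gg_succ (m : ℕ) : Gg (m+1) = Gg m * (1 - X^(2*m+1)) := prod_range_succ _ _

noncomputable def Th (M : ℕ) : Polynomial ℤ :=
  ∑ k ∈ range (2*M+1), (-1:Polynomial ℤ)^(k+M) * X^(Ee ((k:ℤ) - (M:ℤ)))

noncomputable def Phi (K : ℕ) : Polynomial ℤ := ∏ k ∈ range K, (1 - X^(k+1))

lemma Phi_succ (K : ℕ) : Phi (K+1) = Phi K * (1 - X^(K+1)) := prod_range_succ _ _

noncomputable def Em (M : ℕ) : Polynomial ℤ := ∏ i ∈ range M, (1 - X^(4*i+2))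

lemma Em_succ (M : ℕ) : Em (M+1) = Em M * (1 - X^(4*M+2)) := prod_range_succ _ _

lemma SS_zero : SS 0 0 = 1 := by
  unfold SS
  rw [sum_range_one]
  norm_num [Ee, qb]

lemma SS_eq_Gg : ∀ m, SS ((m+1)/2) m = Gg m := by
  intro m
  induction m with
  | zero => rw [show (0+1)/2 = 0 from rfl, SS_zero]; simp [Gg]
  | succ m ih =>
    rcases Nat.even_or_odd m with ⟨t, ht⟩ | ⟨t, ht⟩
    · have h2 : m = 2*t := by omega
      subst h2
      rw [show (2*t+1+1)/2 = t+1 from by omega, step_even t]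
      rw [show (2*t+1)/2 = t from by omega] at ih
      have hGg : Gg (2*t+1) = Gg (2*t) * (1 - X^(4*t+1)) := by
        rw [show 2*t+1 = (2*t)+1 from rfl, Gg_succ, show 2*(2*t)+1 = 4*t+1 from by ring]
      rw [ih, hGg]
      ring
    · have h2 : m = 2*t+1 := by omega
      subst h2
      rw [show (2*t+1+1+1)/2 = t+1 from by omega, show (2*t+1)+1 = 2*t+2 from rfl, step_odd t]
      rw [show (2*t+1+1)/2 = t+1 from by omega] at ih
      have hGg : Gg (2*t+2) = Gg (2*t+1) * (1 - X^(4*t+3)) := by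
        rw [show 2*t+2 = (2*t+1)+1 from rfl, Gg_succ, show 2*(2*t+1)+1 = 4*t+3 from by ring]
      rw [ih, hGg]
      ring

lemma prod_merge : ∀ M, Gg (2*M) * po 0 M * Em M = Phi (4*M) := by
  intro M
  induction M with
  | zero => simp [Gg, po, Em, Phi]
  | succ M ih =>
    have hg : Gg (2*(M+1)) = Gg (2*M) * (1 - X^(4*M+1)) * (1 - X^(4*M+3)) := by
      rw [show 2*(M+1) = (2*M+1)+1 from by ring, Gg_succ, Gg_succ,
        show 2*(2*M)+1 = 4*M+1 from by ring, show 2*(2*M+1)+1 = 4*M+3 from by ring]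
    have hpo : po 0 (M+1) = po 0 M * (1 - X^(4*M+4)) := by
      rw [po_top, show 4*(0+M+1) = 4*M+4 from by ring]
    have hphi : Phi (4*(M+1)) = Phi (4*M) * (1 - X^(4*M+1)) * (1 - X^(4*M+2))
        * (1 - X^(4*M+3)) * (1 - X^(4*M+4)) := by
      rw [show 4*(M+1) = (4*M+3)+1 from by ring, Phi_succ,
        show 4*M+3 = (4*M+2)+1 from rfl, Phi_succ,
        show 4*M+2 = (4*M+1)+1 from rfl, Phi_succ,
        show 4*M+1 = (4*M)+1 from rfl, Phi_succ]
    rw [hg, hpo, Em_succ, hphi, ← ih]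
    ring

/-! ### divisibility estimates -/

lemma po_sub_one (a l : ℕ) : (X:Polynomial ℤ)^(4*(a+1)) ∣ (po a l - 1) := by
  induction l with
  | zero => rw [po_zero]; simp
  | succ l ih =>
    have h : po a (l+1) - 1 = (po a l - 1) - po a l * X^(4*(a+l+1)) := by
      rw [po_top]; ring
    rw [h]
    exact dvd_sub ih (Dvd.dvd.mul_left (dvd_trans (pow_dvd_pow X (by omega)) (dvd_refl _)) _)

lemma qbpo_sub_one (M k : ℕ) (hk : k ≤ 2*M) :
    (X:Polynomial ℤ)^(4*(min k (2*M-k) + 1)) ∣ (qb (2*M) k * po 0 M - 1) := by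
  rcases le_or_gt k M with hkM | hkM
  · rw [min_eq_left (by omega : k ≤ 2*M-k)]
    have hsplit : po 0 M = po 0 k * po k (M-k) := by
      have h := po_split 0 k (M-k)
      rw [show k+(M-k) = M from by omega, zero_add] at h
      exact h
    have h1 : qb (2*M) k * po 0 M = po (2*M-k) k * po k (M-k) := by
      rw [hsplit, ← mul_assoc, prodform (2*M) k (by omega)]
    rw [h1]
    have hkey : po (2*M-k) k * po k (M-k) - 1
        = (po (2*M-k) k - 1) * po k (M-k) + (po k (M-k) - 1) := by ring
    rw [hkey]
    refine dvd_add (Dvd.dvd.mul_right ?_ _) ?_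
    · exact dvd_trans (pow_dvd_pow X (by omega)) (po_sub_one (2*M-k) k)
    · exact po_sub_one k (M-k)
  · rw [min_eq_right (by omega : 2*M-k ≤ k)]
    have hsplit : po 0 k = po 0 M * po M (k-M) := by
      have h := po_split 0 M (k-M)
      rw [show M+(k-M) = k from by omega, zero_add] at h
      exact h
    have h2 : qb (2*M) k * po 0 M * po M (k-M) = po (2*M-k) k := by
      rw [mul_assoc, ← hsplit, prodform (2*M) k hk]
    have hkey : qb (2*M) k * po 0 M - 1
        = (po (2*M-k) k - 1) - (qb (2*M) k * po 0 M) * (po M (k-M) - 1) := by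
      linear_combination h2
    rw [hkey]
    refine dvd_sub (po_sub_one (2*M-k) k) (Dvd.dvd.mul_left ?_ _)
    exact dvd_trans (pow_dvd_pow X (by omega)) (po_sub_one M (k-M))

lemma key (N M : ℕ) (h4 : N + 1 ≤ 4*M) :
    (X:Polynomial ℤ)^(N+1) ∣ (SS M (2*M) * po 0 M - Th M) := by
  unfold SS Th
  rw [sum_mul, ← sum_sub_distrib]
  refine dvd_sum fun k hk => ?_
  have hk2M : k ≤ 2*M := by
    have := mem_range.mp hk; omega
  have harith : N + 1 ≤ Ee ((k:ℤ) - (M:ℤ)) + 4*(min k (2*M-k) + 1) := by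
    rcases le_or_gt k M with hkM | hkM
    · rw [min_eq_left (by omega : k ≤ 2*M-k)]
      set t : ℕ := M - k with htdef
      have htc : (k:ℤ) - (M:ℤ) = -(t:ℤ) := by push_cast; omega
      rw [htc]
      have hE := Ee_cast (-(t:ℤ))
      have hEz : (Ee (-(t:ℤ)) : ℤ) = 2*(t:ℤ)^2 - t := by rw [hE]; ring
      rcases le_or_gt t 1 with ht1 | ht1
      · have hk4 : N + 1 ≤ 4*(k+1) := by omega
        have h0 : 0 ≤ Ee (-(t:ℤ)) := Nat.zero_le _
        omega
      · have h1 : (2:ℤ) ≤ (t:ℤ) := by exact_mod_cast ht1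
        have hq : (0:ℤ) ≤ (2*(t:ℤ)-3) * ((t:ℤ)-1) := by nlinarith
        have hkt : (k:ℤ) = (M:ℤ) - t := by push_cast; omega
        have h4' : ((N:ℤ)+1) ≤ 4*(M:ℤ) := by exact_mod_cast h4
        have hZ : ((N:ℤ)+1) ≤ (Ee (-(t:ℤ)) : ℤ) + 4*((k:ℤ)+1) := by
          rw [hEz, hkt]; nlinarith
        exact_mod_cast hZ
    · rw [min_eq_right (by omega : 2*M-k ≤ k)]
      set t : ℕ := k - M with htdef
      have ht1 : 1 ≤ t := by omega
      have htc : (k:ℤ) - (M:ℤ) = (t:ℤ) := by push_cast; omega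
      rw [htc, show 2*M-k = M-t from by omega]
      have hE := Ee_cast ((t:ℤ))
      have hEz : (Ee ((t:ℤ)) : ℤ) = 2*(t:ℤ)^2 + t := by rw [hE]; ring
      have h1 : (1:ℤ) ≤ (t:ℤ) := by exact_mod_cast ht1
      have hq : (0:ℤ) ≤ (2*(t:ℤ)-1) * ((t:ℤ)-1) := by nlinarith
      have hmt : (t:ℕ) ≤ M := by omega
      have hcast : ((M - t : ℕ) : ℤ) = (M:ℤ) - t := by push_cast [Nat.cast_sub hmt]; ring
      have h4' : ((N:ℤ)+1) ≤ 4*(M:ℤ) := by exact_mod_cast h4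
      have hfin : ((N:ℤ)+1) ≤ (Ee ((t:ℤ)) : ℤ) + 4*(((M - t : ℕ)):ℤ) + 4 := by
        rw [hEz, hcast]; nlinarith
      have hN : N + 1 ≤ Ee ((t:ℤ)) + 4*(M-t) + 4 := by exact_mod_cast hfin
      omega
  obtain ⟨w, hw⟩ := qbpo_sub_one M k hk2M
  have hterm : (-1:Polynomial ℤ)^(k+M) * X^(Ee ((k:ℤ) - (M:ℤ))) * qb (2*M) k * po 0 M
      - (-1:Polynomial ℤ)^(k+M) * X^(Ee ((k:ℤ) - (M:ℤ)))
      = (-1:Polynomial ℤ)^(k+M) * X^(Ee ((k:ℤ) - (M:ℤ))) * (qb (2*M) k * po 0 M - 1) := by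
    ring
  rw [hterm, hw]
  have : (-1:Polynomial ℤ)^(k+M) * X^(Ee ((k:ℤ) - (M:ℤ)))
      * (X^(4*(min k (2*M-k) + 1)) * w)
      = X^(Ee ((k:ℤ) - (M:ℤ)) + 4*(min k (2*M-k) + 1)) * ((-1:Polynomial ℤ)^(k+M) * w) := by
    rw [pow_add]
    ring
  rw [this]
  exact Dvd.dvd.mul_right (pow_dvd_pow X harith) _

/-! ### DP generating polynomials -/

def s2 : ℕ → Bool := fun k => k % 4 == 2

noncomputable def dpoly (s : ℕ → Bool) (K N : ℕ) : Polynomial ℤ :=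
  ∑ t ∈ range (N+1), Polynomial.C ((dp s K t : ℤ)) * X^t

noncomputable def prodS (s : ℕ → Bool) (K : ℕ) : Polynomial ℤ :=
  ∏ k ∈ range K, (if s (k+1) then 1 - X^(k+1) else 1)

lemma dp_zero_zero (s : ℕ → Bool) : dp s 0 0 = 1 := by rw [dp]
lemma dp_zero_succ (s : ℕ → Bool) (t : ℕ) : dp s 0 (t+1) = 0 := by rw [dp]

lemma dpoly_zero (s : ℕ → Bool) (N : ℕ) : dpoly s 0 N = 1 := by
  unfold dpoly
  rw [Finset.sum_eq_single 0]
  · rw [dp_zero_zero]; simp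
  · intro t ht hne
    match t, hne with
    | (u+1), _ => rw [dp_zero_succ]; simp
  · intro h; exact absurd (mem_range.mpr (by omega)) h

lemma dp_main (s : ℕ → Bool) (N : ℕ) :
    ∀ K, (X:Polynomial ℤ)^(N+1) ∣ (prodS s K * dpoly s K N - 1) := by
  intro K
  induction K with
  | zero =>
    rw [dpoly_zero]
    unfold prodS
    simp
  | succ K ih =>
    have hprod : prodS s (K+1) = prodS s K * (if s (K+1) then 1 - X^(K+1) else 1) :=
      prod_range_succ _ _
    by_cases hs : s (K+1)
    · have hstep : (X:Polynomial ℤ)^(N+1) ∣ ((1 - X^(K+1)) * dpoly s (K+1) N - dpoly s K N) := by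
        have hdp : ∀ t, ((dp s (K+1) t : ℤ)) - (dp s K t : ℤ)
            = if K+1 ≤ t then ((dp s (K+1) (t-(K+1)) : ℤ)) else 0 := by
          intro t
          rw [dp_succ]
          split
          · next hc => rw [if_pos hc.2]; push_cast; ring
          · next hc =>
            rw [if_neg (fun h => hc ⟨hs, h⟩)]
            push_cast; ring
        have hAB : dpoly s (K+1) N - dpoly s K N
            = ∑ t ∈ (range (N+1)).filter (fun t => K+1 ≤ t),
                Polynomial.C ((dp s (K+1) (t-(K+1)) : ℤ)) * X^t := by
          unfold dpoly
          rw [← sum_sub_distrib, sum_filter]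
          refine sum_congr rfl fun t ht => ?_
          have h1 : Polynomial.C ((dp s (K+1) t : ℤ)) * X^t - Polynomial.C ((dp s K t : ℤ)) * X^t
              = Polynomial.C ((dp s (K+1) t : ℤ) - (dp s K t : ℤ)) * X^t := by
            rw [map_sub]; ring
          rw [h1, hdp t]
          split
          · rfl
          · simp
        have hXA : X^(K+1) * dpoly s (K+1) N
            = ∑ t ∈ range (N+1), Polynomial.C ((dp s (K+1) t : ℤ)) * X^(t+(K+1)) := by
          unfold dpoly
          rw [mul_sum]
          refine sum_congr rfl fun t ht => ?_
          rw [pow_add]; ring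
        have hkey2 : (1 - X^(K+1)) * dpoly s (K+1) N - dpoly s K N
            = (dpoly s (K+1) N - dpoly s K N) - X^(K+1) * dpoly s (K+1) N := by ring
        rw [hkey2, hAB, hXA]
        have hbij : ∑ t ∈ (range (N+1)).filter (fun t => K+1 ≤ t),
                Polynomial.C ((dp s (K+1) (t-(K+1)) : ℤ)) * X^t
            = ∑ t ∈ (range (N+1)).filter (fun t => t+(K+1) ≤ N),
                Polynomial.C ((dp s (K+1) t : ℤ)) * X^(t+(K+1)) := by
          refine sum_nbij' (fun t => t - (K+1)) (fun t => t + (K+1)) ?_ ?_ ?_ ?_ ?_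
          · intro a ha; simp only [mem_filter, mem_range] at ha ⊢; omega
          · intro a ha; simp only [mem_filter, mem_range] at ha ⊢; omega
          · intro a ha; simp only [mem_filter, mem_range] at ha; omega
          · intro a ha; simp only [mem_filter, mem_range] at ha; omega
          · intro a ha
            simp only [mem_filter, mem_range] at ha
            rw [show a - (K+1) + (K+1) = a from by omega]
        rw [hbij, ← sum_filter_add_sum_filter_not (range (N+1)) (fun t => t+(K+1) ≤ N)
          (fun t => Polynomial.C ((dp s (K+1) t : ℤ)) * X^(t+(K+1))), sub_add_cancel_left]
        rw [dvd_neg]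
        refine dvd_sum fun t ht => ?_
        simp only [mem_filter, mem_range] at ht
        exact Dvd.dvd.mul_left (pow_dvd_pow X (by omega)) _
      have hfinal : prodS s (K+1) * dpoly s (K+1) N - 1
          = prodS s K * ((1 - X^(K+1)) * dpoly s (K+1) N - dpoly s K N)
            + (prodS s K * dpoly s K N - 1) := by
        rw [hprod, if_pos hs]; ring
      rw [hfinal]
      exact dvd_add (Dvd.dvd.mul_left hstep _) ih
    · have hdpoly : dpoly s (K+1) N = dpoly s K N := by
        unfold dpoly
        refine sum_congr rfl fun t ht => ?_
        rw [dp_succ, if_neg (fun hc => hs hc.1)]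
        norm_num
      rw [hprod, if_neg hs, mul_one, hdpoly]
      exact ih

lemma prodS_strue (K : ℕ) : prodS (fun _ => true) K = Phi K := by
  unfold prodS Phi
  simp

lemma prodS_s2 : ∀ M, prodS s2 (4*M) = Em M := by
  intro M
  induction M with
  | zero => simp [prodS, Em]
  | succ M ih =>
    have c1 : ¬ (s2 (4*M+0+1) = true) := by simp [s2]
    have c2 : (s2 (4*M+1+1) = true) := by simp [s2]; omega
    have c3 : ¬ (s2 (4*M+2+1) = true) := by simp [s2]; omega
    have c4 : ¬ (s2 (4*M+3+1) = true) := by simp [s2]; omega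
    unfold prodS
    rw [show 4*(M+1) = (((4*M+1)+1)+1)+1 from by ring,
      prod_range_succ, prod_range_succ, prod_range_succ, prod_range_succ]
    rw [show (4*M+1)+1+1+1 = 4*M+3+1 from by ring, show (4*M+1)+1+1 = 4*M+2+1 from by ring,
      show (4*M+1)+1 = 4*M+1+1 from by ring, show (4*M+1) = 4*M+0+1 from by ring]
    rw [if_neg c1, if_pos c2, if_neg c3, if_neg c4]
    have : ∏ k ∈ range (4*M), (if s2 (k+1) = true then 1 - X^(k+1) else 1) = Em M := ih
    rw [this, Em_succ, show 4*M+0+1+1 = 4*M+2 from by ring]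
    ring

/-- The crux: the truncated theta-convolution identity. -/
lemma crux (n : ℤ) (hn : 0 ≤ n) (M : ℕ) (hM : n.toNat + 1 ≤ M) :
    ∃ c : ℕ, Aa n M = (c : ℤ) ∧ (n % 2 = 1 → c = 0) := by
  classical
  set N := n.toNat with hN
  have hnN : n = (N:ℤ) := (Int.toNat_of_nonneg hn).symm
  refine ⟨dp s2 (4*M) N, ?_, ?_⟩
  case refine_2 =>
    intro hodd
    refine dp_odd s2 (fun k hk => ?_) (4*M) N ?_
    · simp [s2] at hk; omega
    · omega
  have h4 : N + 1 ≤ 4*M := by omega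
  have d1 := key N M h4
  have d2 : SS M (2*M) = Gg (2*M) := by
    have h := SS_eq_Gg (2*M)
    rw [show (2*M+1)/2 = M from by omega] at h
    exact h
  have d3 := prod_merge M
  have d4 : (X:Polynomial ℤ)^(N+1) ∣ (Phi (4*M) * dpoly (fun _ => true) (4*M) N - 1) := by
    have h := dp_main (fun _ => true) N (4*M)
    rwa [prodS_strue] at h
  have d5 : (X:Polynomial ℤ)^(N+1) ∣ (Em M * dpoly s2 (4*M) N - 1) := by
    have h := dp_main s2 N (4*M)
    rwa [prodS_s2] at h
  set P := dpoly (fun _ => true) (4*M) N with hPdef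
  set Cq := dpoly s2 (4*M) N with hCqdef
  have d6 : (X:Polynomial ℤ)^(N+1) ∣ (Th M * P - Cq) := by
    have hid : Th M * P - Cq
        = -((SS M (2*M) * po 0 M - Th M) * P)
          - (SS M (2*M) * po 0 M * P) * (Em M * Cq - 1)
          + Cq * (Phi (4*M) * P - 1) := by
      rw [d2, ← d3]; ring
    rw [hid]
    exact dvd_add (dvd_sub (dvd_neg.mpr (Dvd.dvd.mul_right d1 P)) (Dvd.dvd.mul_left d5 _))
      (Dvd.dvd.mul_left d4 _)
  obtain ⟨g, hg⟩ := d6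
  have hcoeff : (Th M * P).coeff N = Cq.coeff N := by
    have h1 : Th M * P = Cq + X^(N+1) * g := by linear_combination hg
    rw [h1, Polynomial.coeff_add, mul_comm ((X:Polynomial ℤ)^(N+1)) g,
      Polynomial.coeff_mul_X_pow', if_neg (by omega)]
    ring
  have hCq : Cq.coeff N = ((dp s2 (4*M) N : ℤ)) := by
    rw [hCqdef]
    unfold dpoly
    rw [finset_sum_coeff, Finset.sum_eq_single N]
    · rw [Polynomial.coeff_C_mul, Polynomial.coeff_X_pow, if_pos rfl, mul_one]
    · intro t ht hne
      rw [Polynomial.coeff_C_mul, Polynomial.coeff_X_pow, if_neg (fun h => hne h.symm), mul_zero]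
    · intro h; exact absurd (mem_range.mpr (by omega)) h
  have hP : ∀ u : ℕ, u ≤ N → P.coeff u = (pcard u : ℤ) := by
    intro u hu
    rw [hPdef]
    unfold dpoly
    rw [finset_sum_coeff, Finset.sum_eq_single u]
    · rw [Polynomial.coeff_C_mul, Polynomial.coeff_X_pow, if_pos rfl, mul_one,
        dp_true_eq_pc, pc_big (by omega)]
    · intro t ht hne
      rw [Polynomial.coeff_C_mul, Polynomial.coeff_X_pow, if_neg (fun h => hne h.symm), mul_zero]
    · intro h; exact absurd (mem_range.mpr (by omega)) h
  have hThP : (Th M * P).coeff N = Aa n M := by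
    unfold Th Aa
    rw [sum_mul, finset_sum_coeff]
    refine sum_congr rfl fun k hk => ?_
    have hCpow : ((-1:Polynomial ℤ))^(k+M) = Polynomial.C ((-1:ℤ)^(k+M)) := by
      rw [map_pow, map_neg, map_one]
    rw [hCpow, mul_assoc, Polynomial.coeff_C_mul,
      mul_comm ((X:Polynomial ℤ)^(Ee ((k:ℤ) - (M:ℤ)))) P, Polynomial.coeff_mul_X_pow']
    rcases le_or_gt (Ee ((k:ℤ) - (M:ℤ))) N with hEN | hEN
    · rw [if_pos hEN, hP _ (by omega)]
      have hnonneg : 0 ≤ n - (Ee ((k:ℤ) - (M:ℤ)) : ℤ) := by omega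
      rw [p_of_nonneg hnonneg]
      have htn : (n - (Ee ((k:ℤ) - (M:ℤ)) : ℤ)).toNat = N - Ee ((k:ℤ) - (M:ℤ)) := by omega
      rw [htn]
    · rw [if_neg (by omega)]
      have hneg : n - (Ee ((k:ℤ) - (M:ℤ)) : ℤ) < 0 := by omega
      rw [p_of_neg hneg, mul_zero]
  rw [← hThP, hcoeff, hCq]


end Stmt12


/-- For `n` odd or `ν` even (`ν ≥ 1`):
`(-1)^(ν-1) Σ_{τ=0}^{ν-1} (-1)^τ (p(n−τ(2τ+1)) − p(n−(τ+1)(2τ+1))) ≤ p(n−ν(2ν+1))`,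
strictly if `n > ν(2ν+3)`. -/
theorem stmt12 (ν : ℕ) (hν : 1 ≤ ν) (n : ℤ) (h : Odd n ∨ Even ν) :
    (-1 : ℤ) ^ (ν - 1) *
        ∑ τ ∈ Finset.range ν, (-1 : ℤ) ^ τ *
          (p (n - (τ : ℤ) * (2 * τ + 1)) - p (n - ((τ : ℤ) + 1) * (2 * τ + 1))) ≤
      p (n - (ν : ℤ) * (2 * ν + 1)) ∧
      ((ν : ℤ) * (2 * ν + 3) < n →
        (-1 : ℤ) ^ (ν - 1) *
            ∑ τ ∈ Finset.range ν, (-1 : ℤ) ^ τ *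
              (p (n - (τ : ℤ) * (2 * τ + 1)) - p (n - ((τ : ℤ) + 1) * (2 * τ + 1))) <
          p (n - (ν : ℤ) * (2 * ν + 1))) := by
  classical
  open Stmt12 in
  -- rewrite the statement in terms of `Ff` and `Ee`
  have hsum : ∑ τ ∈ Finset.range ν, (-1 : ℤ) ^ τ *
      (p (n - (τ : ℤ) * (2 * τ + 1)) - p (n - ((τ : ℤ) + 1) * (2 * τ + 1))) = Stmt12.Ff n ν := by
    refine Finset.sum_congr rfl fun τ _ => ?_
    have h1 : ((Stmt12.Ee (τ:ℤ)) : ℤ) = (τ : ℤ) * (2 * τ + 1) := Stmt12.Ee_cast _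
    have h2 : ((Stmt12.Ee (-((τ:ℤ)+1))) : ℤ) = ((τ : ℤ) + 1) * (2 * τ + 1) := by
      rw [Stmt12.Ee_cast]; ring
    rw [← h1, ← h2]
  have hp : p (n - (ν : ℤ) * (2 * ν + 1)) = p (n - Stmt12.Ee (ν:ℤ)) := by
    rw [Stmt12.Ee_cast]
  rw [hsum, hp]
  have hpow' : (-1 : ℤ) ^ (ν - 1) * (-1) = (-1:ℤ)^ν := by
    rw [← pow_succ]; congr 1; omega
  have hpow : (-1 : ℤ) ^ (ν - 1) = -(-1:ℤ)^ν := by linarith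
  rw [hpow]
  -- it suffices to bound `Cc`
  suffices hC : 0 ≤ Stmt12.Cc n ν ∧ ((ν : ℤ) * (2 * ν + 3) < n → 0 < Stmt12.Cc n ν) by
    unfold Stmt12.Cc at hC
    constructor
    · linarith [hC.1]
    · intro hlt
      linarith [hC.2 hlt]
  rcases lt_or_ge n 0 with hneg | hpos
  · -- trivial case `n < 0`
    have hFf : Stmt12.Ff n ν = 0 := by
      apply Finset.sum_eq_zero
      intro τ _
      have z1 : p (n - Stmt12.Ee (τ:ℤ)) = 0 := Stmt12.p_of_neg (by
        have := Int.natCast_nonneg (Stmt12.Ee (τ:ℤ)); omega)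
      have z2 : p (n - Stmt12.Ee (-((τ:ℤ)+1))) = 0 := Stmt12.p_of_neg (by
        have := Int.natCast_nonneg (Stmt12.Ee (-((τ:ℤ)+1))); omega)
      rw [z1, z2]; ring
    have hpz : p (n - Stmt12.Ee (ν:ℤ)) = 0 := Stmt12.p_of_neg (by
      have := Int.natCast_nonneg (Stmt12.Ee (ν:ℤ)); omega)
    constructor
    · unfold Stmt12.Cc; rw [hFf, hpz]; simp
    · intro hlt
      exfalso
      have : (0:ℤ) ≤ (ν : ℤ) * (2 * ν + 3) := by positivity
      omega
  · -- main case `0 ≤ n`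
    set N := n.toNat with hN
    set ν₀ := ν + 2 + 2*N with hν₀
    obtain ⟨c, hc, hcodd⟩ := Stmt12.crux n hpos ν₀ (by omega)
    have hCbase : Stmt12.Cc n ν₀ = (-1:ℤ)^ν * c := by
      rw [Stmt12.Cc_eq, hc]
      congr 1
      rw [hν₀, show ν + 2 + 2*N = ν + 2*(1+N) by ring, pow_add, pow_mul]
      norm_num
    have hd : 0 ≤ Stmt12.Cc n ν₀ := by
      rw [hCbase]
      rcases h with hodd | heven
      · have : n % 2 = 1 := Int.odd_iff.mp hodd
        rw [hcodd this]; simp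
      · rw [heven.neg_one_pow]
        positivity
    have h2 : Stmt12.Cc n (ν+2) ≥ Stmt12.Cc n ν₀ := by
      have := Stmt12.Cc_ge0 n (ν+2) N
      rw [show ν+2+2*N = ν₀ by omega] at this
      exact this
    have hstep := Stmt12.Cc_step n ν
    have hBmono := Stmt12.Bb_mono n ν
    constructor
    · omega
    · intro hlt
      have hstrict : 0 < Stmt12.Bb n (ν+1) - Stmt12.Bb n (ν+2) := by
        apply Stmt12.Bb_strict
        have : ((Stmt12.Ee (-((ν+1:ℕ):ℤ))) : ℤ) = ((ν:ℤ)+1) * (2*ν+1) := by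
          rw [Stmt12.Ee_cast]; push_cast; ring
        rw [this]
        nlinarith [Int.natCast_nonneg ν]
      omega
end

section
/- As formal power series in q, for every ν ≥ 1: (1/(q;q)_∞)·( Σ_{τ=0}^ν (-1)^τ q^(τ(3τ+1)/2) − Σ_{τ=0}^{ν-1} (-1)^τ q^(τ(3τ+5)/2+1) ) = 1 + (-1)^ν q^(2+ν(3ν+7)/2) ((q²;q³)_∞/(q;q)_∞) Σ_{τ≥0} q^(τ(3ν+3τ+5))/((q³;q³)_τ (q²;q³)_{ν+τ+1}) + (-1)^ν q^(1+ν(3ν+5)/2) ((q;q³)_∞/(q;q)_∞) Σ_{τ≥0} q^(τ(3ν+3τ+4))/((q³;q³)_τ (q;q³)_{ν+τ+1}). -/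
open PowerSeries

/-- The infinite sum of a sequence of formal power series whose `τ`-th term has
`X`-order at least `τ`: the `k`-th coefficient is that of the partial sum of
the first `k+1` terms. -/
noncomputable def isum (f : ℕ → PowerSeries ℚ) : PowerSeries ℚ :=
  PowerSeries.mk fun k => PowerSeries.coeff k (∑ i ∈ Finset.range (k + 1), f i)

/-- The infinite product of a sequence of formal power series whose `n`-th factor
is `1 + O(X^(n+1))`: the `k`-th coefficient is that of the partial product of
the first `k+1` factors. -/
noncomputable def iprod (f : ℕ → PowerSeries ℚ) : PowerSeries ℚ :=
  PowerSeries.mk fun k => PowerSeries.coeff k (∏ i ∈ Finset.range (k + 1), f i)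

/-- The finite `q`-Pochhammer symbol `(q^a; q^m)_t = ∏_{i=0}^{t-1} (1 - q^(a+mi))`. -/
noncomputable def poch (a m t : ℕ) : PowerSeries ℚ :=
  ∏ i ∈ Finset.range t, (1 - (X : PowerSeries ℚ) ^ (a + m * i))

/-- The infinite `q`-Pochhammer symbol `(q^a; q^m)_∞ = ∏_{n≥0} (1 - q^(a+mn))` (`a ≥ 1`). -/
noncomputable def pochInf (a m : ℕ) : PowerSeries ℚ :=
  iprod fun n => 1 - (X : PowerSeries ℚ) ^ (a + m * n)

/-- The infinite `q`-Pochhammer symbol `(-q^a; q^m)_∞ = ∏_{n≥0} (1 + q^(a+mn))` (`a ≥ 1`). -/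
noncomputable def pochNegInf (a m : ℕ) : PowerSeries ℚ :=
  iprod fun n => 1 + (X : PowerSeries ℚ) ^ (a + m * n)

-- ## Infrastructure
lemma coeff_isum (f : ℕ → PowerSeries ℚ) (k : ℕ) :
    coeff k (isum f) = coeff k (∑ i ∈ Finset.range (k + 1), f i) := by
  rw [isum, coeff_mk]

lemma coeff_iprod (f : ℕ → PowerSeries ℚ) (k : ℕ) :
    coeff k (iprod f) = coeff k (∏ i ∈ Finset.range (k + 1), f i) := by
  rw [iprod, coeff_mk]

lemma ps_eq_of_forall_dvd {f g : PowerSeries ℚ} (h : ∀ k, (X:PowerSeries ℚ)^k ∣ f - g) : f = g := by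
  ext k
  have := (X_pow_dvd_iff.mp (h (k+1))) k (by omega)
  rw [map_sub] at this
  linarith [this]

lemma dvd_prod_sub_one {k : ℕ} {s : Finset ℕ} {f : ℕ → PowerSeries ℚ}
    (h : ∀ i ∈ s, (X:PowerSeries ℚ)^k ∣ f i - 1) :
    (X:PowerSeries ℚ)^k ∣ (∏ i ∈ s, f i) - 1 := by
  induction s using Finset.induction with
  | empty => simp
  | insert _ _ hni ih =>
    rename_i a s'
    rw [Finset.prod_insert hni]
    have h1 := h a (Finset.mem_insert_self a s')
    have h2 := ih (fun i hi => h i (Finset.mem_insert_of_mem hi))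
    have : f a * ∏ i ∈ s', f i - 1
        = (f a - 1) * ∏ i ∈ s', f i + ((∏ i ∈ s', f i) - 1) := by ring
    rw [this]
    exact dvd_add (Dvd.dvd.mul_right h1 _) h2

/-- key congruence for `isum`. -/
lemma isum_mod {f : ℕ → PowerSeries ℚ} (hf : ∀ τ, (X:PowerSeries ℚ)^τ ∣ f τ)
    {k K : ℕ} (hK : k ≤ K) :
    (X:PowerSeries ℚ)^k ∣ isum f - ∑ τ ∈ Finset.range K, f τ := by
  rw [X_pow_dvd_iff]
  intro j hj
  rw [map_sub, sub_eq_zero, coeff_isum]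
  have hs : ∑ τ ∈ Finset.range K, f τ
      = ∑ τ ∈ Finset.range (j+1), f τ + ∑ i ∈ Finset.range (K-(j+1)), f (j+1+i) := by
    conv_lhs => rw [show K = (j+1)+(K-(j+1)) by omega]
    rw [Finset.sum_range_add]
  rw [hs, map_add, left_eq_add, map_sum]
  apply Finset.sum_eq_zero
  intro i _
  exact X_pow_dvd_iff.mp (hf (j+1+i)) j (by omega)

lemma coeff_mul_of_dvd_sub_one {j k : ℕ} (hjk : j < k) {A B : PowerSeries ℚ}
    (hB : (X:PowerSeries ℚ)^k ∣ B - 1) : coeff j (A * B) = coeff j A := by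
  have : A * B = A + A * (B - 1) := by ring
  rw [this, map_add, add_eq_left]
  obtain ⟨c, hc⟩ := hB
  rw [hc, show A * (X^k * c) = X^k * (A*c) by ring]
  exact X_pow_dvd_iff.mp ⟨A*c, rfl⟩ j hjk

/-- key congruence for `iprod`. -/
lemma iprod_mod {f : ℕ → PowerSeries ℚ} (hf : ∀ n, (X:PowerSeries ℚ)^(n+1) ∣ f n - 1)
    {k K : ℕ} (hK : k ≤ K) :
    (X:PowerSeries ℚ)^k ∣ iprod f - ∏ n ∈ Finset.range K, f n := by
  rw [X_pow_dvd_iff]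
  intro j hj
  rw [map_sub, sub_eq_zero, coeff_iprod]
  have hs : ∏ n ∈ Finset.range K, f n
      = (∏ n ∈ Finset.range (j+1), f n) * ∏ i ∈ Finset.range (K-(j+1)), f (j+1+i) := by
    conv_lhs => rw [show K = (j+1)+(K-(j+1)) by omega]
    rw [Finset.prod_range_add]
  rw [hs, coeff_mul_of_dvd_sub_one (Nat.lt_succ_self j)]
  apply dvd_prod_sub_one
  intro i _
  exact dvd_trans (pow_dvd_pow _ (by omega)) (hf (j+1+i))

-- ## Pochhammer basics
lemma constCoeff_one_sub_X_pow {e : ℕ} (he : 1 ≤ e) :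
    constantCoeff (1 - (X:PowerSeries ℚ)^e) = 1 := by
  rw [map_sub, map_one, map_pow, constantCoeff_X, zero_pow (by omega), sub_zero]

lemma constCoeff_poch {a m t : ℕ} (ha : 1 ≤ a) : constantCoeff (poch a m t) = 1 := by
  rw [poch, map_prod]
  apply Finset.prod_eq_one
  intro i _
  exact constCoeff_one_sub_X_pow (by omega)

lemma poch_mul_inv {a m t : ℕ} (ha : 1 ≤ a) : poch a m t * (poch a m t)⁻¹ = 1 :=
  PowerSeries.mul_inv_cancel _ (by rw [constCoeff_poch ha]; norm_num)

lemma poch_ne_zero {a m t : ℕ} (ha : 1 ≤ a) : poch a m t ≠ 0 := by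
  intro h0
  have := poch_mul_inv (a := a) (m := m) (t := t) ha
  rw [h0, zero_mul] at this; norm_num at this

lemma ps_inv_mul_eq_one {A B : PowerSeries ℚ} (h : A * B = 1) : B = A⁻¹ := by
  have hA : constantCoeff A ≠ 0 := by
    intro h0
    have := congrArg (constantCoeff) h
    rw [map_mul, h0, zero_mul, map_one] at this
    norm_num at this
  exact (PowerSeries.eq_inv_iff_mul_eq_one hA).mpr (by rw [mul_comm]; exact h)

lemma ps_mul_inv_rev {A B : PowerSeries ℚ} (hA : A * A⁻¹ = 1) (hB : B * B⁻¹ = 1) :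
    (A * B)⁻¹ = A⁻¹ * B⁻¹ := by
  symm
  apply ps_inv_mul_eq_one
  calc A * B * (A⁻¹ * B⁻¹) = (A * A⁻¹) * (B * B⁻¹) := by ring
  _ = 1 := by rw [hA, hB, mul_one]

lemma poch_succ (a m t : ℕ) : poch a m (t+1) = poch a m t * (1 - (X:PowerSeries ℚ)^(a+m*t)) := by
  rw [poch, poch, Finset.prod_range_succ]

lemma poch_succ' (a m t : ℕ) : poch a m (t+1) = (1 - (X:PowerSeries ℚ)^a) * poch (a+m) m t := by
  rw [poch, Finset.prod_range_succ', poch, mul_comm]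
  congr 1
  apply Finset.prod_congr rfl
  intro i _
  have : a + m*(i+1) = (a+m) + m*i := by ring
  rw [this]

lemma poch_add (a m t s : ℕ) : poch a m (t+s) = poch a m t * poch (a+m*t) m s := by
  rw [poch, Finset.prod_range_add, poch, poch]
  congr 1
  apply Finset.prod_congr rfl
  intro i _
  have : a + m*(t+i) = (a+m*t) + m*i := by ring
  rw [this]

lemma poch_inv_step {μ : ℕ} :
    (poch 3 3 (μ+1))⁻¹ * (1 - (X:PowerSeries ℚ)^(3+3*μ)) = (poch 3 3 μ)⁻¹ := by
  have h1 : poch 3 3 (μ+1) * (poch 3 3 (μ+1))⁻¹ = 1 := poch_mul_inv (by norm_num)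
  have h2 : poch 3 3 μ * (poch 3 3 μ)⁻¹ = 1 := poch_mul_inv (by norm_num)
  apply mul_left_cancel₀ (poch_ne_zero (by norm_num) : poch 3 3 (μ+1) ≠ 0)
  calc poch 3 3 (μ+1) * ((poch 3 3 (μ+1))⁻¹ * (1 - (X:PowerSeries ℚ)^(3+3*μ)))
      = (poch 3 3 (μ+1) * (poch 3 3 (μ+1))⁻¹) * (1 - (X:PowerSeries ℚ)^(3+3*μ)) := by ring
  _ = 1 - (X:PowerSeries ℚ)^(3+3*μ) := by rw [h1, one_mul]
  _ = (poch 3 3 μ * (poch 3 3 μ)⁻¹) * (1 - (X:PowerSeries ℚ)^(3+3*μ)) := by rw [h2, one_mul]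
  _ = poch 3 3 (μ+1) * (poch 3 3 μ)⁻¹ := by rw [poch_succ]; ring

lemma pochInf_mod {a m : ℕ} (ha : 1 ≤ a) (hm : 1 ≤ m) {k K : ℕ} (hK : k ≤ K) :
    (X:PowerSeries ℚ)^k ∣ pochInf a m - poch a m K := by
  exact iprod_mod (fun n => by
    rw [show (1:PowerSeries ℚ) - X^(a+m*n) - 1 = -X^(a+m*n) by ring]
    exact dvd_neg.mpr (pow_dvd_pow _ (by nlinarith))) hK

lemma constCoeff_pochInf {a m : ℕ} (ha : 1 ≤ a) (hm : 1 ≤ m) :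
    constantCoeff (pochInf a m) = 1 := by
  have h := pochInf_mod ha hm (le_refl 1) (a := a) (m := m) (K := 1)
  have h0 := X_pow_dvd_iff.mp h 0 (by omega)
  rw [map_sub, sub_eq_zero] at h0
  have h2 : (coeff 0) (poch a m 1) = 1 := by
    rw [coeff_zero_eq_constantCoeff_apply, constCoeff_poch ha]
  rw [← coeff_zero_eq_constantCoeff_apply, h0, h2]

lemma pochInf_mul_inv {a m : ℕ} (ha : 1 ≤ a) (hm : 1 ≤ m) : pochInf a m * (pochInf a m)⁻¹ = 1 :=
  PowerSeries.mul_inv_cancel _ (by rw [constCoeff_pochInf ha hm]; norm_num)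

lemma pochInf_ne_zero {a m : ℕ} (ha : 1 ≤ a) (hm : 1 ≤ m) : pochInf a m ≠ 0 := by
  intro h0
  have := pochInf_mul_inv ha hm (a := a) (m := m)
  rw [h0, zero_mul] at this; norm_num at this

lemma pochInf_split {a m : ℕ} (t : ℕ) (ha : 1 ≤ a) (hm : 1 ≤ m) :
    pochInf a m = poch a m t * pochInf (a+m*t) m := by
  apply ps_eq_of_forall_dvd
  intro k
  have h1 := pochInf_mod ha hm (show k ≤ t+k by omega) (a := a) (m := m)
  have h2 := pochInf_mod (a := a+m*t) (m := m) (by omega) hm (le_refl k) (K := k)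
  have h3 : poch a m (t+k) = poch a m t * poch (a+m*t) m k := poch_add a m t k
  have : pochInf a m - poch a m t * pochInf (a+m*t) m
      = (pochInf a m - poch a m (t+k))
        - poch a m t * (pochInf (a+m*t) m - poch (a+m*t) m k) := by rw [h3]; ring
  rw [this]
  exact dvd_sub h1 (Dvd.dvd.mul_left h2 _)

lemma pochInf_peel {a m : ℕ} (ha : 1 ≤ a) (hm : 1 ≤ m) :
    pochInf a m = (1 - (X:PowerSeries ℚ)^a) * pochInf (a+m) m := by
  have h := pochInf_split 1 ha hm (a := a) (m := m)
  rw [show a+m*1 = a+m by ring] at h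
  rw [h, poch, Finset.prod_range_one]
  rw [show a+m*0 = a by ring]

lemma pochInf_sub_one {a m : ℕ} (ha : 1 ≤ a) (hm : 1 ≤ m) :
    (X:PowerSeries ℚ)^a ∣ pochInf a m - 1 := by
  have h1 := pochInf_mod ha hm (le_refl a) (a := a) (m := m) (K := a)
  have h2 : (X:PowerSeries ℚ)^a ∣ poch a m a - 1 := by
    apply dvd_prod_sub_one
    intro i _
    rw [show (1:PowerSeries ℚ) - X^(a+m*i) - 1 = -X^(a+m*i) by ring]
    exact dvd_neg.mpr (pow_dvd_pow _ (by omega))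
  have : pochInf a m - 1 = (pochInf a m - poch a m a) + (poch a m a - 1) := by ring
  rw [this]
  exact dvd_add h1 h2

-- ## Euler's identity
/-- `c2 m = m(m-1)/2`. -/
def c2 (m : ℕ) : ℕ := m*(m-1)/2

lemma two_mul_c2 (m : ℕ) : 2 * c2 m = m * (m-1) := by
  have h : 2 ∣ m * (m-1) := by
    rcases Nat.even_or_odd m with he | ho
    · exact Dvd.dvd.mul_right he.two_dvd _
    · rcases ho with ⟨s, hs⟩
      exact Dvd.dvd.mul_left (by omega : 2 ∣ m - 1) _
  rw [c2, Nat.mul_div_cancel' h]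

lemma c2_succ (m : ℕ) : c2 (m+1) = c2 m + m := by
  have h : (m+1)*((m+1)-1) = m*(m-1) + m*2 := by
    cases m with
    | zero => rfl
    | succ s =>
      simp only [Nat.add_sub_cancel]
      ring
  rw [c2, c2, h, Nat.add_mul_div_right _ _ (by norm_num : (0:ℕ) < 2)]

lemma c2_zero : c2 0 = 0 := rfl
lemma c2_one : c2 1 = 0 := rfl

/-- Euler series terms for `(X^b; X^3)_∞`. -/
noncomputable def eulT (b m : ℕ) : PowerSeries ℚ :=
  (-1 : PowerSeries ℚ)^m * X^(b*m+3*(c2 m)) * (poch 3 3 m)⁻¹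

lemma dvd_of_le_mul {τ e : ℕ} (h : τ ≤ e) (c g : PowerSeries ℚ) :
    (X:PowerSeries ℚ)^τ ∣ c * X^e * g := by
  have : c * X^e * g = X^e * (c * g) := by ring
  rw [this]
  exact Dvd.dvd.mul_right (pow_dvd_pow _ h) _

lemma eulT_dvd {b : ℕ} (hb : 1 ≤ b) (m : ℕ) : (X:PowerSeries ℚ)^m ∣ eulT b m :=
  dvd_of_le_mul (by nlinarith) _ _

lemma eulT_zero (b : ℕ) : eulT b 0 = 1 := by
  rw [eulT, c2_zero]
  norm_num
  rw [poch, Finset.prod_range_zero, ← ps_inv_mul_eq_one (mul_one 1)]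

/-- `eulS b = Σ_m (-1)^m X^(bm+3m(m-1)/2) / (X^3;X^3)_m`. -/
noncomputable def eulS (b : ℕ) : PowerSeries ℚ := isum (eulT b)

lemma eulS_sub_one {b : ℕ} (hb : 1 ≤ b) : (X:PowerSeries ℚ)^b ∣ eulS b - 1 := by
  rw [X_pow_dvd_iff]
  intro j hj
  rw [map_sub, sub_eq_zero, eulS, coeff_isum, Finset.sum_range_succ', eulT_zero, map_add]
  have : ∀ m ∈ Finset.range j, (coeff j) (eulT b (m+1)) = 0 := by
    intro m _
    exact X_pow_dvd_iff.mp (dvd_of_le_mul (τ := b) (by nlinarith [Nat.zero_le (c2 (m+1))]) _ _) j hj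
  rw [map_sum, Finset.sum_eq_zero this, zero_add]

lemma eulT_step {b μ : ℕ} :
    eulT b (μ+1) - eulT (b+3) (μ+1) = -(X^b * eulT (b+3) μ) := by
  rw [eulT, eulT, eulT, c2_succ]
  have h1 : (b+3)*(μ+1) + 3*(c2 μ + μ) = (b*(μ+1) + 3*(c2 μ + μ)) + 3*(μ+1) := by ring
  have h2 : (3:ℕ) + 3*μ = 3*(μ+1) := by ring
  have h3 := poch_inv_step (μ := μ)
  rw [h2] at h3
  calc (-1:PowerSeries ℚ)^(μ+1) * X^(b*(μ+1)+3*(c2 μ + μ)) * (poch 3 3 (μ+1))⁻¹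
      - (-1)^(μ+1) * X^((b+3)*(μ+1)+3*(c2 μ + μ)) * (poch 3 3 (μ+1))⁻¹
      = (-1)^(μ+1) * X^(b*(μ+1)+3*(c2 μ + μ)) * ((poch 3 3 (μ+1))⁻¹ * (1 - X^(3*(μ+1)))) := by
        rw [h1, pow_add]; ring
  _ = (-1)^(μ+1) * X^(b*(μ+1)+3*(c2 μ + μ)) * (poch 3 3 μ)⁻¹ := by rw [h3]
  _ = -(X^b * ((-1)^μ * X^((b+3)*μ+3*(c2 μ)) * (poch 3 3 μ)⁻¹)) := by
      rw [show b*(μ+1)+3*(c2 μ + μ) = b + ((b+3)*μ+3*(c2 μ)) by ring, pow_succ, pow_add]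
      ring

/-- Functional equation for the Euler series. -/
lemma eulS_fun {b : ℕ} (hb : 1 ≤ b) : eulS b = (1 - (X:PowerSeries ℚ)^b) * eulS (b+3) := by
  apply ps_eq_of_forall_dvd
  intro k
  rcases Nat.eq_zero_or_pos k with hk | hk
  · subst hk; simp
  have h1 := isum_mod (eulT_dvd hb) (le_refl k)
  have h2 := isum_mod (eulT_dvd (show 1 ≤ b+3 by omega)) (le_refl k)
  have key : (∑ m ∈ Finset.range k, eulT b m)
      - (1 - X^b) * (∑ m ∈ Finset.range k, eulT (b+3) m) = X^b * eulT (b+3) (k-1) := by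
    have hsplit : (∑ m ∈ Finset.range k, eulT b m) - (∑ m ∈ Finset.range k, eulT (b+3) m)
        = ∑ m ∈ Finset.range k, (eulT b m - eulT (b+3) m) := by rw [Finset.sum_sub_distrib]
    have hk1 : k = (k-1) + 1 := by omega
    have hshift : ∑ m ∈ Finset.range k, (eulT b m - eulT (b+3) m)
        = -(X^b * ∑ μ ∈ Finset.range (k-1), eulT (b+3) μ) := by
      rw [hk1, Finset.sum_range_succ']
      rw [eulT_zero, eulT_zero, sub_self, add_zero]
      rw [Finset.mul_sum, ← Finset.sum_neg_distrib]
      apply Finset.sum_congr rfl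
      intro μ _
      exact eulT_step
    have hlast : ∑ m ∈ Finset.range k, eulT (b+3) m
        = (∑ μ ∈ Finset.range (k-1), eulT (b+3) μ) + eulT (b+3) (k-1) := by
      conv_lhs => rw [hk1, Finset.sum_range_succ]
    calc (∑ m ∈ Finset.range k, eulT b m) - (1 - X^b) * (∑ m ∈ Finset.range k, eulT (b+3) m)
        = (∑ m ∈ Finset.range k, (eulT b m - eulT (b+3) m))
          + X^b * (∑ m ∈ Finset.range k, eulT (b+3) m) := by rw [← hsplit]; ring
    _ = X^b * eulT (b+3) (k-1) := by rw [hshift, hlast]; ring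
  have hd : (X:PowerSeries ℚ)^k ∣ X^b * eulT (b+3) (k-1) := by
    have := eulT_dvd (show 1 ≤ b+3 by omega) (k-1)
    obtain ⟨c, hc⟩ := this
    rw [hc, show (X:PowerSeries ℚ)^b * (X^(k-1)*c) = X^(b+(k-1)) * c by rw [pow_add]; ring]
    exact Dvd.dvd.mul_right (pow_dvd_pow _ (by omega)) _
  have hre : eulS b - (1 - X^b) * eulS (b+3)
      = ((eulS b - ∑ m ∈ Finset.range k, eulT b m)
        - (1-X^b) * (eulS (b+3) - ∑ m ∈ Finset.range k, eulT (b+3) m))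
        + ((∑ m ∈ Finset.range k, eulT b m)
            - (1 - X^b) * (∑ m ∈ Finset.range k, eulT (b+3) m)) := by ring
  rw [hre, key]
  exact dvd_add (dvd_sub h1 (Dvd.dvd.mul_left h2 _)) hd

/-- Euler's identity: `(X^b; X^3)_∞ = Σ_m (-1)^m X^(bm+3m(m-1)/2)/(X^3;X^3)_m`. -/
theorem euler_id {b : ℕ} (hb : 1 ≤ b) : pochInf b 3 = eulS b := by
  apply ps_eq_of_forall_dvd
  intro k
  have main : ∀ t, pochInf b 3 - eulS b
      = poch b 3 t * (pochInf (b+3*t) 3 - eulS (b+3*t)) := by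
    intro t
    induction t with
    | zero => simp [poch]
    | succ s ih =>
      rw [ih, eulS_fun (show 1 ≤ b+3*s by omega), pochInf_peel (by omega) (by norm_num),
        poch_succ]
      rw [show b+3*s+3 = b+3*(s+1) by ring]
      ring
  rw [main k]
  have hd : (X:PowerSeries ℚ)^k ∣ pochInf (b+3*k) 3 - eulS (b+3*k) := by
    have h1 := pochInf_sub_one (show 1 ≤ b+3*k by omega) (show (1:ℕ) ≤ 3 by norm_num)
    have h2 := eulS_sub_one (show 1 ≤ b+3*k by omega)
    have : pochInf (b+3*k) 3 - eulS (b+3*k)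
        = (pochInf (b+3*k) 3 - 1) - (eulS (b+3*k) - 1) := by ring
    rw [this]
    exact dvd_trans (pow_dvd_pow _ (by omega)) (dvd_sub h1 h2)
  exact Dvd.dvd.mul_left hd _

-- ## Finite inner identities
lemma ps_one_inv : (1 : PowerSeries ℚ)⁻¹ = 1 := (ps_inv_mul_eq_one (mul_one 1)).symm

lemma poch_zero (a m : ℕ) : poch a m 0 = 1 := by rw [poch, Finset.prod_range_zero]

lemma one_sub_X_pow_ne_zero {e : ℕ} (he : 1 ≤ e) : (1 - (X:PowerSeries ℚ)^e) ≠ 0 := by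
  intro h0
  have := constCoeff_one_sub_X_pow he
  rw [h0, map_zero] at this
  norm_num at this

lemma poch_inv_step' {μ : ℕ} :
    (1 - (X:PowerSeries ℚ)^(3*(μ+1))) * (poch 3 3 (μ+1))⁻¹ = (poch 3 3 μ)⁻¹ := by
  rw [show 3*(μ+1) = 3+3*μ by ring, mul_comm]
  exact poch_inv_step

lemma pow_split {τ N : ℕ} (h : τ ≤ N) :
    (1:PowerSeries ℚ) - X^(3*N) = (1 - X^(3*(N-τ))) + X^(3*(N-τ)) * (1 - X^(3*τ)) := by
  have : (3:ℕ)*(N-τ) + 3*τ = 3*N := by omega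
  rw [mul_one_sub, ← pow_add, this]
  ring

/-- Gauss' identity at `z = Q`:  `Σ_τ (-1)^τ Q^(τ(τ+1)/2) / ((Q;Q)_τ (Q;Q)_(n-τ)) = 1`. -/
lemma gauss3 (n : ℕ) :
    ∑ τ ∈ Finset.range (n+1),
      (-1 : PowerSeries ℚ)^τ * X^(3*c2 (τ+1)) * ((poch 3 3 τ)⁻¹ * (poch 3 3 (n-τ))⁻¹) = 1 := by
  induction n with
  | zero => simp [c2_one, poch_zero, ps_one_inv]
  | succ n ih =>
    apply mul_right_cancel₀ (one_sub_X_pow_ne_zero (show 1 ≤ 3*(n+1) by omega))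
    rw [Finset.sum_mul, one_mul]
    have hterm : ∀ τ ∈ Finset.range (n+2),
        (-1 : PowerSeries ℚ)^τ * X^(3*c2 (τ+1)) * ((poch 3 3 τ)⁻¹ * (poch 3 3 (n+1-τ))⁻¹)
          * (1 - X^(3*(n+1)))
        = (-1 : PowerSeries ℚ)^τ * X^(3*c2 (τ+1)) *
            ((poch 3 3 τ)⁻¹ * ((1 - X^(3*(n+1-τ))) * (poch 3 3 (n+1-τ))⁻¹))
          + (-1 : PowerSeries ℚ)^τ * X^(3*c2 (τ+1)) * X^(3*(n+1-τ)) *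
            (((1 - X^(3*τ)) * (poch 3 3 τ)⁻¹) * (poch 3 3 (n+1-τ))⁻¹) := by
      intro τ hτ
      have hle : τ ≤ n+1 := by simpa using Nat.lt_succ_iff.mp (Finset.mem_range.mp hτ)
      rw [pow_split hle]
      ring
    rw [Finset.sum_congr rfl hterm, Finset.sum_add_distrib]
    have hA : ∑ τ ∈ Finset.range (n+2),
        (-1 : PowerSeries ℚ)^τ * X^(3*c2 (τ+1)) *
          ((poch 3 3 τ)⁻¹ * ((1 - X^(3*(n+1-τ))) * (poch 3 3 (n+1-τ))⁻¹)) = 1 := by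
      rw [Finset.sum_range_succ]
      have hz : (1:PowerSeries ℚ) - X^(3*(n+1-(n+1))) = 0 := by
        rw [Nat.sub_self]
        norm_num
      rw [hz]
      simp only [zero_mul, mul_zero, add_zero]
      refine Eq.trans (Finset.sum_congr rfl ?_) ih
      intro τ hτ
      have hle : τ ≤ n := Nat.lt_succ_iff.mp (Finset.mem_range.mp hτ)
      rw [show n+1-τ = (n-τ)+1 by omega, poch_inv_step']
    have hB : ∑ τ ∈ Finset.range (n+2),
        (-1 : PowerSeries ℚ)^τ * X^(3*c2 (τ+1)) * X^(3*(n+1-τ)) *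
          (((1 - X^(3*τ)) * (poch 3 3 τ)⁻¹) * (poch 3 3 (n+1-τ))⁻¹)
        = -(X^(3*(n+1))) := by
      rw [Finset.sum_range_succ']
      have h0 : (1:PowerSeries ℚ) - X^(3*0) = 0 := by norm_num
      rw [show (-1 : PowerSeries ℚ)^0 * X^(3*c2 (0+1)) * X^(3*(n+1-0)) *
          (((1 - X^(3*0)) * (poch 3 3 0)⁻¹) * (poch 3 3 (n+1-0))⁻¹) = 0 by rw [h0]; ring,
        add_zero]
      have hstep : ∀ s ∈ Finset.range (n+1),
          (-1 : PowerSeries ℚ)^(s+1) * X^(3*c2 (s+1+1)) * X^(3*(n+1-(s+1))) *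
            (((1 - X^(3*(s+1))) * (poch 3 3 (s+1))⁻¹) * (poch 3 3 (n+1-(s+1)))⁻¹)
          = -(X^(3*(n+1))) * ((-1 : PowerSeries ℚ)^s * X^(3*c2 (s+1)) *
              ((poch 3 3 s)⁻¹ * (poch 3 3 (n-s))⁻¹)) := by
        intro s hs
        have hle : s ≤ n := Nat.lt_succ_iff.mp (Finset.mem_range.mp hs)
        rw [poch_inv_step', show n+1-(s+1) = n-s by omega]
        have hexp : 3*c2 (s+1+1) + 3*(n-s) = 3*(n+1) + 3*c2 (s+1) := by
          have := c2_succ (s+1)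
          omega
        calc (-1 : PowerSeries ℚ)^(s+1) * X^(3*c2 (s+1+1)) * X^(3*(n-s)) *
              ((poch 3 3 s)⁻¹ * (poch 3 3 (n-s))⁻¹)
            = -((-1 : PowerSeries ℚ)^s * X^(3*c2 (s+1+1) + 3*(n-s)) *
              ((poch 3 3 s)⁻¹ * (poch 3 3 (n-s))⁻¹)) := by rw [pow_succ, pow_add]; ring
        _ = _ := by rw [hexp, pow_add]; ring
      rw [Finset.sum_congr rfl hstep, ← Finset.mul_sum, ih, mul_one]
    rw [hA, hB]
    ring

/-- The vanishing inner identity, for `n ≥ 1`. -/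
lemma vanish3 {n : ℕ} (hn : 1 ≤ n) :
    ∑ τ ∈ Finset.range (n+1),
      (-1 : PowerSeries ℚ)^τ * X^(3*(n*(n-τ)+c2 (τ+1))) *
        ((poch 3 3 τ)⁻¹ * (poch 3 3 (n-τ))⁻¹) = 0 := by
  apply mul_right_cancel₀ (one_sub_X_pow_ne_zero (show 1 ≤ 3*n by omega))
  rw [Finset.sum_mul, zero_mul]
  have hterm : ∀ τ ∈ Finset.range (n+1),
      (-1 : PowerSeries ℚ)^τ * X^(3*(n*(n-τ)+c2 (τ+1))) *
        ((poch 3 3 τ)⁻¹ * (poch 3 3 (n-τ))⁻¹) * (1 - X^(3*n))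
      = (-1 : PowerSeries ℚ)^τ * X^(3*(n*(n-τ)+c2 (τ+1))) *
          ((poch 3 3 τ)⁻¹ * ((1 - X^(3*(n-τ))) * (poch 3 3 (n-τ))⁻¹))
        + (-1 : PowerSeries ℚ)^τ * X^(3*(n*(n-τ)+c2 (τ+1))) * X^(3*(n-τ)) *
          (((1 - X^(3*τ)) * (poch 3 3 τ)⁻¹) * (poch 3 3 (n-τ))⁻¹) := by
    intro τ hτ
    have hle : τ ≤ n := Nat.lt_succ_iff.mp (Finset.mem_range.mp hτ)
    rw [pow_split hle]
    ring
  rw [Finset.sum_congr rfl hterm, Finset.sum_add_distrib]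
  have hA : ∑ τ ∈ Finset.range (n+1),
      (-1 : PowerSeries ℚ)^τ * X^(3*(n*(n-τ)+c2 (τ+1))) *
        ((poch 3 3 τ)⁻¹ * ((1 - X^(3*(n-τ))) * (poch 3 3 (n-τ))⁻¹))
      = ∑ τ ∈ Finset.range n,
      (-1 : PowerSeries ℚ)^τ * X^(3*(n*(n-τ)+c2 (τ+1))) *
        ((poch 3 3 τ)⁻¹ * (poch 3 3 (n-1-τ))⁻¹) := by
    rw [Finset.sum_range_succ]
    have hz : (1:PowerSeries ℚ) - X^(3*(n-n)) = 0 := by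
      rw [Nat.sub_self]; norm_num
    rw [hz]
    simp only [zero_mul, mul_zero, add_zero]
    apply Finset.sum_congr rfl
    intro τ hτ
    have hle : τ < n := Finset.mem_range.mp hτ
    rw [show n-τ = (n-1-τ)+1 by omega, poch_inv_step']
  have hB : ∑ τ ∈ Finset.range (n+1),
      (-1 : PowerSeries ℚ)^τ * X^(3*(n*(n-τ)+c2 (τ+1))) * X^(3*(n-τ)) *
        (((1 - X^(3*τ)) * (poch 3 3 τ)⁻¹) * (poch 3 3 (n-τ))⁻¹)
      = -∑ τ ∈ Finset.range n,
      (-1 : PowerSeries ℚ)^τ * X^(3*(n*(n-τ)+c2 (τ+1))) *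
        ((poch 3 3 τ)⁻¹ * (poch 3 3 (n-1-τ))⁻¹) := by
    rw [Finset.sum_range_succ']
    have h0 : (1:PowerSeries ℚ) - X^(3*0) = 0 := by norm_num
    rw [show (-1 : PowerSeries ℚ)^0 * X^(3*(n*(n-0)+c2 (0+1))) * X^(3*(n-0)) *
        (((1 - X^(3*0)) * (poch 3 3 0)⁻¹) * (poch 3 3 (n-0))⁻¹) = 0 by rw [h0]; ring, add_zero]
    rw [← Finset.sum_neg_distrib]
    apply Finset.sum_congr rfl
    intro s hs
    have hlt : s < n := Finset.mem_range.mp hs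
    obtain ⟨t, rfl⟩ : ∃ t, n = s+1+t := ⟨n-(s+1), by omega⟩
    have e3 : s+1+t-(s+1) = t := by omega
    have e4 : s+1+t-s = t+1 := by omega
    have e5 : s+1+t-1-s = t := by omega
    rw [poch_inv_step' (μ := s), e3, e4, e5]
    have hexp : 3*((s+1+t)*t + c2 (s+1+1)) + 3*t = 3*((s+1+t)*(t+1) + c2 (s+1)) := by
      rw [c2_succ (s+1)]; ring
    calc (-1 : PowerSeries ℚ)^(s+1) * X^(3*((s+1+t)*t+c2 (s+1+1))) * X^(3*t) *
          ((poch 3 3 s)⁻¹ * (poch 3 3 t)⁻¹)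
        = -((-1 : PowerSeries ℚ)^s * X^(3*((s+1+t)*t+c2 (s+1+1)) + 3*t) *
          ((poch 3 3 s)⁻¹ * (poch 3 3 t)⁻¹)) := by rw [pow_succ, pow_add]; ring
    _ = _ := by rw [hexp]
  rw [hA, hB]
  ring

-- ## Sum regrouping and isum operations
lemma ps_dvd_mul_sub_mul {k : ℕ} {A A' B B' : PowerSeries ℚ}
    (hA : (X:PowerSeries ℚ)^k ∣ A - A') (hB : (X:PowerSeries ℚ)^k ∣ B - B') :
    (X:PowerSeries ℚ)^k ∣ A * B - A' * B' := by
  have : A * B - A' * B' = (A - A') * B + A' * (B - B') := by ring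
  rw [this]
  exact dvd_add (hA.mul_right _) (hB.mul_left _)

/-- Triangle (antidiagonal) sums as a filtered square sum. -/
lemma tri_eq_filter {M : Type*} [AddCommMonoid M] (F : ℕ → ℕ → M) (k : ℕ) :
    ∑ n ∈ Finset.range k, ∑ τ ∈ Finset.range (n+1), F τ (n-τ)
      = ∑ p ∈ (Finset.range k ×ˢ Finset.range k).filter (fun p => p.1+p.2 < k), F p.1 p.2 := by
  rw [Finset.sum_sigma' (Finset.range k) (fun n => Finset.range (n+1))
    (fun n τ => F τ (n-τ))]
  apply Finset.sum_nbij' (i := fun x => (x.2, x.1 - x.2)) (j := fun p => ⟨p.1+p.2, p.1⟩)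
  · intro x hx
    simp only [Finset.mem_sigma, Finset.mem_range] at hx
    simp only [Finset.mem_filter, Finset.mem_product, Finset.mem_range]
    omega
  · intro p hp
    simp only [Finset.mem_filter, Finset.mem_product, Finset.mem_range] at hp
    simp only [Finset.mem_sigma, Finset.mem_range]
    omega
  · intro x hx
    simp only [Finset.mem_sigma, Finset.mem_range] at hx
    obtain ⟨n, τ⟩ := x
    simp only at hx ⊢
    obtain ⟨t, rfl⟩ : ∃ t, n = τ + t := ⟨n - τ, by omega⟩
    simp [Nat.add_sub_cancel_left]
  · intro p hp
    obtain ⟨a, b⟩ := p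
    simp [Nat.add_sub_cancel_left]
  · intro x hx
    rfl

/-- Square sum to triangle sum, modulo `X^k`. -/
lemma sq_to_tri {F : ℕ → ℕ → PowerSeries ℚ} {k : ℕ}
    (hF : ∀ τ m, (X:PowerSeries ℚ)^(τ+m) ∣ F τ m) :
    (X:PowerSeries ℚ)^k ∣ (∑ τ ∈ Finset.range k, ∑ m ∈ Finset.range k, F τ m)
      - ∑ n ∈ Finset.range k, ∑ τ ∈ Finset.range (n+1), F τ (n-τ) := by
  rw [tri_eq_filter]
  have h1 : ∑ τ ∈ Finset.range k, ∑ m ∈ Finset.range k, F τ m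
      = ∑ p ∈ Finset.range k ×ˢ Finset.range k, F p.1 p.2 := by
    rw [Finset.sum_product]
  rw [h1, ← Finset.sum_filter_add_sum_filter_not (Finset.range k ×ˢ Finset.range k)
    (fun p => p.1+p.2 < k) (fun p => F p.1 p.2), add_sub_cancel_left]
  apply Finset.dvd_sum
  intro p hp
  simp only [Finset.mem_filter, Finset.mem_product, Finset.mem_range, not_lt] at hp
  exact dvd_trans (pow_dvd_pow _ hp.2) (hF p.1 p.2)

/-- Square sum split into lower (τ ≥ m) and strictly upper diagonals. -/
lemma sq_to_diag {M : Type*} [AddCommMonoid M] (F : ℕ → ℕ → M) (k : ℕ) :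
    ∑ τ ∈ Finset.range k, ∑ m ∈ Finset.range k, F τ m
      = (∑ d ∈ Finset.range k, ∑ m ∈ Finset.range (k-d), F (m+d) m)
        + ∑ d ∈ Finset.range k, ∑ τ ∈ Finset.range (k-(d+1)), F τ (τ+d+1) := by
  have h1 : ∑ τ ∈ Finset.range k, ∑ m ∈ Finset.range k, F τ m
      = ∑ p ∈ Finset.range k ×ˢ Finset.range k, F p.1 p.2 := by
    rw [Finset.sum_product]
  rw [h1, ← Finset.sum_filter_add_sum_filter_not (Finset.range k ×ˢ Finset.range k)
    (fun p => p.2 ≤ p.1) (fun p => F p.1 p.2)]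
  congr 1
  · rw [Finset.sum_sigma' (Finset.range k) (fun d => Finset.range (k-d))
      (fun d m => F (m+d) m)]
    symm
    apply Finset.sum_nbij' (i := fun x => (x.2 + x.1, x.2)) (j := fun p => ⟨p.1-p.2, p.2⟩)
    · intro x hx
      simp only [Finset.mem_sigma, Finset.mem_range] at hx
      simp only [Finset.mem_filter, Finset.mem_product, Finset.mem_range]
      omega
    · intro p hp
      simp only [Finset.mem_filter, Finset.mem_product, Finset.mem_range] at hp
      simp only [Finset.mem_sigma, Finset.mem_range]
      omega
    · intro x hx
      obtain ⟨d, m⟩ := x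
      simp [Nat.add_sub_cancel_left]
    · intro p hp
      obtain ⟨a, b⟩ := p
      simp only [Finset.mem_filter, Finset.mem_product, Finset.mem_range] at hp
      have h : b + (a - b) = a := by omega
      simp [h]
    · intro x hx
      rfl
  · rw [Finset.sum_sigma' (Finset.range k) (fun d => Finset.range (k-(d+1)))
      (fun d τ => F τ (τ+d+1))]
    symm
    apply Finset.sum_nbij' (i := fun x => (x.2, x.2 + x.1 + 1)) (j := fun p => ⟨p.2-p.1-1, p.1⟩)
    · intro x hx
      simp only [Finset.mem_sigma, Finset.mem_range] at hx
      simp only [Finset.mem_filter, Finset.mem_product, Finset.mem_range, not_le]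
      omega
    · intro p hp
      simp only [Finset.mem_filter, Finset.mem_product, Finset.mem_range, not_le] at hp
      simp only [Finset.mem_sigma, Finset.mem_range]
      omega
    · intro x hx
      obtain ⟨d, τ⟩ := x
      dsimp only
      simp only [Sigma.mk.inj_iff, heq_eq_eq]
      constructor
      · omega
      · trivial
    · intro p hp
      obtain ⟨a, b⟩ := p
      simp only [Finset.mem_filter, Finset.mem_product, Finset.mem_range, not_le] at hp
      have h : a + (b - a - 1) + 1 = b := by omega
      simp [h]
    · intro x hx
      rfl

-- isum operations
lemma isum_congr {f g : ℕ → PowerSeries ℚ} (h : ∀ τ, f τ = g τ) : isum f = isum g := by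
  have : f = g := funext h
  rw [this]

lemma mul_isum {A : PowerSeries ℚ} {f : ℕ → PowerSeries ℚ}
    (hf : ∀ τ, (X:PowerSeries ℚ)^τ ∣ f τ) :
    A * isum f = isum (fun τ => A * f τ) := by
  apply ps_eq_of_forall_dvd
  intro k
  have h1 := isum_mod hf (le_refl k)
  have h2 := isum_mod (f := fun τ => A * f τ) (fun τ => (hf τ).mul_left A) (le_refl k)
  have : A * isum f - isum (fun τ => A * f τ)
      = A * (isum f - ∑ τ ∈ Finset.range k, f τ)
        - (isum (fun τ => A * f τ) - ∑ τ ∈ Finset.range k, (fun τ => A * f τ) τ)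
        + (A * ∑ τ ∈ Finset.range k, f τ - ∑ τ ∈ Finset.range k, A * f τ) := by ring
  rw [this, Finset.mul_sum, sub_self, add_zero]
  exact dvd_sub (h1.mul_left A) h2

lemma isum_split {f : ℕ → PowerSeries ℚ} (M : ℕ) (hf : ∀ τ, (X:PowerSeries ℚ)^τ ∣ f τ) :
    isum f = (∑ n ∈ Finset.range M, f n) + isum (fun n => f (M+n)) := by
  apply ps_eq_of_forall_dvd
  intro k
  have h1 := isum_mod hf (show k ≤ M + k by omega)
  have h2 := isum_mod (f := fun n => f (M+n))
    (fun n => dvd_trans (pow_dvd_pow _ (by omega)) (hf (M+n))) (le_refl k)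
  have h3 : ∑ τ ∈ Finset.range (M+k), f τ
      = (∑ n ∈ Finset.range M, f n) + ∑ n ∈ Finset.range k, f (M+n) :=
    Finset.sum_range_add f M k
  have key : isum f - ((∑ n ∈ Finset.range M, f n) + isum (fun n => f (M+n)))
      = (isum f - ∑ τ ∈ Finset.range (M+k), f τ)
        - (isum (fun n => f (M+n)) - ∑ n ∈ Finset.range k, f (M+n)) := by
    rw [h3]; ring
  rw [key]
  exact dvd_sub h1 h2

lemma sum_range_even_odd {M : Type*} [AddCommMonoid M] (f : ℕ → M) (k : ℕ) :
    ∑ n ∈ Finset.range (2*k), f n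
      = (∑ i ∈ Finset.range k, f (2*i)) + ∑ i ∈ Finset.range k, f (2*i+1) := by
  induction k with
  | zero => simp
  | succ s ih =>
    rw [show 2*(s+1) = (2*s)+1+1 by ring, Finset.sum_range_succ, Finset.sum_range_succ,
      Finset.sum_range_succ (fun i => f (2*i)), Finset.sum_range_succ (fun i => f (2*i+1)), ih]
    abel

lemma isum_even_odd {f : ℕ → PowerSeries ℚ} (hf : ∀ τ, (X:PowerSeries ℚ)^τ ∣ f τ) :
    isum f = isum (fun i => f (2*i)) + isum (fun i => f (2*i+1)) := by
  apply ps_eq_of_forall_dvd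
  intro k
  have h1 := isum_mod hf (show k ≤ 2*k by omega)
  have h2 := isum_mod (f := fun i => f (2*i))
    (fun i => dvd_trans (pow_dvd_pow _ (by omega)) (hf (2*i))) (le_refl k)
  have h3 := isum_mod (f := fun i => f (2*i+1))
    (fun i => dvd_trans (pow_dvd_pow _ (by omega)) (hf (2*i+1))) (le_refl k)
  have key : isum f - (isum (fun i => f (2*i)) + isum (fun i => f (2*i+1)))
      = (isum f - ∑ n ∈ Finset.range (2*k), f n)
        - (isum (fun i => f (2*i)) - ∑ i ∈ Finset.range k, f (2*i))
        - (isum (fun i => f (2*i+1)) - ∑ i ∈ Finset.range k, f (2*i+1)) := by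
    rw [sum_range_even_odd]; ring
  rw [key]
  exact dvd_sub (dvd_sub h1 h2) h3

lemma isum_neg (f : ℕ → PowerSeries ℚ) : isum (fun τ => -(f τ)) = -isum f := by
  ext k
  rw [coeff_isum, map_neg, coeff_isum, Finset.sum_neg_distrib, map_neg]

-- ## c2 arithmetic
lemma c2_add (τ m : ℕ) : c2 (τ+m) = c2 τ + c2 m + τ*m := by
  induction m with
  | zero => simp [c2_zero]
  | succ s ih =>
    rw [show τ+(s+1) = (τ+s)+1 by ring, c2_succ, ih, c2_succ]
    ring

lemma c2_sq (τ : ℕ) : τ*τ = 2*c2 τ + τ := by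
  induction τ with
  | zero => rfl
  | succ s ih =>
    rw [c2_succ]
    have e : (s+1)*(s+1) = s*s+2*s+1 := by ring
    linarith [ih, e]

lemma dvd_cX {τ e : ℕ} (h : τ ≤ e) (c : PowerSeries ℚ) :
    (X:PowerSeries ℚ)^τ ∣ c * X^e := by
  have := dvd_of_le_mul h c 1
  simpa using this

lemma neg_pow_helper (τ m : ℕ) : (-1 : PowerSeries ℚ)^(τ+m) * (-1)^τ = (-1)^m := by
  rw [← pow_add, show τ+m+τ = 2*τ+m by ring, pow_add, pow_mul]
  norm_num

-- ## The core identity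
theorem core_id {b : ℕ} (hb : 1 ≤ b) :
    isum (fun τ => X^(τ*(b+3*τ)) * ((poch 3 3 τ)⁻¹ * pochInf (b+3*τ) 3))
      = isum (fun j => (-1 : PowerSeries ℚ)^j * X^(b*j+3*c2 j)) := by
  set L : ℕ → PowerSeries ℚ :=
    fun τ => X^(τ*(b+3*τ)) * ((poch 3 3 τ)⁻¹ * pochInf (b+3*τ) 3) with hLdef
  set G : ℕ → PowerSeries ℚ := fun j => (-1 : PowerSeries ℚ)^j * X^(b*j+3*c2 j) with hGdef
  set F : ℕ → ℕ → PowerSeries ℚ := fun τ m =>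
    (-1 : PowerSeries ℚ)^m * X^(τ*(b+3*τ) + (b+3*τ)*m + 3*c2 m) *
      ((poch 3 3 τ)⁻¹ * (poch 3 3 m)⁻¹) with hFdef
  have hL : ∀ τ, (X:PowerSeries ℚ)^τ ∣ L τ := by
    intro τ
    have : τ ≤ τ*(b+3*τ) := by nlinarith
    exact (pow_dvd_pow _ this).mul_right _
  have hG : ∀ j, (X:PowerSeries ℚ)^j ∣ G j := by
    intro j
    exact dvd_cX (by nlinarith) _
  apply ps_eq_of_forall_dvd
  intro k
  have h1 := isum_mod hL (le_refl k)
  have h2 := isum_mod hG (le_refl k)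
  -- expand each L τ by Euler
  have h3 : ∀ τ, (X:PowerSeries ℚ)^k ∣ L τ - ∑ m ∈ Finset.range k, F τ m := by
    intro τ
    have he := euler_id (show 1 ≤ b+3*τ by omega)
    have hes := isum_mod (eulT_dvd (show 1 ≤ b+3*τ by omega)) (le_refl k)
    have hmul := hes.mul_left (X^(τ*(b+3*τ)) * (poch 3 3 τ)⁻¹)
    rw [show isum (eulT (b+3*τ)) = eulS (b+3*τ) from rfl] at hmul
    have heq : L τ - ∑ m ∈ Finset.range k, F τ m
        = (X^(τ*(b+3*τ)) * (poch 3 3 τ)⁻¹) *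
            (eulS (b+3*τ) - ∑ m ∈ Finset.range k, eulT (b+3*τ) m) := by
      rw [hLdef]
      simp only
      rw [he, mul_sub, Finset.mul_sum]
      congr 1
      · ring
      apply Finset.sum_congr rfl
      intro m _
      rw [hFdef]
      simp only
      rw [eulT]
      ring
    rw [heq]
    exact hmul
  have h4 : (X:PowerSeries ℚ)^k ∣ (∑ τ ∈ Finset.range k, L τ)
      - ∑ τ ∈ Finset.range k, ∑ m ∈ Finset.range k, F τ m := by
    rw [← Finset.sum_sub_distrib]
    exact Finset.dvd_sum (fun τ _ => h3 τ)
  have h5 : (X:PowerSeries ℚ)^k ∣ (∑ τ ∈ Finset.range k, ∑ m ∈ Finset.range k, F τ m)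
      - ∑ n ∈ Finset.range k, ∑ τ ∈ Finset.range (n+1), F τ (n-τ) := by
    apply sq_to_tri
    intro τ m
    rw [hFdef]
    simp only
    exact dvd_of_le_mul (by nlinarith) _ _
  have h6 : ∀ n, ∑ τ ∈ Finset.range (n+1), F τ (n-τ) = G n := by
    intro n
    have hpt : ∀ τ ∈ Finset.range (n+1), F τ (n-τ)
        = (-1 : PowerSeries ℚ)^n * X^(b*n+3*c2 n) *
          ((-1 : PowerSeries ℚ)^τ * X^(3*c2 (τ+1)) * ((poch 3 3 τ)⁻¹ * (poch 3 3 (n-τ))⁻¹)) := by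
      intro τ hτ
      have hle : τ ≤ n := Nat.lt_succ_iff.mp (Finset.mem_range.mp hτ)
      obtain ⟨m, rfl⟩ : ∃ m, n = τ + m := ⟨n - τ, by omega⟩
      have e3 : τ + m - τ = m := by omega
      rw [hFdef]
      simp only [e3]
      have hsq : (τ:ℤ)*τ = 2*(c2 τ) + τ := by exact_mod_cast c2_sq τ
      have hE : τ*(b+3*τ) + (b+3*τ)*m + 3*c2 m
          = (b*(τ+m)+3*c2 (τ+m)) + 3*c2 (τ+1) := by
        rw [c2_add τ m, show c2 (τ+1) = c2 τ + τ from c2_succ τ]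
        zify
        linear_combination 3*hsq
      rw [hE, pow_add]
      calc (-1 : PowerSeries ℚ)^m * (X^(b*(τ+m)+3*c2 (τ+m)) * X^(3*c2 (τ+1))) *
            ((poch 3 3 τ)⁻¹ * (poch 3 3 m)⁻¹)
          = ((-1 : PowerSeries ℚ)^(τ+m) * (-1)^τ) * (X^(b*(τ+m)+3*c2 (τ+m)) * X^(3*c2 (τ+1))) *
            ((poch 3 3 τ)⁻¹ * (poch 3 3 m)⁻¹) := by rw [neg_pow_helper]
      _ = _ := by ring
    rw [Finset.sum_congr rfl hpt, ← Finset.mul_sum, gauss3, mul_one, hGdef]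
  have h7 : ∑ n ∈ Finset.range k, ∑ τ ∈ Finset.range (n+1), F τ (n-τ)
      = ∑ n ∈ Finset.range k, G n := Finset.sum_congr rfl (fun n _ => h6 n)
  have h5' : (X:PowerSeries ℚ)^k ∣ (∑ τ ∈ Finset.range k, ∑ m ∈ Finset.range k, F τ m)
      - ∑ n ∈ Finset.range k, G n := by
    rw [← h7]
    exact h5
  have hfinal : isum L - isum G
      = (isum L - ∑ τ ∈ Finset.range k, L τ)
        + ((∑ τ ∈ Finset.range k, L τ) - ∑ τ ∈ Finset.range k, ∑ m ∈ Finset.range k, F τ m)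
        + ((∑ τ ∈ Finset.range k, ∑ m ∈ Finset.range k, F τ m) - ∑ n ∈ Finset.range k, G n)
        - (isum G - ∑ n ∈ Finset.range k, G n) := by ring
  rw [hfinal]
  exact dvd_sub (dvd_add (dvd_add h1 h4) h5') h2

-- ## The diagonal sums V_d
noncomputable def vT (d m : ℕ) : PowerSeries ℚ :=
  X^(3*(m*(m+d))) * ((poch 3 3 m)⁻¹ * (poch 3 3 (m+d))⁻¹)

lemma m_le_diag (m d : ℕ) : m ≤ 3*(m*(m+d)) := by
  rcases Nat.eq_zero_or_pos m with h|h
  · subst h; simp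
  · have h1 : m ≤ m*(m+d) := Nat.le_mul_of_pos_right m (by omega)
    omega

lemma vT_dvd (d m : ℕ) : (X:PowerSeries ℚ)^m ∣ vT d m :=
  (pow_dvd_pow _ (m_le_diag m d)).mul_right _

lemma v_id (d : ℕ) : pochInf 3 3 * isum (vT d) = 1 := by
  apply ps_eq_of_forall_dvd
  intro k
  rcases Nat.eq_zero_or_pos k with hk | hk
  · subst hk; simpa using one_dvd _
  set F : ℕ → ℕ → PowerSeries ℚ := fun m j =>
    (-1 : PowerSeries ℚ)^j * X^(3*(m*(m+d)) + (3+3*(m+d))*j + 3*c2 j) *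
      ((poch 3 3 m)⁻¹ * (poch 3 3 j)⁻¹) with hFdef
  have h1 := isum_mod (vT_dvd d) (le_refl k)
  have hP33 : (1:ℕ) ≤ 3 := by norm_num
  -- P33 * vT d m expanded by Euler
  have h3 : ∀ m, (X:PowerSeries ℚ)^k ∣ pochInf 3 3 * vT d m - ∑ j ∈ Finset.range k, F m j := by
    intro m
    have hsplit := pochInf_split (m+d) hP33 hP33
    have he := euler_id (show 1 ≤ 3+3*(m+d) by omega)
    have hes := isum_mod (eulT_dvd (show 1 ≤ 3+3*(m+d) by omega)) (le_refl k)
    rw [show isum (eulT (3+3*(m+d))) = eulS (3+3*(m+d)) from rfl] at hes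
    have hmul := hes.mul_left (X^(3*(m*(m+d))) * (poch 3 3 m)⁻¹)
    have heq : pochInf 3 3 * vT d m - ∑ j ∈ Finset.range k, F m j
        = (X^(3*(m*(m+d))) * (poch 3 3 m)⁻¹) *
            (eulS (3+3*(m+d)) - ∑ j ∈ Finset.range k, eulT (3+3*(m+d)) j) := by
      rw [vT, hsplit, ← he]
      have hc : poch 3 3 (m+d) * (poch 3 3 (m+d))⁻¹ = 1 := poch_mul_inv (by norm_num)
      rw [mul_sub, Finset.mul_sum]
      have hl : poch 3 3 (m+d) * pochInf (3+3*(m+d)) 3 *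
          (X^(3*(m*(m+d))) * ((poch 3 3 m)⁻¹ * (poch 3 3 (m+d))⁻¹))
          = X^(3*(m*(m+d))) * (poch 3 3 m)⁻¹ * pochInf (3+3*(m+d)) 3 := by
        calc poch 3 3 (m+d) * pochInf (3+3*(m+d)) 3 *
            (X^(3*(m*(m+d))) * ((poch 3 3 m)⁻¹ * (poch 3 3 (m+d))⁻¹))
            = (poch 3 3 (m+d) * (poch 3 3 (m+d))⁻¹) *
              (X^(3*(m*(m+d))) * (poch 3 3 m)⁻¹ * pochInf (3+3*(m+d)) 3) := by ring
        _ = _ := by rw [hc, one_mul]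
      rw [hl]
      congr 1
      apply Finset.sum_congr rfl
      intro j _
      rw [hFdef]
      simp only
      rw [eulT]
      ring
    rw [heq]
    exact hmul
  have h4 : (X:PowerSeries ℚ)^k ∣ (∑ m ∈ Finset.range k, pochInf 3 3 * vT d m)
      - ∑ m ∈ Finset.range k, ∑ j ∈ Finset.range k, F m j := by
    rw [← Finset.sum_sub_distrib]
    exact Finset.dvd_sum (fun m _ => h3 m)
  have h5 : (X:PowerSeries ℚ)^k ∣ (∑ m ∈ Finset.range k, ∑ j ∈ Finset.range k, F m j)
      - ∑ n ∈ Finset.range k, ∑ m ∈ Finset.range (n+1), F m (n-m) := by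
    apply sq_to_tri
    intro m j
    rw [hFdef]
    simp only
    have hm1 := m_le_diag m d
    have hj : 1*j ≤ (3+3*(m+d))*j := Nat.mul_le_mul_right j (by omega)
    exact dvd_of_le_mul (by omega) _ _
  have h60 : ∑ m ∈ Finset.range 1, F m (0-m) = 1 := by
    rw [Finset.sum_range_one, hFdef]
    simp [c2_zero, poch_zero, ps_one_inv]
  have h6 : ∀ n, 1 ≤ n → ∑ m ∈ Finset.range (n+1), F m (n-m) = 0 := by
    intro n hn
    have refl := Finset.sum_range_reflect (fun m => F m (n-m)) (n+1)
    simp only [Nat.add_sub_cancel] at refl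
    rw [← refl]
    have hpt : ∀ τ ∈ Finset.range (n+1), F (n-τ) (n-(n-τ))
        = X^(3*(d*n)) * ((-1 : PowerSeries ℚ)^τ * X^(3*(n*(n-τ)+c2 (τ+1))) *
            ((poch 3 3 τ)⁻¹ * (poch 3 3 (n-τ))⁻¹)) := by
      intro τ hτ
      have hle : τ ≤ n := Nat.lt_succ_iff.mp (Finset.mem_range.mp hτ)
      obtain ⟨m, rfl⟩ : ∃ m, n = m + τ := ⟨n - τ, by omega⟩
      have e1 : m + τ - τ = m := by omega
      have e2 : m + τ - m = τ := by omega
      rw [e1, e2, hFdef]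
      simp only
      have hE : 3*(m*(m+d)) + (3+3*(m+d))*τ + 3*c2 τ
          = 3*(d*(m+τ)) + 3*((m+τ)*m+c2 (τ+1)) := by
        rw [c2_succ]
        ring
      rw [hE, pow_add]
      ring
    rw [Finset.sum_congr rfl hpt, ← Finset.mul_sum, vanish3 hn, mul_zero]
  have h7 : ∑ n ∈ Finset.range k, ∑ m ∈ Finset.range (n+1), F m (n-m) = 1 := by
    obtain ⟨k', rfl⟩ : ∃ k', k = k'+1 := ⟨k-1, by omega⟩
    rw [Finset.sum_range_succ']
    have hz : ∀ n ∈ Finset.range k', ∑ m ∈ Finset.range (n+1+1), F m (n+1-m) = 0 :=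
      fun n _ => h6 (n+1) (by omega)
    rw [Finset.sum_congr rfl hz, Finset.sum_const, smul_zero, zero_add, h60]
  have hm : (X:PowerSeries ℚ)^k ∣ pochInf 3 3 * isum (vT d)
      - ∑ m ∈ Finset.range k, pochInf 3 3 * vT d m := by
    rw [← Finset.mul_sum, ← mul_sub]
    exact (h1.mul_left _)
  have h5' : (X:PowerSeries ℚ)^k ∣ (∑ m ∈ Finset.range k, ∑ j ∈ Finset.range k, F m j) - 1 := by
    rw [← h7]
    exact h5
  have hfinal : pochInf 3 3 * isum (vT d) - 1
      = (pochInf 3 3 * isum (vT d) - ∑ m ∈ Finset.range k, pochInf 3 3 * vT d m)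
        + ((∑ m ∈ Finset.range k, pochInf 3 3 * vT d m)
            - ∑ m ∈ Finset.range k, ∑ j ∈ Finset.range k, F m j)
        + ((∑ m ∈ Finset.range k, ∑ j ∈ Finset.range k, F m j) - 1) := by ring
  rw [hfinal]
  exact dvd_add (dvd_add hm h4) h5'

-- ## Pentagonal number theorem
lemma poch_triple (K : ℕ) : poch 1 1 (3*K) = poch 1 3 K * poch 2 3 K * poch 3 3 K := by
  induction K with
  | zero => simp [poch_zero]
  | succ s ih =>
    rw [show 3*(s+1) = (3*s+1+1)+1 by ring, poch_succ, show 3*s+1+1 = (3*s+1)+1 by rfl,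
      poch_succ, show 3*s+1 = (3*s)+1 by rfl, poch_succ, ih,
      poch_succ 1 3 s, poch_succ 2 3 s, poch_succ 3 3 s,
      show 1+1*(3*s) = 1+3*s by ring, show 1+1*(3*s+1) = 2+3*s by ring,
      show 1+1*(3*s+1+1) = 3+3*s by ring]
    ring

lemma pochInf_merge : pochInf 1 1 = pochInf 1 3 * pochInf 2 3 * pochInf 3 3 := by
  apply ps_eq_of_forall_dvd
  intro k
  have h11 := pochInf_mod (le_refl 1) (le_refl 1) (show k ≤ 3*k by omega) (a := 1) (m := 1)
  have h13 := pochInf_mod (le_refl 1) (by norm_num) (le_refl k) (a := 1) (m := 3)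
  have h23 := pochInf_mod (by norm_num) (by norm_num) (le_refl k) (a := 2) (m := 3)
  have h33 := pochInf_mod (by norm_num) (by norm_num) (le_refl k) (a := 3) (m := 3)
  have hprod := ps_dvd_mul_sub_mul (ps_dvd_mul_sub_mul h13 h23) h33
  have key : pochInf 1 1 - pochInf 1 3 * pochInf 2 3 * pochInf 3 3
      = (pochInf 1 1 - poch 1 1 (3*k))
        - (pochInf 1 3 * pochInf 2 3 * pochInf 3 3 - poch 1 3 k * poch 2 3 k * poch 3 3 k) := by
    rw [poch_triple]
    ring
  rw [key]
  exact dvd_sub h11 hprod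

lemma dvd_pow_mul_of_dvd {k e j : ℕ} (h : k ≤ e + j) (c Z : PowerSeries ℚ)
    (hZ : (X:PowerSeries ℚ)^j ∣ Z) : (X:PowerSeries ℚ)^k ∣ c * X^e * Z := by
  obtain ⟨w, hw⟩ := hZ
  rw [hw, show c * X^e * (X^j*w) = X^(e+j) * (c*w) by rw [pow_add]; ring]
  exact (pow_dvd_pow _ h).mul_right _

theorem pnt : pochInf 1 1
    = isum (fun d => (-1 : PowerSeries ℚ)^d * X^(2*d+3*c2 d))
      - isum (fun d => (-1 : PowerSeries ℚ)^d * X^(1+4*d+3*c2 d)) := by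
  rw [pochInf_merge]
  set A : ℕ → PowerSeries ℚ := fun d => (-1 : PowerSeries ℚ)^d * X^(2*d+3*c2 d) with hAdef
  set B : ℕ → PowerSeries ℚ := fun d => (-1 : PowerSeries ℚ)^d * X^(1+4*d+3*c2 d) with hBdef
  have hAdvd : ∀ d, (X:PowerSeries ℚ)^d ∣ A d := fun d => dvd_cX (by nlinarith) _
  have hBdvd : ∀ d, (X:PowerSeries ℚ)^d ∣ B d := fun d => dvd_cX (by nlinarith) _
  apply ps_eq_of_forall_dvd
  intro k
  rcases Nat.eq_zero_or_pos k with hk | hk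
  · subst hk; simpa using one_dvd _
  obtain ⟨K, rfl⟩ : ∃ K, k = K+1 := ⟨k-1, by omega⟩
  set k := K+1
  -- Euler expansions of (q;q³)∞ and (q²;q³)∞
  have hE1 : (X:PowerSeries ℚ)^k ∣ pochInf 1 3 - ∑ τ ∈ Finset.range k, eulT 1 τ := by
    rw [euler_id (le_refl 1)]
    exact isum_mod (eulT_dvd (le_refl 1)) (le_refl k)
  have hE2 : (X:PowerSeries ℚ)^k ∣ pochInf 2 3 - ∑ m ∈ Finset.range k, eulT 2 m := by
    rw [euler_id (by norm_num : (1:ℕ) ≤ 2)]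
    exact isum_mod (eulT_dvd (by norm_num)) (le_refl k)
  have hprod0 := ps_dvd_mul_sub_mul hE1 hE2
  -- lower diagonal terms
  have hlow : ∀ d m : ℕ, eulT 1 (m+d) * eulT 2 m
      = (-1 : PowerSeries ℚ)^d * X^(d+3*c2 d) * vT d m := by
    intro d m
    rw [eulT, eulT, vT]
    have hsq : (m:ℤ)*m = 2*(c2 m) + m := by exact_mod_cast c2_sq m
    have hE : (1*(m+d)+3*c2 (m+d)) + (2*m+3*c2 m) = (d+3*c2 d) + 3*(m*(m+d)) := by
      rw [c2_add m d]
      zify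
      linear_combination (-3)*hsq
    have hs := neg_pow_helper m d
    calc (-1 : PowerSeries ℚ)^(m+d) * X^(1*(m+d)+3*c2 (m+d)) * (poch 3 3 (m+d))⁻¹ *
          ((-1 : PowerSeries ℚ)^m * X^(2*m+3*c2 m) * (poch 3 3 m)⁻¹)
        = ((-1 : PowerSeries ℚ)^(m+d) * (-1)^m) * X^((1*(m+d)+3*c2 (m+d)) + (2*m+3*c2 m)) *
          ((poch 3 3 m)⁻¹ * (poch 3 3 (m+d))⁻¹) := by rw [pow_add]; ring
    _ = _ := by rw [hs, hE, pow_add]; ring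
  -- upper diagonal terms
  have hup : ∀ d τ : ℕ, eulT 1 τ * eulT 2 (τ+(d+1))
      = A (d+1) * vT (d+1) τ := by
    intro d τ
    rw [eulT, eulT, vT, hAdef]
    simp only
    have hsq : (τ:ℤ)*τ = 2*(c2 τ) + τ := by exact_mod_cast c2_sq τ
    have hE : (1*τ+3*c2 τ) + (2*(τ+(d+1))+3*c2 (τ+(d+1)))
        = (2*(d+1)+3*c2 (d+1)) + 3*(τ*(τ+(d+1))) := by
      rw [c2_add τ (d+1)]
      zify
      linear_combination (-3)*hsq
    have hs := neg_pow_helper τ (d+1)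
    calc (-1 : PowerSeries ℚ)^τ * X^(1*τ+3*c2 τ) * (poch 3 3 τ)⁻¹ *
          ((-1 : PowerSeries ℚ)^(τ+(d+1)) * X^(2*(τ+(d+1))+3*c2 (τ+(d+1))) * (poch 3 3 (τ+(d+1)))⁻¹)
        = ((-1 : PowerSeries ℚ)^(τ+(d+1)) * (-1)^τ) *
            X^((1*τ+3*c2 τ) + (2*(τ+(d+1))+3*c2 (τ+(d+1)))) *
          ((poch 3 3 τ)⁻¹ * (poch 3 3 (τ+(d+1)))⁻¹) := by rw [pow_add]; ring
    _ = _ := by rw [hs, hE, pow_add]; ring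
  -- the product of truncated Euler sums equals diagonal sums
  have hdiag : (∑ τ ∈ Finset.range k, eulT 1 τ) * (∑ m ∈ Finset.range k, eulT 2 m)
      = (∑ d ∈ Finset.range k, (-1 : PowerSeries ℚ)^d * X^(d+3*c2 d) *
          ∑ m ∈ Finset.range (k-d), vT d m)
        + ∑ d ∈ Finset.range k, A (d+1) * ∑ τ ∈ Finset.range (k-(d+1)), vT (d+1) τ := by
    rw [Finset.sum_mul_sum]
    rw [sq_to_diag (fun τ m => eulT 1 τ * eulT 2 m) k]
    congr 1
    · apply Finset.sum_congr rfl
      intro d _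
      rw [Finset.mul_sum]
      exact Finset.sum_congr rfl (fun m _ => hlow d m)
    · apply Finset.sum_congr rfl
      intro d _
      rw [Finset.mul_sum]
      exact Finset.sum_congr rfl (fun τ _ => hup d τ)
  -- multiply by pochInf 3 3 : each diagonal block collapses
  have hcollapse : ∀ d j : ℕ, (X:PowerSeries ℚ)^j ∣
      (∑ m ∈ Finset.range j, vT d m) * pochInf 3 3 - 1 := by
    intro d j
    have h := (isum_mod (vT_dvd d) (le_refl j)).mul_left (pochInf 3 3)
    rw [mul_sub, v_id d] at h
    have heq2 : (∑ m ∈ Finset.range j, vT d m) * pochInf 3 3 - 1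
        = -(1 - pochInf 3 3 * ∑ m ∈ Finset.range j, vT d m) := by ring
    rw [heq2]
    exact h.neg_right
  have hlowP : ∀ d ∈ Finset.range k, (X:PowerSeries ℚ)^k ∣
      ((-1 : PowerSeries ℚ)^d * X^(d+3*c2 d) * ∑ m ∈ Finset.range (k-d), vT d m) * pochInf 3 3
        - (-1 : PowerSeries ℚ)^d * X^(d+3*c2 d) := by
    intro d hd
    have hdk : d < k := Finset.mem_range.mp hd
    have h := hcollapse d (k-d)
    have heq : ((-1 : PowerSeries ℚ)^d * X^(d+3*c2 d) * ∑ m ∈ Finset.range (k-d), vT d m) *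
          pochInf 3 3 - (-1 : PowerSeries ℚ)^d * X^(d+3*c2 d)
        = (-1 : PowerSeries ℚ)^d * X^(d+3*c2 d) *
            ((∑ m ∈ Finset.range (k-d), vT d m) * pochInf 3 3 - 1) := by ring
    rw [heq]
    exact dvd_pow_mul_of_dvd (by omega) _ _ h
  have hupP : ∀ d ∈ Finset.range k, (X:PowerSeries ℚ)^k ∣
      (A (d+1) * ∑ τ ∈ Finset.range (k-(d+1)), vT (d+1) τ) * pochInf 3 3 - A (d+1) := by
    intro d hd
    have hdk : d < k := Finset.mem_range.mp hd
    have h := hcollapse (d+1) (k-(d+1))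
    have heq : (A (d+1) * ∑ τ ∈ Finset.range (k-(d+1)), vT (d+1) τ) * pochInf 3 3 - A (d+1)
        = (-1 : PowerSeries ℚ)^(d+1) * X^(2*(d+1)+3*c2 (d+1)) *
            ((∑ τ ∈ Finset.range (k-(d+1)), vT (d+1) τ) * pochInf 3 3 - 1) := by
      rw [hAdef]; ring
    rw [heq]
    exact dvd_pow_mul_of_dvd (by omega) _ _ h
  -- the two pure theta sums
  have hSL : ∑ d ∈ Finset.range k, (-1 : PowerSeries ℚ)^d * X^(d+3*c2 d)
      = A 0 - ∑ d ∈ Finset.range K, B d := by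
    rw [Finset.sum_range_succ']
    have h1 : ∀ d, (-1 : PowerSeries ℚ)^(d+1) * X^((d+1)+3*c2 (d+1)) = -B d := by
      intro d
      rw [hBdef]
      simp only
      rw [c2_succ, show d+1+3*(c2 d + d) = 1+4*d+3*c2 d by ring, pow_succ]
      ring
    rw [Finset.sum_congr rfl (fun d _ => h1 d), Finset.sum_neg_distrib]
    have h0 : (-1 : PowerSeries ℚ)^0 * X^(0+3*c2 0) = A 0 := by
      rw [hAdef]
    rw [h0]
    ring
  have hAsum : ∑ d ∈ Finset.range (k+1), A d = A 0 + ∑ d ∈ Finset.range k, A (d+1) := by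
    rw [Finset.sum_range_succ']
    ring
  -- final assembly
  have hg1 : (X:PowerSeries ℚ)^k ∣ pochInf 1 3 * pochInf 2 3 * pochInf 3 3
      - ((∑ d ∈ Finset.range k, (-1 : PowerSeries ℚ)^d * X^(d+3*c2 d) *
            ∑ m ∈ Finset.range (k-d), vT d m)
          + ∑ d ∈ Finset.range k, A (d+1) * ∑ τ ∈ Finset.range (k-(d+1)), vT (d+1) τ)
            * pochInf 3 3 := by
    have := hprod0.mul_right (pochInf 3 3)
    rw [sub_mul, hdiag] at this
    exact this
  have hg2 : (X:PowerSeries ℚ)^k ∣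
      ((∑ d ∈ Finset.range k, (-1 : PowerSeries ℚ)^d * X^(d+3*c2 d) *
            ∑ m ∈ Finset.range (k-d), vT d m)
          + ∑ d ∈ Finset.range k, A (d+1) * ∑ τ ∈ Finset.range (k-(d+1)), vT (d+1) τ)
            * pochInf 3 3
      - ((∑ d ∈ Finset.range k, (-1 : PowerSeries ℚ)^d * X^(d+3*c2 d))
          + ∑ d ∈ Finset.range k, A (d+1)) := by
    rw [add_mul, Finset.sum_mul, Finset.sum_mul]
    have : ∀ (a b c e : PowerSeries ℚ), a + b - (c + e) = (a - c) + (b - e) := by intros; ring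
    rw [this, ← Finset.sum_sub_distrib, ← Finset.sum_sub_distrib]
    exact dvd_add (Finset.dvd_sum hlowP) (Finset.dvd_sum hupP)
  have hg3 : ((∑ d ∈ Finset.range k, (-1 : PowerSeries ℚ)^d * X^(d+3*c2 d))
          + ∑ d ∈ Finset.range k, A (d+1))
      = (∑ d ∈ Finset.range (k+1), A d) - ∑ d ∈ Finset.range K, B d := by
    rw [hSL, hAsum]
    ring
  have hg4 : (X:PowerSeries ℚ)^k ∣
      ((∑ d ∈ Finset.range (k+1), A d) - ∑ d ∈ Finset.range K, B d)
      - ((∑ d ∈ Finset.range k, A d) - ∑ d ∈ Finset.range k, B d) := by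
    rw [Finset.sum_range_succ (f := A) (n := k), show (Finset.range k) = Finset.range (K+1) from rfl,
      Finset.sum_range_succ (f := B) (n := K)]
    have : ∑ d ∈ Finset.range (K+1), A d + A (K+1) - ∑ d ∈ Finset.range K, B d
        - (∑ d ∈ Finset.range (K+1), A d - (∑ d ∈ Finset.range K, B d + B K))
        = A (K+1) + B K := by ring
    rw [this]
    have h1 : (X:PowerSeries ℚ)^k ∣ A (K+1) := dvd_trans (pow_dvd_pow _ (by omega)) (hAdvd (K+1))
    have h2 : (X:PowerSeries ℚ)^k ∣ B K := by
      rw [hBdef]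
      exact dvd_cX (by omega) _
    exact dvd_add h1 h2
  have hg5 : (X:PowerSeries ℚ)^k ∣
      ((∑ d ∈ Finset.range k, A d) - ∑ d ∈ Finset.range k, B d) - (isum A - isum B) := by
    have h1 := isum_mod hAdvd (le_refl k)
    have h2 := isum_mod hBdvd (le_refl k)
    have : ((∑ d ∈ Finset.range k, A d) - ∑ d ∈ Finset.range k, B d) - (isum A - isum B)
        = (isum B - ∑ d ∈ Finset.range k, B d) - (isum A - ∑ d ∈ Finset.range k, A d) := by ring
    rw [this]
    exact dvd_sub h2 h1
  have total : pochInf 1 3 * pochInf 2 3 * pochInf 3 3 - (isum A - isum B)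
      = (pochInf 1 3 * pochInf 2 3 * pochInf 3 3
          - ((∑ d ∈ Finset.range k, (-1 : PowerSeries ℚ)^d * X^(d+3*c2 d) *
              ∑ m ∈ Finset.range (k-d), vT d m)
            + ∑ d ∈ Finset.range k, A (d+1) * ∑ τ ∈ Finset.range (k-(d+1)), vT (d+1) τ)
              * pochInf 3 3)
        + (((∑ d ∈ Finset.range k, (-1 : PowerSeries ℚ)^d * X^(d+3*c2 d) *
              ∑ m ∈ Finset.range (k-d), vT d m)
            + ∑ d ∈ Finset.range k, A (d+1) * ∑ τ ∈ Finset.range (k-(d+1)), vT (d+1) τ)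
              * pochInf 3 3
          - ((∑ d ∈ Finset.range k, (-1 : PowerSeries ℚ)^d * X^(d+3*c2 d))
              + ∑ d ∈ Finset.range k, A (d+1)))
        + (((∑ d ∈ Finset.range k, (-1 : PowerSeries ℚ)^d * X^(d+3*c2 d))
              + ∑ d ∈ Finset.range k, A (d+1))
            - ((∑ d ∈ Finset.range k, A d) - ∑ d ∈ Finset.range k, B d))
        + (((∑ d ∈ Finset.range k, A d) - ∑ d ∈ Finset.range k, B d) - (isum A - isum B)) := by
    ring
  rw [total]
  refine dvd_add (dvd_add (dvd_add hg1 hg2) ?_) hg5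
  rw [hg3]
  exact hg4

-- ## Bridges and final assembly
lemma bridge1 (ν : ℕ) :
    pochInf 2 3 * isum (fun τ => X ^ (τ * (3 * ν + 3 * τ + 5)) *
        (poch 3 3 τ * poch 2 3 (ν + τ + 1))⁻¹)
      = isum (fun j => (-1 : PowerSeries ℚ)^j * X^((3*ν+5)*j+3*c2 j)) := by
  have hdvd : ∀ τ, (X:PowerSeries ℚ)^τ ∣ X ^ (τ * (3 * ν + 3 * τ + 5)) *
      (poch 3 3 τ * poch 2 3 (ν + τ + 1))⁻¹ :=
    fun τ => (pow_dvd_pow _ (by nlinarith)).mul_right _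
  rw [mul_isum hdvd, ← core_id (show 1 ≤ 3*ν+5 by omega)]
  apply isum_congr
  intro τ
  have hsplit := pochInf_split (ν+τ+1) (show (1:ℕ) ≤ 2 by norm_num)
    (show (1:ℕ) ≤ 3 by norm_num) (a := 2) (m := 3)
  have hinv : (poch 3 3 τ * poch 2 3 (ν+τ+1))⁻¹
      = (poch 3 3 τ)⁻¹ * (poch 2 3 (ν+τ+1))⁻¹ :=
    ps_mul_inv_rev (poch_mul_inv (by norm_num)) (poch_mul_inv (by norm_num))
  have hcan : poch 2 3 (ν+τ+1) * (poch 2 3 (ν+τ+1))⁻¹ = 1 := poch_mul_inv (by norm_num)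
  have he : 2+3*(ν+τ+1) = 3*ν+5+3*τ := by ring
  have hee : τ * (3*ν+3*τ+5) = τ*(3*ν+5+3*τ) := by ring
  calc pochInf 2 3 * (X ^ (τ * (3 * ν + 3 * τ + 5)) * (poch 3 3 τ * poch 2 3 (ν + τ + 1))⁻¹)
      = (poch 2 3 (ν+τ+1) * (poch 2 3 (ν+τ+1))⁻¹) *
          (X ^ (τ * (3 * ν + 3 * τ + 5)) *
            ((poch 3 3 τ)⁻¹ * pochInf (2+3*(ν+τ+1)) 3)) := by
        rw [hsplit, hinv]; ring
  _ = X^(τ*(3*ν+5+3*τ)) * ((poch 3 3 τ)⁻¹ * pochInf (3*ν+5+3*τ) 3) := by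
        rw [hcan, one_mul, he, hee]

lemma bridge2 (ν : ℕ) :
    pochInf 1 3 * isum (fun τ => X ^ (τ * (3 * ν + 3 * τ + 4)) *
        (poch 3 3 τ * poch 1 3 (ν + τ + 1))⁻¹)
      = isum (fun j => (-1 : PowerSeries ℚ)^j * X^((3*ν+4)*j+3*c2 j)) := by
  have hdvd : ∀ τ, (X:PowerSeries ℚ)^τ ∣ X ^ (τ * (3 * ν + 3 * τ + 4)) *
      (poch 3 3 τ * poch 1 3 (ν + τ + 1))⁻¹ :=
    fun τ => (pow_dvd_pow _ (by nlinarith)).mul_right _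
  rw [mul_isum hdvd, ← core_id (show 1 ≤ 3*ν+4 by omega)]
  apply isum_congr
  intro τ
  have hsplit := pochInf_split (ν+τ+1) (le_refl 1)
    (show (1:ℕ) ≤ 3 by norm_num) (a := 1) (m := 3)
  have hinv : (poch 3 3 τ * poch 1 3 (ν+τ+1))⁻¹
      = (poch 3 3 τ)⁻¹ * (poch 1 3 (ν+τ+1))⁻¹ :=
    ps_mul_inv_rev (poch_mul_inv (by norm_num)) (poch_mul_inv (by norm_num))
  have hcan : poch 1 3 (ν+τ+1) * (poch 1 3 (ν+τ+1))⁻¹ = 1 := poch_mul_inv (by norm_num)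
  have he : 1+3*(ν+τ+1) = 3*ν+4+3*τ := by ring
  have hee : τ * (3*ν+3*τ+4) = τ*(3*ν+4+3*τ) := by ring
  calc pochInf 1 3 * (X ^ (τ * (3 * ν + 3 * τ + 4)) * (poch 3 3 τ * poch 1 3 (ν + τ + 1))⁻¹)
      = (poch 1 3 (ν+τ+1) * (poch 1 3 (ν+τ+1))⁻¹) *
          (X ^ (τ * (3 * ν + 3 * τ + 4)) *
            ((poch 3 3 τ)⁻¹ * pochInf (1+3*(ν+τ+1)) 3)) := by
        rw [hsplit, hinv]; ring
  _ = X^(τ*(3*ν+4+3*τ)) * ((poch 3 3 τ)⁻¹ * pochInf (3*ν+4+3*τ) 3) := by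
        rw [hcan, one_mul, he, hee]

-- nat-division bridges
lemma hp1 (τ : ℕ) : τ*(3*τ+1)/2 = 2*τ+3*c2 τ := by
  have hs := c2_sq τ
  have h : τ*(3*τ+1) = 2*(2*τ+3*c2 τ) := by
    calc τ*(3*τ+1) = 3*(τ*τ)+τ := by ring
    _ = 3*(2*c2 τ+τ)+τ := by rw [hs]
    _ = 2*(2*τ+3*c2 τ) := by ring
  rw [h, Nat.mul_div_cancel_left _ (by norm_num : (0:ℕ) < 2)]

lemma hp2 (τ : ℕ) : τ*(3*τ+5)/2+1 = 1+4*τ+3*c2 τ := by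
  have hs := c2_sq τ
  have h : τ*(3*τ+5) = 2*(4*τ+3*c2 τ) := by
    calc τ*(3*τ+5) = 3*(τ*τ)+5*τ := by ring
    _ = 3*(2*c2 τ+τ)+5*τ := by rw [hs]
    _ = 2*(4*τ+3*c2 τ) := by ring
  rw [h, Nat.mul_div_cancel_left _ (by norm_num : (0:ℕ) < 2)]
  ring

lemma he1 (ν : ℕ) : 2 + ν*(3*ν+7)/2 = 2+5*ν+3*c2 ν := by
  have hs := c2_sq ν
  have h : ν*(3*ν+7) = 2*(5*ν+3*c2 ν) := by
    calc ν*(3*ν+7) = 3*(ν*ν)+7*ν := by ring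
    _ = 3*(2*c2 ν+ν)+7*ν := by rw [hs]
    _ = 2*(5*ν+3*c2 ν) := by ring
  rw [h, Nat.mul_div_cancel_left _ (by norm_num : (0:ℕ) < 2)]
  ring

lemma he2 (ν : ℕ) : 1 + ν*(3*ν+5)/2 = 1+4*ν+3*c2 ν := by
  have hs := c2_sq ν
  have h : ν*(3*ν+5) = 2*(4*ν+3*c2 ν) := by
    calc ν*(3*ν+5) = 3*(ν*ν)+5*ν := by ring
    _ = 3*(2*c2 ν+ν)+5*ν := by rw [hs]
    _ = 2*(4*ν+3*c2 ν) := by ring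
  rw [h, Nat.mul_div_cancel_left _ (by norm_num : (0:ℕ) < 2)]
  ring

-- tails of the pentagonal series
lemma tailA (ν : ℕ) :
    isum (fun j => (-1 : PowerSeries ℚ)^(ν+1+j) * X^(2*(ν+1+j)+3*c2 (ν+1+j)))
      = -((-1 : PowerSeries ℚ)^ν * X^(2+5*ν+3*c2 ν) *
          isum (fun j => (-1 : PowerSeries ℚ)^j * X^((3*ν+5)*j+3*c2 j))) := by
  have hdvd : ∀ j, (X:PowerSeries ℚ)^j ∣ (-1 : PowerSeries ℚ)^j * X^((3*ν+5)*j+3*c2 j) :=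
    fun j => dvd_cX (by nlinarith) _
  rw [mul_isum hdvd, ← isum_neg]
  apply isum_congr
  intro j
  have hE : 2*(ν+1+j)+3*c2 (ν+1+j) = (2+5*ν+3*c2 ν) + ((3*ν+5)*j+3*c2 j) := by
    rw [show ν+1+j = (ν+1)+j from rfl, c2_add (ν+1) j, c2_succ ν]
    ring
  rw [hE, pow_add, pow_add, pow_succ]
  ring

lemma tailB (ν : ℕ) :
    isum (fun j => (-1 : PowerSeries ℚ)^(ν+j) * X^(1+4*(ν+j)+3*c2 (ν+j)))
      = (-1 : PowerSeries ℚ)^ν * X^(1+4*ν+3*c2 ν) *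
          isum (fun j => (-1 : PowerSeries ℚ)^j * X^((3*ν+4)*j+3*c2 j)) := by
  have hdvd : ∀ j, (X:PowerSeries ℚ)^j ∣ (-1 : PowerSeries ℚ)^j * X^((3*ν+4)*j+3*c2 j) :=
    fun j => dvd_cX (by nlinarith) _
  rw [mul_isum hdvd]
  apply isum_congr
  intro j
  have hE : 1+4*(ν+j)+3*c2 (ν+j) = (1+4*ν+3*c2 ν) + ((3*ν+4)*j+3*c2 j) := by
    rw [c2_add ν j]
    ring
  rw [hE, pow_add, pow_add]
  ring


/-- Truncated pentagonal number theorem of Theorem 2 (equation (2.2) of the paper):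
for every `ν ≥ 1`,
`(1/(q;q)_∞)(Σ_{τ=0}^ν (-1)^τ q^(τ(3τ+1)/2) − Σ_{τ=0}^{ν-1} (-1)^τ q^(τ(3τ+5)/2+1))
 = 1 + (-1)^ν q^(2+ν(3ν+7)/2) ((q²;q³)_∞/(q;q)_∞) Σ_{τ≥0} q^(τ(3ν+3τ+5))/((q³;q³)_τ (q²;q³)_{ν+τ+1})
     + (-1)^ν q^(1+ν(3ν+5)/2) ((q;q³)_∞/(q;q)_∞) Σ_{τ≥0} q^(τ(3ν+3τ+4))/((q³;q³)_τ (q;q³)_{ν+τ+1})`. -/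
theorem stmt14 (ν : ℕ) (hν : 1 ≤ ν) :
    (pochInf 1 1)⁻¹ *
        (∑ τ ∈ Finset.range (ν + 1), (-1 : PowerSeries ℚ) ^ τ * X ^ (τ * (3 * τ + 1) / 2) -
          ∑ τ ∈ Finset.range ν, (-1 : PowerSeries ℚ) ^ τ * X ^ (τ * (3 * τ + 5) / 2 + 1)) =
      1 +
        (-1 : PowerSeries ℚ) ^ ν * X ^ (2 + ν * (3 * ν + 7) / 2) *
          (pochInf 2 3 * (pochInf 1 1)⁻¹) *
          isum (fun τ => X ^ (τ * (3 * ν + 3 * τ + 5)) * (poch 3 3 τ * poch 2 3 (ν + τ + 1))⁻¹) +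
        (-1 : PowerSeries ℚ) ^ ν * X ^ (1 + ν * (3 * ν + 5) / 2) *
          (pochInf 1 3 * (pochInf 1 1)⁻¹) *
          isum (fun τ => X ^ (τ * (3 * ν + 3 * τ + 4)) * (poch 3 3 τ * poch 1 3 (ν + τ + 1))⁻¹) := by
  have hAdvd : ∀ d, (X:PowerSeries ℚ)^d ∣ (-1 : PowerSeries ℚ)^d * X^(2*d+3*c2 d) :=
    fun d => dvd_cX (by nlinarith) _
  have hBdvd : ∀ d, (X:PowerSeries ℚ)^d ∣ (-1 : PowerSeries ℚ)^d * X^(1+4*d+3*c2 d) :=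
    fun d => dvd_cX (by nlinarith) _
  have hSa : ∑ τ ∈ Finset.range (ν + 1), (-1 : PowerSeries ℚ) ^ τ * X ^ (τ * (3 * τ + 1) / 2)
      = ∑ τ ∈ Finset.range (ν+1), (-1 : PowerSeries ℚ)^τ * X^(2*τ+3*c2 τ) :=
    Finset.sum_congr rfl (fun τ _ => by rw [hp1 τ])
  have hSb : ∑ τ ∈ Finset.range ν, (-1 : PowerSeries ℚ) ^ τ * X ^ (τ * (3 * τ + 5) / 2 + 1)
      = ∑ τ ∈ Finset.range ν, (-1 : PowerSeries ℚ)^τ * X^(1+4*τ+3*c2 τ) :=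
    Finset.sum_congr rfl (fun τ _ => by rw [hp2 τ])
  have hsplitA := isum_split (f := fun d => (-1 : PowerSeries ℚ)^d * X^(2*d+3*c2 d)) (ν+1) hAdvd
  have hsplitB := isum_split (f := fun d => (-1 : PowerSeries ℚ)^d * X^(1+4*d+3*c2 d)) ν hBdvd
  have key : (∑ τ ∈ Finset.range (ν + 1), (-1 : PowerSeries ℚ) ^ τ * X ^ (τ * (3 * τ + 1) / 2) -
          ∑ τ ∈ Finset.range ν, (-1 : PowerSeries ℚ) ^ τ * X ^ (τ * (3 * τ + 5) / 2 + 1))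
      = pochInf 1 1 +
        (-1 : PowerSeries ℚ) ^ ν * X ^ (2 + ν * (3 * ν + 7) / 2) *
          (pochInf 2 3 *
            isum (fun τ => X ^ (τ * (3 * ν + 3 * τ + 5)) *
              (poch 3 3 τ * poch 2 3 (ν + τ + 1))⁻¹)) +
        (-1 : PowerSeries ℚ) ^ ν * X ^ (1 + ν * (3 * ν + 5) / 2) *
          (pochInf 1 3 *
            isum (fun τ => X ^ (τ * (3 * ν + 3 * τ + 4)) *
              (poch 3 3 τ * poch 1 3 (ν + τ + 1))⁻¹)) := by
    rw [hSa, hSb, he1 ν, he2 ν, bridge1 ν, bridge2 ν, pnt, hsplitA, hsplitB, tailA ν, tailB ν]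
    ring
  rw [key]
  have hP : pochInf 1 1 * (pochInf 1 1)⁻¹ = 1 := pochInf_mul_inv (le_refl 1) (le_refl 1)
  linear_combination hP
end
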